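/- arXiv:1103.5207 — 16 statements merged into one kernel-verified Lean document; each statement's English description precedes it below -/
import Mathlib

section
/- Ran–Reurings theorem: Let (X,d,≤) be a partially ordered metric space with d complete, and let T : X → X be d-continuous. Assume that T is (d,≤)-contractive, i.e. there exists α ∈ (0,1) with d(Tx,Ty) ≤ α·d(x,y) whenever x ≤ y; that there exists x ∈ X with x ≤ Tx or Tx ≤ x; that T is monotone (either increasing: x ≤ y ⇒ Tx ≤ Ty, or decreasing: x ≤ y ⇒ Ty ≤ Tx); and that every pair {x,y} ⊆ X has a lower bound and an upper bound. Then T is a Picard operator (modulo d): the fixed point set Fix(T) = {z ∈ X : Tz = z} is a singleton, and for every x ∈ X the orbit (Tⁿx)ₙ d-converges to the unique fixed point. -/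
open Filter Topology

/-- `d` is a metric on `X` (reflexive, symmetric, triangular, sufficient). -/
def IsMetricOn {X : Type*} (d : X → X → ℝ) : Prop :=
  (∀ x, d x x = 0) ∧ (∀ x y, d x y = d y x) ∧
  (∀ x y z, d x z ≤ d x y + d y z) ∧ (∀ x y, d x y = 0 → x = y)

/-- convergence of a sequence with respect to the metric `d`. -/
def ConvTo {X : Type*} (d : X → X → ℝ) (x : ℕ → X) (a : X) : Prop :=
  Tendsto (fun n => d (x n) a) atTop (𝓝 0)

/-- `d`-Cauchy sequences. -/
def IsDCauchy {X : Type*} (d : X → X → ℝ) (x : ℕ → X) : Prop :=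
  ∀ ε : ℝ, 0 < ε → ∃ N : ℕ, ∀ m n : ℕ, N ≤ m → N ≤ n → d (x m) (x n) < ε

/-- `d` is complete: every `d`-Cauchy sequence `d`-converges. -/
def DComplete {X : Type*} (d : X → X → ℝ) : Prop :=
  ∀ x : ℕ → X, IsDCauchy d x → ∃ a, ConvTo d x a

/-- `T` is `d`-continuous (sequentially). -/
def DContinuous {X : Type*} (d : X → X → ℝ) (T : X → X) : Prop :=
  ∀ (x : ℕ → X) (a : X), ConvTo d x a → ConvTo d (fun n => T (x n)) (T a)

/-- `T` is a Picard operator (modulo `d`): the fixed point set is a singleton and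
every orbit `d`-converges to the unique fixed point. -/
def PicardOp {X : Type*} (d : X → X → ℝ) (T : X → X) : Prop :=
  ∃ z, T z = z ∧ (∀ w, T w = w → w = z) ∧ ∀ x, ConvTo d (fun n => T^[n] x) z

/-- Ran–Reurings fixed point theorem. -/
theorem ran_reurings {X : Type*} [PartialOrder X] (d : X → X → ℝ) (T : X → X)
    (hd : IsMetricOn d) (hcompl : DComplete d) (hcont : DContinuous d T)
    (hcontr : ∃ α : ℝ, 0 < α ∧ α < 1 ∧ ∀ x y : X, x ≤ y → d (T x) (T y) ≤ α * d x y)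
    (hstart : ∃ x : X, x ≤ T x ∨ T x ≤ x)
    (hmono : (∀ x y : X, x ≤ y → T x ≤ T y) ∨ (∀ x y : X, x ≤ y → T y ≤ T x))
    (hbounds : ∀ x y : X, (∃ l, l ≤ x ∧ l ≤ y) ∧ (∃ u, x ≤ u ∧ y ≤ u)) :
    PicardOp d T := by
  obtain ⟨dref, dsym, dtri, dsep⟩ := hd
  obtain ⟨α, hα0, hα1, hcon⟩ := hcontr
  obtain ⟨x₀, hx₀⟩ := hstart
  have dnn : ∀ x y : X, 0 ≤ d x y := by
    intro x y
    have h1 := dtri x y x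
    have h2 := dref x
    have h3 := dsym x y
    linarith
  have hconC : ∀ x y : X, (x ≤ y ∨ y ≤ x) → d (T x) (T y) ≤ α * d x y := by
    intro x y h
    rcases h with h | h
    · exact hcon x y h
    · rw [dsym (T x) (T y), dsym x y]; exact hcon y x h
  have hmonoC : ∀ x y : X, (x ≤ y ∨ y ≤ x) → (T x ≤ T y ∨ T y ≤ T x) := by
    rcases hmono with hm | hm <;> intro x y h <;> rcases h with h | h
    · exact Or.inl (hm x y h)
    · exact Or.inr (hm y x h)
    · exact Or.inr (hm x y h)
    · exact Or.inl (hm y x h)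
  have hiterC : ∀ (n : ℕ) (x y : X), (x ≤ y ∨ y ≤ x) →
      (T^[n] x ≤ T^[n] y ∨ T^[n] y ≤ T^[n] x) := by
    intro n
    induction n with
    | zero => simpa using fun x y h => h
    | succ n ih =>
      intro x y h
      rw [Function.iterate_succ_apply', Function.iterate_succ_apply']
      exact hmonoC _ _ (ih x y h)
  have hiterd : ∀ (n : ℕ) (x y : X), (x ≤ y ∨ y ≤ x) →
      d (T^[n] x) (T^[n] y) ≤ α ^ n * d x y := by
    intro n
    induction n with
    | zero => intro x y h; simp
    | succ n ih =>
      intro x y h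
      rw [Function.iterate_succ_apply', Function.iterate_succ_apply', pow_succ]
      calc d (T (T^[n] x)) (T (T^[n] y)) ≤ α * d (T^[n] x) (T^[n] y) :=
            hconC _ _ (hiterC n x y h)
        _ ≤ α * (α ^ n * d x y) := by
            exact mul_le_mul_of_nonneg_left (ih x y h) hα0.le
        _ = α ^ n * α * d x y := by ring
  -- uniqueness of d-limits
  have huniq : ∀ (x : ℕ → X) (a b : X), ConvTo d x a → ConvTo d x b → a = b := by
    intro x a b ha hb
    have htend : Tendsto (fun n => d (x n) a + d (x n) b) atTop (𝓝 0) := by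
      simpa using ha.add hb
    have hle : d a b ≤ 0 := by
      refine ge_of_tendsto htend (Eventually.of_forall fun n => ?_)
      calc d a b ≤ d a (x n) + d (x n) b := dtri a (x n) b
        _ = d (x n) a + d (x n) b := by rw [dsym a (x n)]
    exact dsep a b (le_antisymm hle (dnn a b))
  -- geometric bound on the orbit of x₀
  have h1α : (0:ℝ) < 1 - α := by linarith
  set d₀ := d x₀ (T x₀) with hd₀
  set D := d₀ / (1 - α) with hD
  have hDnn : 0 ≤ D := div_nonneg (dnn _ _) h1α.le
  have hDeq : d₀ + α * D = D := by
    have hmul : D * (1 - α) = d₀ := by rw [hD]; exact div_mul_cancel₀ d₀ h1α.ne'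
    linear_combination -hmul
  have hstep : ∀ n : ℕ, d (T^[n] x₀) (T^[n+1] x₀) ≤ α ^ n * d₀ := by
    intro n
    have := hiterd n x₀ (T x₀) hx₀
    simpa [Function.iterate_succ_apply] using this
  have hgeom : ∀ (p m : ℕ), d (T^[m] x₀) (T^[m+p] x₀) ≤ α ^ m * D := by
    intro p
    induction p with
    | zero =>
      intro m
      simpa [dref] using mul_nonneg (pow_nonneg hα0.le m) hDnn
    | succ p ih =>
      intro m
      have h1 := hstep m
      have h2 := ih (m + 1)
      have htri := dtri (T^[m] x₀) (T^[m+1] x₀) (T^[m+1+p] x₀)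
      have heq : m + (p + 1) = m + 1 + p := by omega
      rw [heq]
      have hpow : α ^ (m + 1) = α ^ m * α := pow_succ α m
      have : d (T^[m] x₀) (T^[m+1+p] x₀) ≤ α ^ m * d₀ + α ^ m * α * D := by
        rw [hpow] at h2; linarith
      calc d (T^[m] x₀) (T^[m+1+p] x₀) ≤ α ^ m * d₀ + α ^ m * α * D := this
        _ = α ^ m * (d₀ + α * D) := by ring
        _ = α ^ m * D := by rw [hDeq]
  have hpowD : Tendsto (fun n : ℕ => α ^ n * D) atTop (𝓝 0) := by
    simpa using (tendsto_pow_atTop_nhds_zero_of_lt_one hα0.le hα1).mul_const D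
  have hCauchy : IsDCauchy d (fun n => T^[n] x₀) := by
    intro ε hε
    obtain ⟨N, hN⟩ := (Filter.eventually_atTop.mp (hpowD.eventually (gt_mem_nhds hε)))
    refine ⟨N, fun m n hm hn => ?_⟩
    rcases le_total m n with h | h
    · obtain ⟨p, rfl⟩ := le_iff_exists_add.mp h
      exact lt_of_le_of_lt (hgeom p m) (hN m hm)
    · obtain ⟨p, rfl⟩ := le_iff_exists_add.mp h
      rw [dsym]
      exact lt_of_le_of_lt (hgeom p n) (hN n hn)
  obtain ⟨z, hz⟩ := hcompl _ hCauchy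
  -- z is a fixed point
  have hTz : T z = z := by
    have h1 : ConvTo d (fun n => T (T^[n] x₀)) (T z) := hcont _ z hz
    have h2 : ConvTo d (fun n => T (T^[n] x₀)) z := by
      have h := hz.comp (tendsto_add_atTop_nat 1)
      unfold ConvTo
      convert h using 1
      funext n
      simp [Function.comp, Function.iterate_succ_apply']
    exact huniq _ _ _ h1 h2
  -- all orbits converge to z
  have horb : ∀ x : X, ConvTo d (fun n => T^[n] x) z := by
    intro x
    obtain ⟨u, hxu, hx₀u⟩ := (hbounds x x₀).2
    have hbd : ∀ n : ℕ, d (T^[n] x) (T^[n] x₀) ≤ α ^ n * (d x u + d u x₀) := by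
      intro n
      have h1 := hiterd n x u (Or.inl hxu)
      have h2 := hiterd n u x₀ (Or.inr hx₀u)
      have htri := dtri (T^[n] x) (T^[n] u) (T^[n] x₀)
      have : d (T^[n] x) (T^[n] x₀) ≤ α ^ n * d x u + α ^ n * d u x₀ := by linarith
      linarith [this]
    have htend2 : Tendsto (fun n : ℕ => α ^ n * (d x u + d u x₀) + d (T^[n] x₀) z)
        atTop (𝓝 0) := by
      have h1 : Tendsto (fun n : ℕ => α ^ n * (d x u + d u x₀)) atTop (𝓝 0) := by
        simpa using (tendsto_pow_atTop_nhds_zero_of_lt_one hα0.le hα1).mul_const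
          (d x u + d u x₀)
      simpa using h1.add hz
    refine squeeze_zero (fun n => dnn _ _) (fun n => ?_) htend2
    calc d (T^[n] x) z ≤ d (T^[n] x) (T^[n] x₀) + d (T^[n] x₀) z := dtri _ _ _
      _ ≤ α ^ n * (d x u + d u x₀) + d (T^[n] x₀) z := by linarith [hbd n]
  -- uniqueness of fixed point
  refine ⟨z, hTz, fun w hw => ?_, horb⟩
  have hconst : ConvTo d (fun n => T^[n] w) z := horb w
  have hfix : ∀ n : ℕ, T^[n] w = w := fun n => Function.iterate_fixed hw n
  have hdwz : d w z = 0 := by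
    have h : Tendsto (fun _ : ℕ => d w z) atTop (𝓝 0) := by
      simpa [ConvTo, hfix] using hconst
    exact tendsto_nhds_unique tendsto_const_nhds h
  exact dsep w z hdwz
end

section
/- Let (X,d,≤) be a partially ordered metric space with d complete, and let T : X → X be d-continuous. Assume that T is (d,≤)-contractive, i.e. there exists α ∈ (0,1) with d(Tx,Ty) ≤ α·d(x,y) whenever x ≤ y; that T is <>-increasing (x <> y implies Tx <> Ty); and that for every x,y ∈ X there exists a <>-chain between x and y. Then T is a Picard operator (modulo d): Fix(T) is a singleton and for every x ∈ X the orbit (Tⁿx)ₙ d-converges to the unique fixed point. -/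
open Filter Topology

/-- `x` and `y` are comparable. -/
def OrdComparable {X : Type*} [PartialOrder X] (x y : X) : Prop := x ≤ y ∨ y ≤ x

/-- there is a `<>`-chain between `x` and `y`: a finite list `z 0 = x, …, z k = y`
(with at least two points) of successively comparable elements. -/
def HasChain {X : Type*} [PartialOrder X] (x y : X) : Prop :=
  ∃ (k : ℕ) (z : ℕ → X), 1 ≤ k ∧ z 0 = x ∧ z k = y ∧
    ∀ i < k, OrdComparable (z i) (z (i + 1))

/-- Theorem 2: Ran–Reurings via comparability chains. -/
theorem ran_reurings_chain {X : Type*} [Nonempty X] [PartialOrder X]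
    (d : X → X → ℝ) (T : X → X)
    (hd : IsMetricOn d) (hcompl : DComplete d) (hcont : DContinuous d T)
    (hcontr : ∃ α : ℝ, 0 < α ∧ α < 1 ∧ ∀ x y : X, x ≤ y → d (T x) (T y) ≤ α * d x y)
    (hinc : ∀ x y : X, OrdComparable x y → OrdComparable (T x) (T y))
    (hchain : ∀ x y : X, HasChain x y) :
    PicardOp d T := by
  obtain ⟨α, hα0, hα1, hc⟩ := hcontr
  obtain ⟨hrefl, hsymm, htri, hsep⟩ := hd
  have hnonneg : ∀ x y, 0 ≤ d x y := by
    intro x y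
    have h := htri x x y
    have h2 := htri x y x
    have := hsymm x y
    have := hrefl x
    nlinarith [htri x y x, hsymm y x, hrefl x]
  -- contraction along comparability
  have hcomp : ∀ x y : X, OrdComparable x y → d (T x) (T y) ≤ α * d x y := by
    intro x y h
    rcases h with h | h
    · exact hc x y h
    · have := hc y x h
      rw [hsymm x y, hsymm (T x) (T y)]
      exact this
  -- comparability preserved by iterates
  have hcompn : ∀ n (x y : X), OrdComparable x y →
      OrdComparable (T^[n] x) (T^[n] y) := by
    intro n
    induction n with
    | zero => intro x y h; simpa using h
    | succ n ih =>
      intro x y h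
      rw [Function.iterate_succ_apply', Function.iterate_succ_apply']
      exact hinc _ _ (ih x y h)
  -- iterated contraction on comparable pairs
  have hiter : ∀ n (x y : X), OrdComparable x y →
      d (T^[n] x) (T^[n] y) ≤ α ^ n * d x y := by
    intro n
    induction n with
    | zero => intro x y _; simp
    | succ n ih =>
      intro x y h
      rw [Function.iterate_succ_apply', Function.iterate_succ_apply', pow_succ]
      calc d (T (T^[n] x)) (T (T^[n] y)) ≤ α * d (T^[n] x) (T^[n] y) :=
            hcomp _ _ (hcompn n x y h)
        _ ≤ α * (α ^ n * d x y) := by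
            exact mul_le_mul_of_nonneg_left (ih x y h) (le_of_lt hα0)
        _ = α ^ n * α * d x y := by ring
  -- chain bound
  have hbound : ∀ x y : X, ∃ C : ℝ, 0 ≤ C ∧
      ∀ n, d (T^[n] x) (T^[n] y) ≤ α ^ n * C := by
    intro x y
    obtain ⟨k, z, hk, hz0, hzk, hcz⟩ := hchain x y
    refine ⟨∑ i ∈ Finset.range k, d (z i) (z (i + 1)),
      Finset.sum_nonneg fun i _ => hnonneg _ _, ?_⟩
    intro n
    have key : ∀ j, j ≤ k → d (T^[n] (z 0)) (T^[n] (z j)) ≤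
        α ^ n * ∑ i ∈ Finset.range j, d (z i) (z (i + 1)) := by
      intro j
      induction j with
      | zero => intro _; simp [hrefl]
      | succ j ih =>
        intro hj
        have hj' : j ≤ k := Nat.le_of_succ_le hj
        calc d (T^[n] (z 0)) (T^[n] (z (j + 1)))
            ≤ d (T^[n] (z 0)) (T^[n] (z j)) + d (T^[n] (z j)) (T^[n] (z (j + 1))) :=
              htri _ _ _
          _ ≤ α ^ n * (∑ i ∈ Finset.range j, d (z i) (z (i + 1)))
              + α ^ n * d (z j) (z (j + 1)) := by
              have h1 := ih hj'
              have h2 := hiter n (z j) (z (j + 1)) (hcz j (Nat.lt_of_succ_le hj))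
              linarith
          _ = α ^ n * ∑ i ∈ Finset.range (j + 1), d (z i) (z (i + 1)) := by
              rw [Finset.sum_range_succ]; ring
    have := key k le_rfl
    rwa [hz0, hzk] at this
  have hαn : Tendsto (fun n : ℕ => α ^ n) atTop (𝓝 0) :=
    tendsto_pow_atTop_nhds_zero_of_lt_one (le_of_lt hα0) hα1
  -- build the fixed point from an arbitrary orbit
  obtain ⟨x₀⟩ := ‹Nonempty X›
  obtain ⟨C, hC0, hC⟩ := hbound x₀ (T x₀)
  have hstep : ∀ n, d (T^[n] x₀) (T^[n + 1] x₀) ≤ α ^ n * C := by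
    intro n
    have := hC n
    rwa [← Function.iterate_succ_apply] at this
  have h1α : 0 < 1 - α := by linarith
  have hgeo : ∀ m n : ℕ, (1 - α) * d (T^[m] x₀) (T^[m + n] x₀) ≤
      (α ^ m - α ^ (m + n)) * C := by
    intro m n
    induction n with
    | zero => simp [hrefl]
    | succ n ih =>
      have htr := htri (T^[m] x₀) (T^[m + n] x₀) (T^[m + n + 1] x₀)
      have hs := hstep (m + n)
      have hd1 := hnonneg (T^[m] x₀) (T^[m + n] x₀)
      have : m + (n + 1) = m + n + 1 := by ring
      rw [this]
      calc (1 - α) * d (T^[m] x₀) (T^[m + n + 1] x₀)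
          ≤ (1 - α) * (d (T^[m] x₀) (T^[m + n] x₀)
              + d (T^[m + n] x₀) (T^[m + n + 1] x₀)) :=
            mul_le_mul_of_nonneg_left htr (le_of_lt h1α)
        _ = (1 - α) * d (T^[m] x₀) (T^[m + n] x₀)
              + (1 - α) * d (T^[m + n] x₀) (T^[m + n + 1] x₀) := by ring
        _ ≤ (α ^ m - α ^ (m + n)) * C + (1 - α) * (α ^ (m + n) * C) :=
            add_le_add ih (mul_le_mul_of_nonneg_left hs (le_of_lt h1α))
        _ = (α ^ m - α ^ (m + n + 1)) * C := by rw [pow_succ]; ring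
  have hbd : ∀ m n : ℕ, m ≤ n → d (T^[m] x₀) (T^[n] x₀) ≤ α ^ m * (C / (1 - α)) := by
    intro m n hmn
    obtain ⟨j, rfl⟩ := Nat.exists_eq_add_of_le hmn
    have h := hgeo m j
    have hpown : 0 ≤ α ^ (m + j) := pow_nonneg (le_of_lt hα0) _
    have h' : (1 - α) * d (T^[m] x₀) (T^[m + j] x₀) ≤ α ^ m * C := by
      nlinarith [mul_nonneg hpown hC0]
    rw [← mul_div_assoc, le_div_iff₀ h1α]
    calc d (T^[m] x₀) (T^[m + j] x₀) * (1 - α)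
        = (1 - α) * d (T^[m] x₀) (T^[m + j] x₀) := mul_comm _ _
      _ ≤ α ^ m * C := h'
  -- the orbit is Cauchy
  have hcauchy : IsDCauchy d (fun n => T^[n] x₀) := by
    intro ε hε
    have : Tendsto (fun n : ℕ => α ^ n * (C / (1 - α))) atTop (𝓝 0) := by
      simpa using hαn.mul_const (C / (1 - α))
    obtain ⟨N, hN⟩ := (Metric.tendsto_atTop.mp this) ε hε
    refine ⟨N, fun m n hm hn => ?_⟩
    have hNb : α ^ N * (C / (1 - α)) < ε := by
      have := hN N le_rfl
      rw [Real.dist_eq, sub_zero] at this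
      calc α ^ N * (C / (1 - α)) ≤ |α ^ N * (C / (1 - α))| := le_abs_self _
        _ < ε := this
    have hmono : ∀ k, N ≤ k → α ^ k ≤ α ^ N :=
      fun k hk => pow_le_pow_of_le_one (le_of_lt hα0) (le_of_lt hα1) hk
    have hCd : 0 ≤ C / (1 - α) := div_nonneg hC0 (le_of_lt h1α)
    rcases le_total m n with hmn | hmn
    · calc d (T^[m] x₀) (T^[n] x₀) ≤ α ^ m * (C / (1 - α)) := hbd m n hmn
        _ ≤ α ^ N * (C / (1 - α)) := mul_le_mul_of_nonneg_right (hmono m hm) hCd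
        _ < ε := hNb
    · rw [hsymm]
      calc d (T^[n] x₀) (T^[m] x₀) ≤ α ^ n * (C / (1 - α)) := hbd n m hmn
        _ ≤ α ^ N * (C / (1 - α)) := mul_le_mul_of_nonneg_right (hmono n hn) hCd
        _ < ε := hNb
  obtain ⟨a, ha⟩ := hcompl _ hcauchy
  -- a is a fixed point
  have hshift : Tendsto (fun n => d (T^[n + 1] x₀) a) atTop (𝓝 0) :=
    ha.comp (tendsto_add_atTop_nat 1)
  have hTconv : ConvTo d (fun n => T (T^[n] x₀)) (T a) := hcont _ a ha
  have hTa : T a = a := by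
    have hsum : Tendsto (fun n => d (T^[n + 1] x₀) (T a) + d (T^[n + 1] x₀) a)
        atTop (𝓝 0) := by
      have h1 : Tendsto (fun n => d (T^[n + 1] x₀) (T a)) atTop (𝓝 0) := by
        have := hTconv
        simp only [ConvTo, ← Function.iterate_succ_apply'] at this
        exact this
      simpa using h1.add hshift
    have hle : d (T a) a ≤ 0 := by
      refine ge_of_tendsto' hsum fun n => ?_
      calc d (T a) a ≤ d (T a) (T^[n + 1] x₀) + d (T^[n + 1] x₀) a := htri _ _ _
        _ = d (T^[n + 1] x₀) (T a) + d (T^[n + 1] x₀) a := by rw [hsymm]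
    exact hsep _ _ (le_antisymm hle (hnonneg _ _))
  refine ⟨a, hTa, ?_, ?_⟩
  · -- uniqueness
    intro w hw
    obtain ⟨Cw, hCw0, hCw⟩ := hbound w x₀
    have hconvw : Tendsto (fun n => d (T^[n] w) a) atTop (𝓝 0) := by
      apply squeeze_zero (fun n => hnonneg _ _) (fun n => ?_)
        (by simpa using (hαn.mul_const Cw).add ha)
      calc d (T^[n] w) a ≤ d (T^[n] w) (T^[n] x₀) + d (T^[n] x₀) a := htri _ _ _
        _ ≤ α ^ n * Cw + d (T^[n] x₀) a := by linarith [hCw n]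
    have hwfix : ∀ n, T^[n] w = w := fun n => Function.iterate_fixed hw n
    simp only [hwfix] at hconvw
    have : d w a = 0 := tendsto_nhds_unique tendsto_const_nhds hconvw
    exact hsep _ _ this
  · -- every orbit converges to a
    intro x
    obtain ⟨Cx, hCx0, hCx⟩ := hbound x x₀
    apply squeeze_zero (fun n => hnonneg _ _) (fun n => ?_)
      (by simpa using (hαn.mul_const Cx).add ha)
    calc d (T^[n] x) a ≤ d (T^[n] x) (T^[n] x₀) + d (T^[n] x₀) a := htri _ _ _
      _ ≤ α ^ n * Cx + d (T^[n] x₀) a := by linarith [hCx n]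
end

section
/- Maia's theorem: Let X be a nonempty set carrying two metrics d and e, and let T : X → X. Assume that d is complete, T is d-continuous, T is e-contractive (there exists α ∈ (0,1) with e(Tx,Ty) ≤ α·e(x,y) for all x,y ∈ X), and d is subordinated to e (d(x,y) ≤ e(x,y) for all x,y ∈ X). Then T is a Picard operator (modulo d): Fix(T) is a singleton and for every x ∈ X the orbit (Tⁿx)ₙ d-converges to the unique fixed point. -/
open Filter Topology

/-- Maia's fixed point theorem. -/
theorem maia {X : Type*} [Nonempty X] (d e : X → X → ℝ) (T : X → X)
    (hd : IsMetricOn d) (he : IsMetricOn e)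
    (hcompl : DComplete d) (hcont : DContinuous d T)
    (hcontr : ∃ α : ℝ, 0 < α ∧ α < 1 ∧ ∀ x y : X, e (T x) (T y) ≤ α * e x y)
    (hsub : ∀ x y : X, d x y ≤ e x y) :
    PicardOp d T := by
  obtain ⟨hd0, hdsymm, hdtri, hdsep⟩ := hd
  obtain ⟨he0, hesymm, hetri, hesep⟩ := he
  obtain ⟨α, hα0, hα1, hcontr⟩ := hcontr
  have dnonneg : ∀ x y, 0 ≤ d x y := fun x y => by
    have h1 := hdtri x y x
    have h2 := hd0 x
    have h3 := hdsymm x y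
    linarith
  have enonneg : ∀ x y, 0 ≤ e x y := fun x y => by
    have h1 := hetri x y x
    have h2 := he0 x
    have h3 := hesymm x y
    linarith
  -- uniqueness of d-limits
  have limuniq : ∀ (x : ℕ → X) (a b : X), ConvTo d x a → ConvTo d x b → a = b := by
    intro x a b ha hb
    apply hdsep
    have htend : Tendsto (fun n => d (x n) a + d (x n) b) atTop (𝓝 0) := by
      simpa using ha.add hb
    have hle : d a b ≤ 0 := by
      refine ge_of_tendsto htend (Filter.Eventually.of_forall fun n => ?_)
      calc d a b ≤ d a (x n) + d (x n) b := hdtri a (x n) b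
        _ = d (x n) a + d (x n) b := by rw [hdsymm a (x n)]
    exact le_antisymm hle (dnonneg a b)
  -- uniqueness of fixed points
  have fixuniq : ∀ w z : X, T w = w → T z = z → w = z := by
    intro w z hw hz
    apply hesep
    have h := hcontr w z
    rw [hw, hz] at h
    have := enonneg w z
    nlinarith
  -- every orbit converges to a fixed point
  have key : ∀ x : X, ∃ a, T a = a ∧ ConvTo d (fun n => T^[n] x) a := by
    intro x
    set C := e x (T x) with hC
    have hCnn : 0 ≤ C := enonneg _ _
    -- step estimate
    have step : ∀ n : ℕ, e (T^[n] x) (T^[n+1] x) ≤ α ^ n * C := by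
      intro n
      induction n with
      | zero => simp; exact le_rfl
      | succ n ih =>
        rw [Function.iterate_succ_apply' T n, Function.iterate_succ_apply' T (n+1)]
        calc e (T (T^[n] x)) (T (T^[n+1] x)) ≤ α * e (T^[n] x) (T^[n+1] x) :=
              hcontr _ _
          _ ≤ α * (α ^ n * C) := by nlinarith
          _ = α ^ (n+1) * C := by ring
    -- chain estimate
    have chain : ∀ m k : ℕ,
        e (T^[m] x) (T^[m+k] x) ≤ (∑ j ∈ Finset.range k, α ^ (m+j)) * C := by
      intro m k
      induction k with
      | zero => simp [he0]
      | succ k ih =>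
        calc e (T^[m] x) (T^[m+(k+1)] x)
            ≤ e (T^[m] x) (T^[m+k] x) + e (T^[m+k] x) (T^[m+k+1] x) := by
              have := hdtri
              exact hetri _ (T^[m+k] x) _
          _ ≤ (∑ j ∈ Finset.range k, α ^ (m+j)) * C + α ^ (m+k) * C := by
              have := step (m+k); linarith
          _ = (∑ j ∈ Finset.range (k+1), α ^ (m+j)) * C := by
              rw [Finset.sum_range_succ]; ring
    have geom : ∀ m k : ℕ, (∑ j ∈ Finset.range k, α ^ (m+j)) ≤ α ^ m * (1-α)⁻¹ := by
      intro m k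
      have h1 : (∑ j ∈ Finset.range k, α ^ (m+j)) = α ^ m * ∑ j ∈ Finset.range k, α ^ j := by
        rw [Finset.mul_sum]
        exact Finset.sum_congr rfl fun j _ => by rw [pow_add]
      rw [h1]
      have hαm : (0:ℝ) ≤ α ^ m := pow_nonneg hα0.le m
      have hsum : (∑ j ∈ Finset.range k, α ^ j) ≤ (1-α)⁻¹ := by
        have := geom_sum_eq (ne_of_lt hα1) k
        rw [this]
        rw [div_le_iff_of_neg (by linarith)]
        have : (0:ℝ) ≤ α ^ k := pow_nonneg hα0.le k
        have h2 : (0:ℝ) < 1 - α := by linarith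
        rw [inv_mul_eq_div, div_le_iff₀ h2] at *
        nlinarith [mul_pos (inv_pos.mpr h2) h2]
      exact mul_le_mul_of_nonneg_left hsum hαm
    have bound : ∀ m k : ℕ, e (T^[m] x) (T^[m+k] x) ≤ α ^ m * (1-α)⁻¹ * C := by
      intro m k
      calc e (T^[m] x) (T^[m+k] x) ≤ (∑ j ∈ Finset.range k, α ^ (m+j)) * C := chain m k
        _ ≤ α ^ m * (1-α)⁻¹ * C := mul_le_mul_of_nonneg_right (geom m k) hCnn
    -- the orbit is d-Cauchy
    have hcauchy : IsDCauchy d (fun n => T^[n] x) := by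
      intro ε hε
      have htends : Tendsto (fun N : ℕ => α ^ N * (1-α)⁻¹ * C) atTop (𝓝 0) := by
        have h := tendsto_pow_atTop_nhds_zero_of_lt_one hα0.le hα1
        have := h.mul_const ((1-α)⁻¹ * C)
        simpa [mul_assoc] using this
      obtain ⟨N, hN⟩ := (Metric.tendsto_atTop.mp htends ε hε) 
      have hN' : ∀ n ≥ N, α ^ n * (1-α)⁻¹ * C < ε := by
        intro n hn
        have := hN n hn
        rw [Real.dist_eq] at this
        have hnn : 0 ≤ α ^ n * (1-α)⁻¹ * C := by
          have h2 : (0:ℝ) < 1 - α := by linarith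
          positivity
        rw [abs_of_nonneg (by linarith)] at this
        linarith
      refine ⟨N, fun m n hm hn => ?_⟩
      rcases le_total m n with h | h
      · obtain ⟨k, rfl⟩ := Nat.exists_eq_add_of_le h
        calc d (T^[m] x) (T^[m+k] x) ≤ e (T^[m] x) (T^[m+k] x) := hsub _ _
          _ ≤ α ^ m * (1-α)⁻¹ * C := bound m k
          _ < ε := hN' m hm
      · obtain ⟨k, rfl⟩ := Nat.exists_eq_add_of_le h
        rw [hdsymm]
        calc d (T^[n] x) (T^[n+k] x) ≤ e (T^[n] x) (T^[n+k] x) := hsub _ _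
          _ ≤ α ^ n * (1-α)⁻¹ * C := bound n k
          _ < ε := hN' n hn
    obtain ⟨a, ha⟩ := hcompl _ hcauchy
    refine ⟨a, ?_, ha⟩
    -- a is a fixed point
    have hshift : ConvTo d (fun n => T^[n+1] x) a := by
      unfold ConvTo at ha ⊢
      exact ha.comp (tendsto_add_atTop_nat 1)
    have hTconv : ConvTo d (fun n => T (T^[n] x)) (T a) := hcont _ a ha
    have heq : (fun n => T (T^[n] x)) = fun n => T^[n+1] x := by
      funext n; rw [Function.iterate_succ_apply' T n]
    rw [heq] at hTconv
    exact limuniq _ _ _ hTconv hshift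
  obtain ⟨x₀⟩ := ‹Nonempty X›
  obtain ⟨z, hz, hzconv⟩ := key x₀
  refine ⟨z, hz, fun w hw => fixuniq w z hw hz, fun x => ?_⟩
  obtain ⟨a, ha, haconv⟩ := key x
  rwa [fixuniq a z ha hz] at haconv
end

section
/- Let (X,d,≤) be a partially ordered metric space and T : X → X. Assume there exists α ∈ (0,1) with d(Tx,Ty) ≤ α·d(x,y) whenever x ≤ y; that T is <>-increasing (x <> y implies Tx <> Ty); and that for every x,y ∈ X there exists a <>-chain between x and y. Then for every λ ∈ (1, 1/α), the series e(x,y) := Σ_{n≥0} λⁿ·d(Tⁿx,Tⁿy) is finite for all x,y ∈ X. -/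
open Filter Topology

section aux
variable {X : Type*} [PartialOrder X] (d : X → X → ℝ) (T : X → X)

lemma d_nonneg (hd : IsMetricOn d) (x y : X) : 0 ≤ d x y := by
  obtain ⟨hrefl, hsymm, htri, _⟩ := hd
  have := htri x y x
  rw [hrefl, hsymm y x] at this
  linarith

lemma contr_comp (hd : IsMetricOn d) {α : ℝ}
    (hcontr : ∀ x y : X, x ≤ y → d (T x) (T y) ≤ α * d x y)
    {x y : X} (h : OrdComparable x y) : d (T x) (T y) ≤ α * d x y := by
  rcases h with h | h
  · exact hcontr x y h
  · rw [hd.2.1 (T x) (T y), hd.2.1 x y]; exact hcontr y x h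

lemma iter_bound (hd : IsMetricOn d) {α : ℝ} (hα0 : 0 ≤ α)
    (hcontr : ∀ x y : X, x ≤ y → d (T x) (T y) ≤ α * d x y)
    (hinc : ∀ x y : X, OrdComparable x y → OrdComparable (T x) (T y))
    {x y : X} (h : OrdComparable x y) (n : ℕ) :
    OrdComparable (T^[n] x) (T^[n] y) ∧ d (T^[n] x) (T^[n] y) ≤ α ^ n * d x y := by
  induction n with
  | zero => simpa using h
  | succ n ih =>
    constructor
    · rw [Function.iterate_succ_apply', Function.iterate_succ_apply']
      exact hinc _ _ ih.1
    · rw [Function.iterate_succ_apply', Function.iterate_succ_apply']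
      calc d (T (T^[n] x)) (T (T^[n] y)) ≤ α * d (T^[n] x) (T^[n] y) :=
            contr_comp d T hd hcontr ih.1
        _ ≤ α * (α ^ n * d x y) := by
            exact mul_le_mul_of_nonneg_left ih.2 hα0
        _ = α ^ (n+1) * d x y := by ring

lemma chain_bound (hd : IsMetricOn d) {α : ℝ} (hα0 : 0 ≤ α)
    (hcontr : ∀ x y : X, x ≤ y → d (T x) (T y) ≤ α * d x y)
    (hinc : ∀ x y : X, OrdComparable x y → OrdComparable (T x) (T y))
    (z : ℕ → X) (k : ℕ) (hz : ∀ i < k, OrdComparable (z i) (z (i + 1))) (n : ℕ) :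
    d (T^[n] (z 0)) (T^[n] (z k)) ≤
      α ^ n * ∑ i ∈ Finset.range k, d (z i) (z (i+1)) := by
  induction k with
  | zero => simp [hd.1]
  | succ k ih =>
    have h1 : d (T^[n] (z 0)) (T^[n] (z (k+1))) ≤
        d (T^[n] (z 0)) (T^[n] (z k)) + d (T^[n] (z k)) (T^[n] (z (k+1))) :=
      hd.2.2.1 _ _ _
    have h2 := (iter_bound d T hd hα0 hcontr hinc (hz k (Nat.lt_succ_self k)) n).2
    have h3 := ih (fun i hi => hz i (hi.trans (Nat.lt_succ_self k)))
    rw [Finset.sum_range_succ, mul_add]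
    linarith

end aux

/-- The series `e(x,y) = Σ λⁿ d(Tⁿx,Tⁿy)` is finite, for every `λ ∈ (1, 1/α)`. -/
theorem series_finite {X : Type*} [PartialOrder X] (d : X → X → ℝ) (T : X → X)
    (hd : IsMetricOn d) (α : ℝ) (hα0 : 0 < α) (hα1 : α < 1)
    (hcontr : ∀ x y : X, x ≤ y → d (T x) (T y) ≤ α * d x y)
    (hinc : ∀ x y : X, OrdComparable x y → OrdComparable (T x) (T y))
    (hchain : ∀ x y : X, HasChain x y) :
    ∀ lam : ℝ, 1 < lam → lam < 1 / α →
      ∀ x y : X, Summable (fun n : ℕ => lam ^ n * d (T^[n] x) (T^[n] y)) := by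
  intro lam hlam1 hlam2 x y
  obtain ⟨k, z, hk, hz0, hzk, hzc⟩ := hchain x y
  set C := ∑ i ∈ Finset.range k, d (z i) (z (i+1)) with hC
  have hlamα : lam * α < 1 := by
    have := (lt_div_iff₀ hα0).mp hlam2
    linarith
  have hge : Summable (fun n : ℕ => (lam * α) ^ n * C) :=
    (summable_geometric_of_lt_one (by positivity) hlamα).mul_right C
  apply Summable.of_nonneg_of_le _ _ hge
  · intro n
    have := d_nonneg d hd (T^[n] x) (T^[n] y)
    positivity
  · intro n
    have hb := chain_bound d T hd hα0.le hcontr hinc z k hzc n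
    rw [hz0, hzk] at hb
    calc lam ^ n * d (T^[n] x) (T^[n] y) ≤ lam ^ n * (α ^ n * C) := by
          apply mul_le_mul_of_nonneg_left hb (by positivity)
      _ = (lam * α) ^ n * C := by rw [mul_pow]; ring
end

section
/- Let (X,d,≤) be a partially ordered metric space and T : X → X. Assume there exists α ∈ (0,1) with d(Tx,Ty) ≤ α·d(x,y) whenever x ≤ y; that T is <>-increasing (x <> y implies Tx <> Ty); and that for every x,y ∈ X there exists a <>-chain between x and y. Fix λ ∈ (1, 1/α), and define e(x,y) := Σ_{n≥0} λⁿ·d(Tⁿx,Tⁿy) (which is finite). Then e is a metric on X, d is subordinated to e (d(x,y) ≤ e(x,y) for all x,y), and T is e-contractive with constant 1/λ ∈ (α,1): e(Tx,Ty) ≤ (1/λ)·e(x,y) for all x,y ∈ X. -/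
open Filter Topology

/-- `e(x,y) = Σ λⁿ d(Tⁿx,Tⁿy)` is a metric, `d` is subordinated to `e`, and
`T` is `e`-contractive with constant `1/λ ∈ (α,1)`. -/
theorem maia_metric_construction {X : Type*} [PartialOrder X] (d : X → X → ℝ) (T : X → X)
    (hd : IsMetricOn d) (α : ℝ) (hα0 : 0 < α) (hα1 : α < 1)
    (hcontr : ∀ x y : X, x ≤ y → d (T x) (T y) ≤ α * d x y)
    (hinc : ∀ x y : X, OrdComparable x y → OrdComparable (T x) (T y))
    (hchain : ∀ x y : X, HasChain x y)
    (lam : ℝ) (hlam1 : 1 < lam) (hlam2 : lam < 1 / α)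
    (e : X → X → ℝ)
    (he : ∀ x y : X, e x y = ∑' n : ℕ, lam ^ n * d (T^[n] x) (T^[n] y)) :
    IsMetricOn e ∧ (∀ x y : X, d x y ≤ e x y) ∧
      (α < 1 / lam ∧ 1 / lam < 1) ∧
      ∀ x y : X, e (T x) (T y) ≤ (1 / lam) * e x y := by

  obtain ⟨hrefl, hsymm, htri, hsep⟩ := hd
  have hlampos : (0:ℝ) < lam := lt_trans one_pos hlam1
  have dnn : ∀ x y, 0 ≤ d x y := by
    intro x y
    nlinarith [htri x y x, hrefl x, hsymm x y]
  have hcomp : ∀ x y, OrdComparable x y → d (T x) (T y) ≤ α * d x y := by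
    intro x y h
    rcases h with h | h
    · exact hcontr x y h
    · rw [hsymm, hsymm x y]; exact hcontr y x h
  have hcompn : ∀ n (x y : X), OrdComparable x y → d (T^[n] x) (T^[n] y) ≤ α ^ n * d x y := by
    intro n
    induction n with
    | zero => intro x y _; simp
    | succ n ih =>
      intro x y h
      rw [Function.iterate_succ_apply, Function.iterate_succ_apply]
      calc d (T^[n] (T x)) (T^[n] (T y)) ≤ α ^ n * d (T x) (T y) := ih _ _ (hinc x y h)
        _ ≤ α ^ n * (α * d x y) :=
            mul_le_mul_of_nonneg_left (hcomp x y h) (by positivity)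
        _ = α ^ (n+1) * d x y := by ring
  have hbound : ∀ x y : X, ∃ C, 0 ≤ C ∧ ∀ n, d (T^[n] x) (T^[n] y) ≤ α ^ n * C := by
    intro x y
    obtain ⟨k, z, _, h0, hkk, hcomp'⟩ := hchain x y
    refine ⟨∑ i ∈ Finset.range k, d (z i) (z (i+1)),
      Finset.sum_nonneg fun i _ => dnn _ _, ?_⟩
    intro n
    have key : ∀ m, (∀ i < m, OrdComparable (z i) (z (i+1))) →
        d (T^[n] (z 0)) (T^[n] (z m)) ≤ α ^ n * ∑ i ∈ Finset.range m, d (z i) (z (i+1)) := by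
      intro m
      induction m with
      | zero => intro _; simp [hrefl]
      | succ m ih =>
        intro hcm
        have h1 := ih (fun i hi => hcm i (Nat.lt_succ_of_lt hi))
        have h2 := hcompn n _ _ (hcm m (Nat.lt_succ_self m))
        calc d (T^[n] (z 0)) (T^[n] (z (m+1)))
            ≤ d (T^[n] (z 0)) (T^[n] (z m)) + d (T^[n] (z m)) (T^[n] (z (m+1))) := htri _ _ _
          _ ≤ α ^ n * (∑ i ∈ Finset.range m, d (z i) (z (i+1))) + α ^ n * d (z m) (z (m+1)) := by
              linarith
          _ = α ^ n * ∑ i ∈ Finset.range (m+1), d (z i) (z (i+1)) := by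
              rw [Finset.sum_range_succ]; ring
    have := key k hcomp'
    rwa [h0, hkk] at this
  have hla : lam * α < 1 := (lt_div_iff₀ hα0).mp hlam2
  have tnn : ∀ n (x y : X), 0 ≤ lam ^ n * d (T^[n] x) (T^[n] y) :=
    fun n x y => mul_nonneg (pow_nonneg hlampos.le n) (dnn _ _)
  have hsum : ∀ x y : X, Summable (fun n => lam ^ n * d (T^[n] x) (T^[n] y)) := by
    intro x y
    obtain ⟨C, hC0, hC⟩ := hbound x y
    refine Summable.of_nonneg_of_le (fun n => tnn n x y) (fun n => ?_)
      ((summable_geometric_of_lt_one (by positivity) hla).mul_right C)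
    calc lam ^ n * d (T^[n] x) (T^[n] y) ≤ lam ^ n * (α ^ n * C) :=
          mul_le_mul_of_nonneg_left (hC n) (by positivity)
      _ = (lam * α) ^ n * C := by rw [mul_pow]; ring
  have hsub : ∀ x y : X, d x y ≤ e x y := by
    intro x y
    rw [he]
    have := Summable.le_tsum (hsum x y) 0 (fun i _ => tnn i x y)
    simpa using this
  have henn : ∀ x y : X, 0 ≤ e x y := fun x y => le_trans (dnn x y) (hsub x y)
  refine ⟨⟨?_, ?_, ?_, ?_⟩, hsub, ⟨(lt_div_iff₀ hlampos).mpr (by nlinarith),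
    (div_lt_one hlampos).mpr hlam1⟩, ?_⟩
  · intro x; simp [he, hrefl]
  · intro x y; rw [he, he]; exact tsum_congr fun n => by rw [hsymm]
  · intro x y z
    rw [he, he, he, ← Summable.tsum_add (hsum x y) (hsum y z)]
    refine Summable.tsum_le_tsum (fun n => ?_) (hsum x z) ((hsum x y).add (hsum y z))
    have := htri (T^[n] x) (T^[n] y) (T^[n] z)
    nlinarith [pow_nonneg hlampos.le n]
  · intro x y h
    have h1 := hsub x y
    have h2 := dnn x y
    exact hsep x y (by linarith)
  · intro x y
    have key : lam * e (T x) (T y) ≤ e x y := by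
      have e1 : lam * e (T x) (T y)
          = ∑' n : ℕ, lam ^ (n+1) * d (T^[n+1] x) (T^[n+1] y) := by
        rw [he, ← tsum_mul_left]
        exact tsum_congr fun n => by
          simp only [Function.iterate_succ_apply]; ring
      have e2 := Summable.tsum_eq_zero_add (hsum x y)
      rw [e1, he]
      have : (0:ℝ) ≤ lam ^ 0 * d (T^[0] x) (T^[0] y) := tnn 0 x y
      linarith [e2.ge, e2.le, this]
    rw [one_div, inv_mul_eq_div, le_div_iff₀ hlampos]
    linarith [key]
end

section
/- Let X be a nonempty set with a quasi-order ≤, a separated convergence structure C, and an almost metric e, and let T : X → X be ≤-increasing. Assume: (i) T is extended (e,M;≤)-contractive, i.e. there is a comparison function φ with e(Tx,Ty) ≤ φ(M(x,y)) for all x ≤ y; (ii) T is (ao,C)-continuous; (iii) (e,C) is ao-complete; (iv) ≤ is (ao,C)-self-closed. Then T is a Picard operator modulo (C,≤): Fix(T) = {z : Tz = z} is ≤-singleton (z,w ∈ Fix(T) and z ≤ w imply z = w), and for every x ∈ X with x ≤ Tx the orbit (Tⁿx)ₙ C-converges to some z ∈ Fix(T) with Tⁿx ≤ z for all n. -/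
open Filter Topology

/-- A (sequential) convergence structure on `X`: constant sequences converge to their
value, and convergence is inherited by subsequences. -/
structure ConvStruct (X : Type*) where
  conv : (ℕ → X) → X → Prop
  conv_const : ∀ x : X, conv (fun _ => x) x
  conv_subseq : ∀ (x : ℕ → X) (a : X), conv x a →
    ∀ k : ℕ → ℕ, StrictMono k → conv (fun n => x (k n)) a

/-- `C` is separated: limits are unique. -/
def ConvStruct.Separated {X : Type*} (C : ConvStruct X) : Prop :=
  ∀ (x : ℕ → X) (a b : X), C.conv x a → C.conv x b → a = b

/-- An almost metric: nonnegative, reflexive, triangular and sufficient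
(symmetry is not assumed). -/
def IsAlmostMetric {X : Type*} (e : X → X → ℝ) : Prop :=
  (∀ x y, 0 ≤ e x y) ∧ (∀ x, e x x = 0) ∧
  (∀ x y z, e x z ≤ e x y + e y z) ∧ (∀ x y, e x y = 0 → x = y)

/-- A comparison function on `ℝ₊`: nonnegativity-preserving, increasing,
`φ(0) = 0`, `φ(t) < t` for `t > 0`, and `φⁿ(t) → 0` for every `t > 0`. -/
def IsComparisonFn (φ : ℝ → ℝ) : Prop :=
  (∀ t : ℝ, 0 ≤ t → 0 ≤ φ t) ∧ (∀ s t : ℝ, 0 ≤ s → s ≤ t → φ s ≤ φ t) ∧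
  φ 0 = 0 ∧ (∀ t : ℝ, 0 < t → φ t < t) ∧
  ∀ t : ℝ, 0 < t → Tendsto (fun n : ℕ => φ^[n] t) atTop (𝓝 0)

/-- `M(x,y) = max{e(x,y), e(x,Tx), e(y,Ty), (e(x,Ty)+e(Tx,y))/2}`. -/
noncomputable def MFun {X : Type*} (e : X → X → ℝ) (T : X → X) (x y : X) : ℝ :=
  max (max (e x y) (max (e x (T x)) (e y (T y)))) ((e x (T y) + e (T x) y) / 2)

/-- `e`-Cauchy sequences (for a possibly nonsymmetric `e`). -/
def ECauchy {X : Type*} (e : X → X → ℝ) (x : ℕ → X) : Prop :=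
  ∀ δ : ℝ, 0 < δ → ∃ N : ℕ, ∀ n m : ℕ, N ≤ n → n ≤ m → e (x n) (x m) ≤ δ

/-- An ao-sequence: ascending and `T`-orbital. -/
def AOSeq {X : Type*} [Preorder X] (T : X → X) (z : ℕ → X) : Prop :=
  (∀ i j : ℕ, i ≤ j → z i ≤ z j) ∧ ∃ x : X, ∀ n, z n = T^[n] x

/-- `T` is (ao,C)-continuous. -/
def AOContinuous {X : Type*} [Preorder X] (C : ConvStruct X) (T : X → X) : Prop :=
  ∀ (z : ℕ → X) (a : X), AOSeq T z → C.conv z a → (∀ n, z n ≤ a) →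
    C.conv (fun n => T (z n)) (T a)

/-- `(e,C)` is ao-complete: every `e`-Cauchy ao-sequence is `C`-convergent. -/
def AOComplete {X : Type*} [Preorder X] (e : X → X → ℝ) (C : ConvStruct X)
    (T : X → X) : Prop :=
  ∀ z : ℕ → X, AOSeq T z → ECauchy e z → ∃ a, C.conv z a

/-- `≤` is (ao,C)-self-closed: the `C`-limit of a `C`-convergent ao-sequence is an
upper bound of it. -/
def AOSelfClosed {X : Type*} [Preorder X] (C : ConvStruct X) (T : X → X) : Prop :=
  ∀ (z : ℕ → X) (a : X), AOSeq T z → C.conv z a → ∀ n, z n ≤ a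

/-- Theorem 4: `T` is a Picard operator modulo `(C,≤)`. -/
theorem picard_modulo_order {X : Type*} [Nonempty X] [Preorder X]
    (C : ConvStruct X) (e : X → X → ℝ) (T : X → X)
    (hsep : C.Separated) (he : IsAlmostMetric e)
    (hmono : ∀ x y : X, x ≤ y → T x ≤ T y)
    (hcontr : ∃ φ : ℝ → ℝ, IsComparisonFn φ ∧
      ∀ x y : X, x ≤ y → e (T x) (T y) ≤ φ (MFun e T x y))
    (hTcont : AOContinuous C T) (hcompl : AOComplete e C T)
    (hclosed : AOSelfClosed C T) :
    (∀ z w : X, T z = z → T w = w → z ≤ w → z = w) ∧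
      ∀ x : X, x ≤ T x →
        ∃ z : X, T z = z ∧ C.conv (fun n => T^[n] x) z ∧ ∀ n : ℕ, T^[n] x ≤ z := by
  obtain ⟨φ, ⟨φnn, φmono, φ0, φlt, φtend⟩, hφ⟩ := hcontr
  obtain ⟨enn, erefl, etri, esuff⟩ := he
  constructor
  · intro p q hp hq hpq
    have hc := hφ p q hpq
    rw [hp, hq] at hc
    have hM : MFun e T p q = e p q := by
      unfold MFun
      rw [hp, hq, erefl p, erefl q]
      have h1 : 0 ≤ e p q := enn p q
      have h2 : (e p q + e p q) / 2 = e p q := by ring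
      rw [h2]
      simp [max_self, max_eq_left h1]
    rw [hM] at hc
    rcases eq_or_lt_of_le (enn p q) with h | h
    · exact esuff p q h.symm
    · exact absurd (hc.trans_lt (φlt _ h)) (lt_irrefl _)
  · intro x hx
    set z : ℕ → X := fun n => T^[n] x with hzdef
    have hTz : ∀ n, T (z n) = z (n + 1) := fun n =>
      (Function.iterate_succ_apply' T n x).symm
    have hstep : ∀ n, z n ≤ z (n + 1) := by
      intro n
      induction n with
      | zero => exact hx
      | succ n ih =>
        have h := hmono _ _ ih
        rwa [hTz n, hTz (n + 1)] at h
    have hasc : ∀ i j : ℕ, i ≤ j → z i ≤ z j := by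
      intro i j hij
      induction j with
      | zero => rw [Nat.le_zero.mp hij]
      | succ j ih =>
        rcases eq_or_lt_of_le hij with rfl | h
        · exact le_refl _
        · exact (ih (Nat.lt_succ_iff.mp h)).trans (hstep j)
    have hAO : AOSeq T z := ⟨hasc, x, fun n => rfl⟩
    have Mnn : ∀ a b : X, 0 ≤ MFun e T a b := fun a b =>
      (enn a b).trans (le_max_of_le_left (le_max_left _ _))
    -- one-step decay
    have hdstep : ∀ n, e (z (n + 1)) (z (n + 2)) ≤ φ (e (z n) (z (n + 1))) := by
      intro n
      have hMle : MFun e T (z n) (z (n + 1)) ≤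
          max (e (z n) (z (n + 1))) (e (z (n + 1)) (z (n + 2))) := by
        unfold MFun
        rw [hTz n, hTz (n + 1)]
        refine max_le (max_le (le_max_left _ _)
          (max_le (le_max_left _ _) (le_max_right _ _))) ?_
        rw [erefl]
        have h1 := etri (z n) (z (n + 1)) (z (n + 2))
        have h2 := le_max_left (e (z n) (z (n + 1))) (e (z (n + 1)) (z (n + 2)))
        have h3 := le_max_right (e (z n) (z (n + 1))) (e (z (n + 1)) (z (n + 2)))
        linarith
      have hb : e (z (n + 1)) (z (n + 2)) ≤
          φ (max (e (z n) (z (n + 1))) (e (z (n + 1)) (z (n + 2)))) := by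
        have h := hφ (z n) (z (n + 1)) (hstep n)
        rw [hTz n, hTz (n + 1)] at h
        exact h.trans (φmono _ _ (Mnn _ _) hMle)
      rcases le_total (e (z (n + 1)) (z (n + 2))) (e (z n) (z (n + 1))) with h | h
      · rwa [max_eq_left h] at hb
      · rcases eq_or_lt_of_le (enn (z (n + 1)) (z (n + 2))) with h0 | h0
        · rw [← h0]
          exact φnn _ (enn _ _)
        · rw [max_eq_right h] at hb
          exact absurd (hb.trans_lt (φlt _ h0)) (lt_irrefl _)
    have hiternn : ∀ (n : ℕ) (t : ℝ), 0 ≤ t → 0 ≤ φ^[n] t := by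
      intro n
      induction n with
      | zero => intro t ht; exact ht
      | succ n ih =>
        intro t ht
        rw [Function.iterate_succ_apply']
        exact φnn _ (ih t ht)
    have hdpow : ∀ n, e (z n) (z (n + 1)) ≤ φ^[n] (e (z 0) (z 1)) := by
      intro n
      induction n with
      | zero => exact le_refl _
      | succ n ih =>
        calc e (z (n + 1)) (z (n + 2)) ≤ φ (e (z n) (z (n + 1))) := hdstep n
          _ ≤ φ (φ^[n] (e (z 0) (z 1))) := φmono _ _ (enn _ _) ih
          _ = φ^[n + 1] (e (z 0) (z 1)) := (Function.iterate_succ_apply' φ n _).symm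
    have hdtend : Tendsto (fun n => e (z n) (z (n + 1))) atTop (𝓝 0) := by
      rcases eq_or_lt_of_le (enn (z 0) (z 1)) with h | h
      · have hiter0 : ∀ n : ℕ, φ^[n] (0 : ℝ) = 0 := by
          intro n
          induction n with
          | zero => rfl
          | succ n ih => rw [Function.iterate_succ_apply', ih, φ0]
        have hz0 : ∀ n, e (z n) (z (n + 1)) = 0 := by
          intro n
          refine le_antisymm ?_ (enn _ _)
          have := hdpow n
          rwa [← h, hiter0 n] at this
        have : (fun n => e (z n) (z (n + 1))) = fun _ => (0 : ℝ) :=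
          funext fun n => hz0 n
        rw [this]
        exact tendsto_const_nhds
      · exact squeeze_zero (fun n => enn _ _) hdpow (φtend _ h)
    have hCauchy : ECauchy e z := by
      intro δ hδ
      have hη : 0 < δ - φ δ := sub_pos.mpr (φlt δ hδ)
      have hφδ : 0 ≤ φ δ := φnn δ hδ.le
      obtain ⟨N, hN⟩ : ∃ N : ℕ, ∀ k, N ≤ k → e (z k) (z (k + 1)) ≤ (δ - φ δ) / 2 := by
        have hev := hdtend.eventually_lt_const (show (0 : ℝ) < (δ - φ δ) / 2 by linarith)
        obtain ⟨N, hN⟩ := eventually_atTop.mp hev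
        exact ⟨N, fun k hk => (hN k hk).le⟩
      have key : ∀ p : ℕ, ∀ n, N ≤ n → e (z n) (z (n + 1 + p)) ≤
          e (z n) (z (n + 1)) + φ δ := by
        intro p
        induction p using Nat.strong_induction_on with
        | _ p IH =>
          rcases p with _ | q
          · intro n hn
            exact le_add_of_nonneg_right hφδ
          · intro n hn
            have hdn : e (z n) (z (n + 1)) ≤ (δ - φ δ) / 2 := hN n hn
            have hdm : e (z (n + 1 + q)) (z (n + 1 + q + 1)) ≤ (δ - φ δ) / 2 :=
              hN _ (by omega)
            have hdn1 : e (z (n + 1)) (z (n + 1 + 1)) ≤ (δ - φ δ) / 2 :=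
              hN _ (by omega)
            have hIHq : e (z n) (z (n + 1 + q)) ≤ e (z n) (z (n + 1)) + φ δ :=
              IH q (by omega) n hn
            have hIHq' : e (z (n + 1)) (z (n + 1 + q)) ≤
                e (z (n + 1)) (z (n + 1 + 1)) + φ δ := by
              rcases q with _ | r
              · rw [erefl]
                exact add_nonneg (enn _ _) hφδ
              · have h := IH r (by omega) (n + 1) (by omega)
                have hidx : n + 1 + 1 + r = n + 1 + (r + 1) := by omega
                rwa [hidx] at h
            have htop : e (z n) (z (n + 1 + q + 1)) ≤
                e (z n) (z (n + 1 + q)) + e (z (n + 1 + q)) (z (n + 1 + q + 1)) :=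
              etri _ _ _
            have hM : MFun e T (z n) (z (n + 1 + q)) ≤ δ := by
              unfold MFun
              rw [hTz n, hTz (n + 1 + q)]
              refine max_le (max_le (by linarith) (max_le (by linarith) (by linarith))) ?_
              linarith
            have hstep2 : e (z (n + 1)) (z (n + 1 + q + 1)) ≤ φ δ := by
              have h := hφ (z n) (z (n + 1 + q)) (hasc n (n + 1 + q) (by omega))
              rw [hTz n, hTz (n + 1 + q)] at h
              exact h.trans (φmono _ _ (Mnn _ _) hM)
            calc e (z n) (z (n + 1 + (q + 1)))
                ≤ e (z n) (z (n + 1)) + e (z (n + 1)) (z (n + 1 + q + 1)) := etri _ _ _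
              _ ≤ e (z n) (z (n + 1)) + φ δ := by linarith
      refine ⟨N, fun n m hn hnm => ?_⟩
      rcases eq_or_lt_of_le hnm with rfl | h
      · rw [erefl]
        exact hδ.le
      · obtain ⟨p, rfl⟩ : ∃ p, m = n + 1 + p := ⟨m - n - 1, by omega⟩
        have h1 := key p n hn
        have h2 := hN n hn
        linarith [φlt δ hδ]
    obtain ⟨a, ha⟩ := hcompl z hAO hCauchy
    have hle : ∀ n, z n ≤ a := hclosed z a hAO ha
    have h1 : C.conv (fun n => T (z n)) (T a) := hTcont z a hAO ha hle
    have heq : (fun n => T (z n)) = fun n => z (n + 1) := funext fun n => hTz n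
    rw [heq] at h1
    have h2 : C.conv (fun n => z (n + 1)) a :=
      C.conv_subseq z a ha (fun n => n + 1) (fun _ _ h => Nat.succ_lt_succ h)
    exact ⟨a, hsep _ _ _ h1 h2, ha, hle⟩
end

section
/- Jachymski's property of comparison functions: Let φ : ℝ₊ → ℝ₊ be increasing with φⁿ(t) → 0 as n → ∞ for every t > 0 (in particular φ(t) < t for t > 0 and φ(0) = 0). Then for every γ > 0 there exists β > 0 such that for all t ≥ 0: 0 ≤ t < γ + β implies φ(t) ≤ γ. -/
open Filter Topology

/-- Jachymski's property of comparison functions. -/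
theorem jachymski_comparison (φ : ℝ → ℝ)
    (hpos : ∀ t : ℝ, 0 ≤ t → 0 ≤ φ t)
    (hmono : ∀ s t : ℝ, 0 ≤ s → s ≤ t → φ s ≤ φ t)
    (hiter : ∀ t : ℝ, 0 < t → Tendsto (fun n : ℕ => φ^[n] t) atTop (𝓝 0)) :
    ∀ γ : ℝ, 0 < γ → ∃ β : ℝ, 0 < β ∧
      ∀ t : ℝ, 0 ≤ t → t < γ + β → φ t ≤ γ := by
  intro γ hγ
  by_contra h
  push_neg at h
  -- from h: for every β>0, some t < γ+β with φ t > γ; deduce φ s > γ for all s > γ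
  have key : ∀ s : ℝ, γ < s → γ < φ s := by
    intro s hs
    obtain ⟨t, ht0, htlt, htφ⟩ := h (s - γ) (by linarith)
    have : t ≤ s := by linarith
    exact lt_of_lt_of_le htφ (hmono t s ht0 this)
  have hiterγ : ∀ n : ℕ, γ < φ^[n] (γ + 1) := by
    intro n
    induction n with
    | zero => show γ < γ + 1; linarith
    | succ n ih =>
        rw [Function.iterate_succ_apply']
        exact key _ ih
  have htend := hiter (γ + 1) (by linarith)
  have := (htend.eventually (eventually_lt_nhds hγ)).exists
  obtain ⟨n, hn⟩ := this
  exact absurd (hiterγ n) (not_lt.mpr hn.le)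
end

section
/- Maximality of fixed points: Let X be a nonempty set with a quasi-order ≤, a separated convergence structure C and an almost metric e, and let T : X → X be ≤-increasing, extended (e,M;≤)-contractive (there is a comparison function φ with e(Tx,Ty) ≤ φ(M(x,y)) for all x ≤ y), (ao,C)-continuous, with (e,C) ao-complete and ≤ (ao,C)-self-closed. Then every fixed point x* of T is ≤-maximal in X(T,≤) = {x ∈ X : x ≤ Tx}: for every u ∈ X with u ≤ Tu, if x* ≤ u then u ≤ x*. -/
open Filter Topology

/-- Every fixed point of `T` is `≤`-maximal in `X(T,≤) = {x : x ≤ Tx}`. -/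
theorem fixed_point_maximal {X : Type*} [Nonempty X] [Preorder X]
    (C : ConvStruct X) (e : X → X → ℝ) (T : X → X)
    (hsep : C.Separated) (he : IsAlmostMetric e)
    (hmono : ∀ x y : X, x ≤ y → T x ≤ T y)
    (hcontr : ∃ φ : ℝ → ℝ, IsComparisonFn φ ∧
      ∀ x y : X, x ≤ y → e (T x) (T y) ≤ φ (MFun e T x y))
    (hTcont : AOContinuous C T) (hcompl : AOComplete e C T)
    (hclosed : AOSelfClosed C T) :
    ∀ xstar : X, T xstar = xstar →
      ∀ u : X, u ≤ T u → xstar ≤ u → u ≤ xstar := by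
  obtain ⟨φ, ⟨hφnn, hφmono, hφ0, hφlt, hφtend⟩, hc⟩ := hcontr
  intro xstar hfix u hu hxu
  obtain ⟨hnn, hrefl, htri, hsuff⟩ := he
  set z : ℕ → X := fun n => T^[n] u with hz
  have hzsucc : ∀ n, z (n + 1) = T (z n) := fun n => Function.iterate_succ_apply' T n u
  have hzstep : ∀ n, z n ≤ z (n + 1) := by
    intro n
    induction n with
    | zero => simpa [hz] using hu
    | succ k ih =>
      rw [hzsucc, hzsucc]
      exact hmono _ _ ih
  have hzmono : ∀ i j : ℕ, i ≤ j → z i ≤ z j := by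
    intro i j hij
    induction j with
    | zero => simp_all
    | succ k ih =>
      rcases Nat.lt_or_ge i (k + 1) with h | h
      · exact le_trans (ih (Nat.lt_succ_iff.mp h)) (hzstep k)
      · have : i = k + 1 := le_antisymm hij h
        subst this; exact le_refl _
  have hAO : AOSeq T z := ⟨hzmono, u, fun n => rfl⟩
  set b : ℕ → ℝ := fun n => e (z n) (z (n + 1)) with hb
  have hbnn : ∀ n, 0 ≤ b n := fun n => hnn _ _
  have hbstep : ∀ n, b (n + 1) ≤ φ (b n) := by
    intro n
    have hkey : b (n + 1) ≤ φ (MFun e T (z n) (z (n + 1))) := by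
      have := hc (z n) (z (n + 1)) (hzstep n)
      rw [← hzsucc, ← hzsucc] at this
      exact this
    have hM : MFun e T (z n) (z (n + 1)) ≤ max (b n) (b (n + 1)) := by
      unfold MFun
      rw [← hzsucc, ← hzsucc]
      have h1 : e (z n) (z (n + 2)) ≤ b n + b (n + 1) := htri _ (z (n + 1)) _
      have h2 : e (z (n + 1)) (z (n + 1)) = 0 := hrefl _
      have hbn := hbnn n; have hbn1 := hbnn (n + 1)
      simp only [max_le_iff]
      refine ⟨⟨le_max_left _ _, le_max_left _ _, le_max_right _ _⟩, ?_⟩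
      rcases le_total (b n) (b (n + 1)) with h | h
      · calc (e (z n) (z (n + 1 + 1)) + e (z (n + 1)) (z (n + 1))) / 2
            ≤ (b n + b (n + 1) + 0) / 2 := by
              have : (n : ℕ) + 1 + 1 = n + 2 := rfl
              rw [this, h2]; linarith
          _ ≤ max (b n) (b (n + 1)) := by
              rw [max_eq_right h]; linarith
      · calc (e (z n) (z (n + 1 + 1)) + e (z (n + 1)) (z (n + 1))) / 2
            ≤ (b n + b (n + 1) + 0) / 2 := by
              have : (n : ℕ) + 1 + 1 = n + 2 := rfl
              rw [this, h2]; linarith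
          _ ≤ max (b n) (b (n + 1)) := by
              rw [max_eq_left h]; linarith
    have hMnn : 0 ≤ MFun e T (z n) (z (n + 1)) :=
      le_trans (hnn _ _) (le_trans (le_max_left _ _) (le_max_left _ _))
    rcases le_total (b (n + 1)) (b n) with h | h
    · have : max (b n) (b (n + 1)) = b n := max_eq_left h
      exact hkey.trans (hφmono _ _ hMnn (by rw [← this]; exact hM))
    · rcases lt_or_eq_of_le (hbnn (n + 1)) with hpos | hzz
      · exfalso
        have h1 : b (n + 1) ≤ φ (b (n + 1)) := by
          have : max (b n) (b (n + 1)) = b (n + 1) := max_eq_right h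
          exact hkey.trans (hφmono _ _ hMnn (by rw [← this]; exact hM))
        exact absurd h1 (not_le.mpr (hφlt _ hpos))
      · rw [← hzz]; exact hφnn _ (hbnn n)
  have hbiter : ∀ n, b n ≤ φ^[n] (b 0) := by
    intro n
    induction n with
    | zero => simp
    | succ k ih =>
      calc b (k + 1) ≤ φ (b k) := hbstep k
        _ ≤ φ (φ^[k] (b 0)) := hφmono _ _ (hbnn k) ih
        _ = φ^[k + 1] (b 0) := (Function.iterate_succ_apply' φ k (b 0)).symm
  have hbtend : Tendsto b atTop (𝓝 (0 : ℝ)) := by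
    rcases lt_or_eq_of_le (hbnn 0) with hpos | hzz
    · exact squeeze_zero hbnn hbiter (hφtend _ hpos)
    · refine squeeze_zero hbnn hbiter ?_
      have : ∀ n, φ^[n] (b 0) = 0 := by
        intro n; rw [← hzz]; exact Function.iterate_fixed hφ0 n
      simp only [this]; exact tendsto_const_nhds
  have hcauchy : ECauchy e z := by
    intro δ hδ
    set ε : ℝ := (δ - φ δ) / 2 with hε
    have hφδ : 0 ≤ φ δ := hφnn _ hδ.le
    have hεpos : 0 < ε := by have := hφlt δ hδ; rw [hε]; linarith
    have hεδ : ε ≤ δ / 2 := by rw [hε]; linarith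
    set γ : ℝ := δ - ε with hγ
    have hγpos : 0 < γ := by rw [hγ]; linarith
    have hεγ : ε ≤ γ := by rw [hγ]; linarith
    obtain ⟨N, hN⟩ : ∃ N : ℕ, ∀ k, N ≤ k → b k ≤ ε := by
      have := (hbtend.eventually (eventually_le_nhds hεpos)).exists_forall_of_atTop
      obtain ⟨N, hN⟩ := (Filter.eventually_atTop).mp
        (hbtend.eventually (eventually_le_nhds hεpos))
      exact ⟨N, hN⟩
    refine ⟨N, ?_⟩
    have key : ∀ m n : ℕ, N ≤ n → n ≤ m → e (z n) (z m) ≤ γ := by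
      intro m
      induction m with
      | zero =>
        intro n _ hn
        have : n = 0 := Nat.le_zero.mp hn
        subst this; rw [hrefl]; exact hγpos.le
      | succ m ih =>
        intro n hNn hnm
        rcases Nat.lt_or_ge n (m + 1) with h | h
        · have hnm' : n ≤ m := Nat.lt_succ_iff.mp h
          rcases lt_or_eq_of_le hnm' with hlt | heq
          · -- n < m
            have h1 : e (z n) (z m) ≤ γ := ih n hNn hnm'
            have h2 : e (z (n + 1)) (z m) ≤ γ := ih (n + 1) (le_trans hNn (Nat.le_succ n)) hlt
            have h3 : e (z n) (z (m + 1)) ≤ γ + ε :=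
              le_trans (htri _ (z m) _) (by have := hN m (le_trans hNn hnm'); linarith)
            have hbn : b n ≤ ε := hN n hNn
            have hbm : b m ≤ ε := hN m (le_trans hNn hnm')
            have hM : MFun e T (z n) (z m) ≤ δ := by
              unfold MFun
              rw [← hzsucc, ← hzsucc]
              simp only [max_le_iff]
              refine ⟨⟨by linarith, by linarith, by linarith⟩, by linarith⟩
            have hMnn : 0 ≤ MFun e T (z n) (z m) :=
              le_trans (hnn _ _) (le_trans (le_max_left _ _) (le_max_left _ _))
            have hstep : e (z (n + 1)) (z (m + 1)) ≤ φ δ := by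
              have hcc := hc (z n) (z m) (hzmono n m hnm')
              rw [← hzsucc, ← hzsucc] at hcc
              exact hcc.trans (hφmono _ _ hMnn hM)
            calc e (z n) (z (m + 1)) ≤ b n + e (z (n + 1)) (z (m + 1)) := htri _ _ _
              _ ≤ ε + φ δ := by linarith
              _ = γ := by rw [hγ, hε]; ring
          · -- n = m
            subst heq
            exact le_trans (hN n hNn) hεγ
        · have : n = m + 1 := le_antisymm hnm h
          subst this; rw [hrefl]; exact hγpos.le
    intro n m hn hnm
    exact (key m n hn hnm).trans (by rw [hγ]; linarith)
  obtain ⟨a, ha⟩ := hcompl z hAO hcauchy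
  have hub : ∀ n, z n ≤ a := hclosed z a hAO ha
  have hshift : C.conv (fun n => z (n + 1)) a :=
    C.conv_subseq z a ha (fun n => n + 1) (fun i j hij => Nat.succ_lt_succ hij)
  have hTz : C.conv (fun n => z (n + 1)) (T a) := by
    have := hTcont z a hAO ha hub
    have heq : (fun n => T (z n)) = fun n => z (n + 1) := funext fun n => (hzsucc n).symm
    rwa [heq] at this
  have hfa : T a = a := hsep _ _ _ hTz hshift
  have hxa : xstar ≤ a := le_trans hxu (hub 0)
  have hea : e xstar a = 0 := by
    have hcc := hc xstar a hxa
    rw [hfix, hfa] at hcc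
    have hM : MFun e T xstar a = e xstar a := by
      unfold MFun
      rw [hfix, hfa, hrefl, hrefl]
      have h1 : 0 ≤ e xstar a := hnn _ _
      have h2 : (e xstar a + e xstar a) / 2 = e xstar a := by ring
      rw [h2]
      simp [max_eq_left h1, max_self]
    rw [hM] at hcc
    rcases lt_or_eq_of_le (hnn xstar a) with hpos | hzz
    · exact absurd hcc (not_le.mpr (hφlt _ hpos))
    · exact hzz.symm
  have hax : xstar = a := hsuff _ _ hea
  have : u ≤ a := hub 0
  rwa [← hax] at this
end

section
/- Cauchy orbits: Let X be a nonempty set with a quasi-order ≤ and an almost metric e, and let T : X → X be ≤-increasing and satisfy e(Tx,Ty) ≤ φ(M(x,y)) for all x ≤ y, where φ is a comparison function. Then for every x ∈ X with x ≤ Tx, the orbit (Tⁿx)ₙ is e-Cauchy: for every δ > 0 there is N such that e(Tⁿx, Tᵐx) ≤ δ whenever N ≤ n ≤ m. -/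
open Filter Topology

/-- Cauchy orbits: the orbit of every `x` with `x ≤ Tx` is `e`-Cauchy. -/
theorem orbit_eCauchy {X : Type*} [Preorder X] (e : X → X → ℝ) (T : X → X)
    (he : IsAlmostMetric e)
    (hmono : ∀ x y : X, x ≤ y → T x ≤ T y)
    (φ : ℝ → ℝ) (hφ : IsComparisonFn φ)
    (hcontr : ∀ x y : X, x ≤ y → e (T x) (T y) ≤ φ (MFun e T x y)) :
    ∀ x : X, x ≤ T x → ECauchy e (fun n => T^[n] x) := by
  obtain ⟨hnn, hrefl, htri, hsuff⟩ := he
  obtain ⟨hφnn, hφmono, hφ0, hφlt, hφiter⟩ := hφ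
  intro x hx
  set f : ℕ → X := fun n => T^[n] x with hfdef
  have hstep : ∀ n, f (n + 1) = T (f n) := fun n => Function.iterate_succ_apply' T n x
  have hchain1 : ∀ n, f n ≤ f (n + 1) := by
    intro n
    induction n with
    | zero => simpa [f] using hx
    | succ k ih => rw [hstep, hstep]; exact hmono _ _ ih
  have hchain : ∀ n m : ℕ, n ≤ m → f n ≤ f m := by
    intro n m h
    induction m, h using Nat.le_induction with
    | base => exact le_refl _
    | succ m hm ih => exact le_trans ih (hchain1 m)
  set d : ℕ → ℝ := fun n => e (f n) (f (n + 1)) with hddef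
  have hM0 : ∀ a b : X, 0 ≤ MFun e T a b := by
    intro a b
    unfold MFun
    exact le_trans (hnn a b) (le_trans (le_max_left _ _) (le_max_left _ _))
  -- key: d (n+1) ≤ φ (d n)
  have hkey : ∀ n, d (n + 1) ≤ φ (d n) := by
    intro n
    have hc := hcontr (f n) (f (n + 1)) (hchain1 n)
    rw [← hstep n, ← hstep (n + 1)] at hc
    have hMle : MFun e T (f n) (f (n + 1)) ≤ max (d n) (d (n + 1)) := by
      unfold MFun
      rw [← hstep n, ← hstep (n + 1)]
      have h1 : e (f n) (f (n + 2)) ≤ d n + d (n + 1) := htri _ _ _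
      have h2 : e (f (n + 1)) (f (n + 1)) = 0 := hrefl _
      have h3 : 0 ≤ d n := hnn _ _
      have h4 : 0 ≤ d (n + 1) := hnn _ _
      apply max_le
      · apply max_le
        · exact le_max_left _ _
        · apply max_le
          · exact le_max_left _ _
          · exact le_max_right _ _
      · rw [h2]
        rcases le_total (d n) (d (n + 1)) with h | h
        · have : max (d n) (d (n + 1)) = d (n + 1) := max_eq_right h
          rw [this]; linarith
        · have : max (d n) (d (n + 1)) = d n := max_eq_left h
          rw [this]; linarith
    have hc2 : d (n + 1) ≤ φ (max (d n) (d (n + 1))) :=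
      le_trans hc (hφmono _ _ (hM0 _ _) hMle)
    rcases le_total (d (n + 1)) (d n) with h | h
    · rwa [max_eq_left h] at hc2
    · rw [max_eq_right h] at hc2
      rcases eq_or_lt_of_le (hnn (f (n + 1)) (f (n + 2))) with h0 | h0
      · have : d (n + 1) = 0 := h0.symm
        rw [this]; exact hφnn _ (hnn _ _)
      · exact absurd hc2 (not_le.mpr (hφlt _ h0))
  have hφiter_nonneg : ∀ n, 0 ≤ φ^[n] (d 0) := by
    intro n
    induction n with
    | zero => exact hnn _ _
    | succ k ih => rw [Function.iterate_succ_apply']; exact hφnn _ ih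
  have hdbound : ∀ n, d n ≤ φ^[n] (d 0) := by
    intro n
    induction n with
    | zero => exact le_refl _
    | succ k ih =>
      rw [Function.iterate_succ_apply']
      exact le_trans (hkey k) (hφmono _ _ (hnn _ _) ih)
  have hdtend : ∀ ε : ℝ, 0 < ε → ∃ N : ℕ, ∀ n, N ≤ n → d n ≤ ε := by
    intro ε hε
    rcases eq_or_lt_of_le (hnn (f 0) (f 1)) with h0 | h0
    · refine ⟨0, fun n _ => ?_⟩
      have : φ^[n] (d 0) = 0 := by
        rw [show d 0 = 0 from h0.symm]
        exact Function.iterate_fixed hφ0 n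
      exact le_of_lt (lt_of_le_of_lt (by rw [← this]; exact hdbound n) hε)
    · have hev : ∀ᶠ n in atTop, φ^[n] (d 0) < ε :=
        (hφiter (d 0) h0).eventually (gt_mem_nhds hε)
      obtain ⟨N, hN⟩ := hev.exists_forall_of_atTop
      exact ⟨N, fun n hn => le_of_lt (lt_of_le_of_lt (hdbound n) (hN n hn))⟩
  intro δ₀ hδ₀
  have hφδ₀lt : φ δ₀ < δ₀ := hφlt _ hδ₀
  have hφδ₀nn : 0 ≤ φ δ₀ := hφnn _ hδ₀.le
  set δ : ℝ := (δ₀ + φ δ₀) / 2 with hδdef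
  set ε' : ℝ := (δ₀ - φ δ₀) / 2 with hε'def
  have hε'pos : 0 < ε' := by rw [hε'def]; linarith
  have hδpos : 0 < δ := by rw [hδdef]; linarith
  have hδle : δ ≤ δ₀ := by rw [hδdef]; linarith
  have hε'le : ε' ≤ δ := by rw [hε'def, hδdef]; linarith
  obtain ⟨N, hN⟩ := hdtend ε' hε'pos
  have claim : ∀ m n : ℕ, N ≤ n → n ≤ m → e (f n) (f m) ≤ δ := by
    intro m
    induction m with
    | zero =>
      intro n _ hn0
      obtain rfl := Nat.le_zero.mp hn0
      rw [hrefl]; exact hδpos.le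
    | succ m ih =>
      intro n hNn hnm
      rcases eq_or_lt_of_le hnm with rfl | hlt
      · rw [hrefl]; exact hδpos.le
      · have hnm' : n ≤ m := Nat.lt_succ_iff.mp hlt
        rcases eq_or_lt_of_le hnm' with rfl | hlt'
        · exact le_trans (hN n hNn) hε'le
        · have hmN : N ≤ m := le_trans hNn hnm'
          have hc := hcontr (f n) (f m) (hchain n m hnm')
          rw [← hstep n, ← hstep m] at hc
          have hMle : MFun e T (f n) (f m) ≤ δ + ε' / 2 := by
            unfold MFun
            rw [← hstep n, ← hstep m]
            have h1 : e (f n) (f m) ≤ δ := ih n hNn hnm'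
            have h2 : d n ≤ ε' := hN n hNn
            have h3 : d m ≤ ε' := hN m hmN
            have h4 : e (f (n + 1)) (f m) ≤ δ := ih (n + 1) (le_trans hNn (Nat.le_succ n)) hlt'
            have h5 : e (f n) (f (m + 1)) ≤ e (f n) (f m) + d m := htri _ _ _
            apply max_le
            · apply max_le
              · linarith
              · apply max_le
                · have : ε' ≤ δ + ε' / 2 := by linarith
                  exact le_trans h2 this
                · have : ε' ≤ δ + ε' / 2 := by linarith
                  exact le_trans h3 this
            · linarith
          have hMδ₀ : MFun e T (f n) (f m) ≤ δ₀ := by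
            refine le_trans hMle ?_
            rw [hδdef, hε'def]; linarith
          have hφM : φ (MFun e T (f n) (f m)) ≤ φ δ₀ := hφmono _ _ (hM0 _ _) hMδ₀
          calc e (f n) (f (m + 1)) ≤ e (f n) (f (n + 1)) + e (f (n + 1)) (f (m + 1)) :=
                htri _ _ _
            _ ≤ ε' + φ δ₀ := add_le_add (hN n hNn) (le_trans hc hφM)
            _ = δ := by rw [hδdef, hε'def]; ring
  exact ⟨N, fun n m hNn hnm => le_trans (claim m n hNn hnm) hδle⟩
end

section
/- Let X be a nonempty set with a separated convergence structure C and an almost metric e, and let T : X → X. Assume that T is extended (e,M)-contractive, i.e. there is a comparison function φ with e(Tx,Ty) ≤ φ(M(x,y)) for all x,y ∈ X; that T is (o,C)-continuous; and that (e,C) is o-complete. Then T is a Picard operator (modulo C): Fix(T) = {z : Tz = z} is a singleton {x*}, and for every x ∈ X the orbit (Tⁿx)ₙ C-converges to x*. -/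
open Filter Topology

/-- An o-sequence: a sequence of the form `(Tⁿx)ₙ`. -/
def OSeq {X : Type*} (T : X → X) (z : ℕ → X) : Prop :=
  ∃ x : X, ∀ n, z n = T^[n] x

/-- `T` is (o,C)-continuous. -/
def OContinuous {X : Type*} (C : ConvStruct X) (T : X → X) : Prop :=
  ∀ (z : ℕ → X) (a : X), OSeq T z → C.conv z a → C.conv (fun n => T (z n)) (T a)

/-- `(e,C)` is o-complete: every `e`-Cauchy o-sequence is `C`-convergent. -/
def OComplete {X : Type*} (e : X → X → ℝ) (C : ConvStruct X) (T : X → X) : Prop :=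
  ∀ z : ℕ → X, OSeq T z → ECauchy e z → ∃ a, C.conv z a

/-- Corollary 1: `T` is a Picard operator modulo `C`. -/
theorem picard_modulo_conv {X : Type*} [Nonempty X]
    (C : ConvStruct X) (e : X → X → ℝ) (T : X → X)
    (hsep : C.Separated) (he : IsAlmostMetric e)
    (hcontr : ∃ φ : ℝ → ℝ, IsComparisonFn φ ∧
      ∀ x y : X, e (T x) (T y) ≤ φ (MFun e T x y))
    (hTcont : OContinuous C T) (hcompl : OComplete e C T) :
    ∃ z : X, T z = z ∧ (∀ w : X, T w = w → w = z) ∧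
      ∀ x : X, C.conv (fun n => T^[n] x) z := by
  obtain ⟨φ, hφ, hc⟩ := hcontr
  obtain ⟨he0, herefl, hetri, hesuff⟩ := he
  obtain ⟨hφ0, hφmono, hφzero, hφlt, hφiter⟩ := hφ
  have hMnn : ∀ a b : X, 0 ≤ MFun e T a b := by
    intro a b
    simp only [MFun]
    exact le_trans (he0 a b) (le_trans (le_max_left _ _) (le_max_left _ _))
  -- every orbit is e-Cauchy
  have hcauchy : ∀ x : X, ECauchy e (fun n => T^[n] x) := by
    intro x
    set z : ℕ → X := fun n => T^[n] x with hz
    have hzsucc : ∀ n, z (n + 1) = T (z n) := by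
      intro n
      simp only [hz]
      exact Function.iterate_succ_apply' T n x
    -- step estimate
    have hstep : ∀ n, e (z (n+1)) (z (n+1+1)) ≤ φ (e (z n) (z (n+1))) := by
      intro n
      have h1 : e (T (z n)) (T (z (n+1))) ≤ φ (MFun e T (z n) (z (n+1))) := hc _ _
      rw [← hzsucc n, ← hzsucc (n+1)] at h1
      have hM : MFun e T (z n) (z (n+1)) ≤
          max (e (z n) (z (n+1))) (e (z (n+1)) (z (n+1+1))) := by
        simp only [MFun]
        rw [← hzsucc n, ← hzsucc (n+1)]
        have t1 := hetri (z n) (z (n+1)) (z (n+1+1))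
        have t2 := herefl (z (n+1))
        have h0a := he0 (z n) (z (n+1))
        have h0b := he0 (z (n+1)) (z (n+1+1))
        have hm1 : e (z n) (z (n+1)) ≤ max (e (z n) (z (n+1))) (e (z (n+1)) (z (n+1+1))) :=
          le_max_left _ _
        have hm2 : e (z (n+1)) (z (n+1+1)) ≤ max (e (z n) (z (n+1))) (e (z (n+1)) (z (n+1+1))) :=
          le_max_right _ _
        apply max_le
        · exact max_le hm1 (max_le hm1 hm2)
        · rw [t2]
          linarith
      rcases le_or_gt (e (z (n+1)) (z (n+1+1))) (e (z n) (z (n+1))) with h | h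
      · calc e (z (n+1)) (z (n+1+1)) ≤ φ (MFun e T (z n) (z (n+1))) := h1
          _ ≤ φ (max (e (z n) (z (n+1))) (e (z (n+1)) (z (n+1+1)))) :=
              hφmono _ _ (hMnn _ _) hM
          _ = φ (e (z n) (z (n+1))) := by rw [max_eq_left h]
      · exfalso
        have hmax : max (e (z n) (z (n+1))) (e (z (n+1)) (z (n+1+1)))
            = e (z (n+1)) (z (n+1+1)) := max_eq_right h.le
        have h2 : e (z (n+1)) (z (n+1+1)) ≤ φ (e (z (n+1)) (z (n+1+1))) := by
          calc e (z (n+1)) (z (n+1+1)) ≤ φ (MFun e T (z n) (z (n+1))) := h1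
            _ ≤ φ (e (z (n+1)) (z (n+1+1))) := by
                rw [← hmax]; exact hφmono _ _ (hMnn _ _) hM
        have h3 := hφlt (e (z (n+1)) (z (n+1+1))) (lt_of_le_of_lt (he0 (z n) (z (n+1))) h)
        linarith
    -- d n ≤ φ^[n] d 0
    have hdle : ∀ n, e (z n) (z (n+1)) ≤ φ^[n] (e (z 0) (z 1)) := by
      intro n
      induction n with
      | zero => simp
      | succ n ih =>
        have h1 := hstep n
        have h2 : φ (e (z n) (z (n+1))) ≤ φ (φ^[n] (e (z 0) (z 1))) :=
          hφmono _ _ (he0 _ _) ih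
        rw [Function.iterate_succ_apply']
        exact le_trans h1 h2
    have htend : Tendsto (fun n => φ^[n] (e (z 0) (z 1))) atTop (𝓝 0) := by
      rcases (he0 (z 0) (z 1)).eq_or_lt with h | h
      · have hfix : ∀ n, φ^[n] (e (z 0) (z 1)) = 0 := by
          intro n
          rw [← h]
          exact Function.iterate_fixed hφzero n
        simp only [hfix]
        exact tendsto_const_nhds
      · exact hφiter _ h
    have hdtend : Tendsto (fun n => e (z n) (z (n+1))) atTop (𝓝 0) :=
      squeeze_zero (fun n => he0 _ _) hdle htend
    intro δ hδ
    have hφδ : φ δ < δ := hφlt δ hδ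
    have hφδ0 : 0 ≤ φ δ := hφ0 δ hδ.le
    have hev : ∀ᶠ n in atTop, e (z n) (z (n+1)) < δ - φ δ :=
      hdtend.eventually (gt_mem_nhds (by linarith))
    obtain ⟨N, hN⟩ := eventually_atTop.mp hev
    -- key claim
    have key : ∀ m : ℕ, ∀ n : ℕ, N ≤ n → n < m → e (z (n+1)) (z m) ≤ φ δ := by
      intro m
      induction m using Nat.strong_induction_on with
      | _ m ih =>
        intro n hNn hnm
        rcases Nat.lt_or_ge (n+1) m with hlt | hge
        · obtain ⟨m', rfl⟩ : ∃ m', m = m' + 1 := ⟨m - 1, by omega⟩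
          have hn'm' : n < m' := by omega
          have h1 : e (T (z n)) (T (z m')) ≤ φ (MFun e T (z n) (z m')) := hc _ _
          rw [← hzsucc n, ← hzsucc m'] at h1
          have hD : e (z (n+1)) (z m') ≤ φ δ := ih m' (by omega) n hNn hn'm'
          have hdn : e (z n) (z (n+1)) < δ - φ δ := hN n hNn
          have hdm : e (z m') (z (m'+1)) < δ - φ δ := hN m' (by omega)
          have hA : e (z n) (z m') ≤ δ := by
            have := hetri (z n) (z (n+1)) (z m')
            linarith
          have hE : e (z n) (z (m'+1)) ≤ e (z n) (z (n+1)) + e (z (n+1)) (z (m'+1)) :=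
            hetri _ _ _
          have hMle : MFun e T (z n) (z m') ≤
              max δ ((δ + e (z (n+1)) (z (m'+1))) / 2) := by
            simp only [MFun]
            rw [← hzsucc n, ← hzsucc m']
            apply max_le
            · apply max_le
              · exact le_trans hA (le_max_left _ _)
              · apply max_le
                · exact le_trans (by linarith) (le_max_left _ _)
                · exact le_trans (by linarith) (le_max_left _ _)
            · exact le_trans (by linarith) (le_max_right _ _)
          have hMnn' : 0 ≤ MFun e T (z n) (z m') := hMnn _ _
          rcases le_or_gt (e (z (n+1)) (z (m'+1))) δ with ht | ht
          · have hMδ : MFun e T (z n) (z m') ≤ δ :=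
              le_trans hMle (max_le le_rfl (by linarith))
            exact le_trans h1 (hφmono _ _ hMnn' hMδ)
          · exfalso
            have hM2 : MFun e T (z n) (z m') ≤ (δ + e (z (n+1)) (z (m'+1))) / 2 :=
              le_trans hMle (max_le (by linarith) le_rfl)
            rcases hMnn'.eq_or_lt with h0 | hpos
            · rw [← h0, hφzero] at h1
              linarith
            · have := hφlt _ hpos
              linarith
        · have hm : m = n + 1 := by omega
          subst hm
          rw [herefl]
          exact hφδ0
    refine ⟨N, fun n m hNn hnm => ?_⟩
    rcases eq_or_lt_of_le hnm with rfl | h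
    · rw [herefl]; exact hδ.le
    · have h1 := hetri (z n) (z (n+1)) (z m)
      have h2 := key m n hNn h
      have h3 := hN n hNn
      linarith
  -- every orbit converges to a fixed point
  have hfix : ∀ x : X, ∃ a, C.conv (fun n => T^[n] x) a ∧ T a = a := by
    intro x
    obtain ⟨a, ha⟩ := hcompl _ ⟨x, fun n => rfl⟩ (hcauchy x)
    refine ⟨a, ha, ?_⟩
    have h1 : C.conv (fun n => T (T^[n] x)) (T a) := hTcont _ a ⟨x, fun n => rfl⟩ ha
    have h2' : C.conv (fun n => T^[n+1] x) a :=
      C.conv_subseq _ a ha (fun n => n + 1) (fun _ _ h => Nat.succ_lt_succ h)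
    have h3 : (fun n => T^[n+1] x) = (fun n => T (T^[n] x)) := by
      funext n; exact Function.iterate_succ_apply' T n x
    rw [h3] at h2'
    exact (hsep _ a (T a) h2' h1).symm
  -- uniqueness of fixed points
  have huniq : ∀ w z : X, T w = w → T z = z → w = z := by
    intro w z hw hz
    by_contra hne
    have hpos : 0 < e w z :=
      lt_of_le_of_ne (he0 w z) (fun h => hne (hesuff _ _ h.symm))
    have h1 : e (T w) (T z) ≤ φ (MFun e T w z) := hc w z
    rw [hw, hz] at h1
    have hM : MFun e T w z ≤ e w z := by
      simp only [MFun]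
      rw [hw, hz, herefl, herefl]
      apply max_le
      · apply max_le le_rfl
        apply max_le <;> exact he0 w z
      · linarith
    have h2 : φ (MFun e T w z) ≤ φ (e w z) := hφmono _ _ (hMnn _ _) hM
    have h3 := hφlt (e w z) hpos
    linarith
  obtain ⟨x0⟩ := ‹Nonempty X›
  obtain ⟨z, hzc, hzf⟩ := hfix x0
  refine ⟨z, hzf, fun w hw => huniq w z hw hzf, fun x => ?_⟩
  obtain ⟨a, hac, haf⟩ := hfix x
  rwa [huniq a z haf hzf] at hac
end

section
/- O'Regan–Petruşel type theorem: Let X carry a metric d, a partial order ≤ and a separated convergence structure C, and let T : X → X. Assume: (i) there exists x ∈ X with x <> Tx; (ii) T is <>-increasing (x <> y implies Tx <> Ty); (iii) T is (d,≤)-contractive, i.e. there is a comparison function φ with d(Tx,Ty) ≤ φ(d(x,y)) whenever x ≤ y; (iv) T is (o,C)-continuous; (v) (d,C) is complete: every d-Cauchy sequence in X is C-convergent; (vi) the comparability relation <> is transitive; (vii) whenever x,y are not comparable there exists c ∈ X with x <> c and y <> c. Then T is a Picard operator (modulo C): Fix(T) is a singleton {x*} and for every x ∈ X the orbit (Tⁿx)ₙ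 C-converges to x*. -/
open Filter Topology

/-- Corollary 2 (O'Regan–Petruşel type theorem). -/
theorem oregan_petrusel {X : Type*} [Nonempty X] [PartialOrder X]
    (d : X → X → ℝ) (C : ConvStruct X) (T : X → X)
    (hd : IsMetricOn d) (hsep : C.Separated)
    (hstart : ∃ x : X, OrdComparable x (T x))
    (hinc : ∀ x y : X, OrdComparable x y → OrdComparable (T x) (T y))
    (hcontr : ∃ φ : ℝ → ℝ, IsComparisonFn φ ∧
      ∀ x y : X, x ≤ y → d (T x) (T y) ≤ φ (d x y))
    (hTcont : OContinuous C T)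
    (hcompl : ∀ x : ℕ → X, IsDCauchy d x → ∃ a, C.conv x a)
    (htrans : ∀ x y z : X, OrdComparable x y → OrdComparable y z → OrdComparable x z)
    (hjoin : ∀ x y : X, ¬ OrdComparable x y →
      ∃ c : X, OrdComparable x c ∧ OrdComparable y c) :
    ∃ z : X, T z = z ∧ (∀ w : X, T w = w → w = z) ∧
      ∀ x : X, C.conv (fun n => T^[n] x) z := by
  classical
  obtain ⟨φ, ⟨hφnn, hφmono, hφ0, hφlt, hφtend⟩, hφd⟩ := hcontr
  obtain ⟨x₀, hx₀⟩ := hstart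
  have dsymm := hd.2.1
  have dtri := hd.2.2.1
  have deq := hd.2.2.2
  have dnn : ∀ x y : X, 0 ≤ d x y := by
    intro x y
    have h := dtri x y x
    rw [hd.1, dsymm y x] at h
    linarith
  have hrefl : ∀ x : X, OrdComparable x x := fun x => Or.inl le_rfl
  have hcontr' : ∀ x y : X, OrdComparable x y → d (T x) (T y) ≤ φ (d x y) := by
    rintro x y (h | h)
    · exact hφd x y h
    · rw [dsymm, dsymm x y]; exact hφd y x h
  have hcomp_iter : ∀ (n : ℕ) (x y : X), OrdComparable x y →
      OrdComparable (T^[n] x) (T^[n] y) := by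
    intro n
    induction n with
    | zero => intro x y h; simpa using h
    | succ n ih =>
        intro x y h
        rw [Function.iterate_succ_apply', Function.iterate_succ_apply']
        exact hinc _ _ (ih x y h)
  have hiter : ∀ (n : ℕ) (x y : X), OrdComparable x y →
      d (T^[n] x) (T^[n] y) ≤ φ^[n] (d x y) := by
    intro n
    induction n with
    | zero => intro x y _; simp
    | succ n ih =>
        intro x y h
        rw [Function.iterate_succ_apply' T n x, Function.iterate_succ_apply' T n y,
            Function.iterate_succ_apply']
        calc d (T (T^[n] x)) (T (T^[n] y)) ≤ φ (d (T^[n] x) (T^[n] y)) :=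
              hcontr' _ _ (hcomp_iter n x y h)
          _ ≤ φ (φ^[n] (d x y)) := hφmono _ _ (dnn _ _) (ih x y h)
  have hφtend0 : ∀ t : ℝ, 0 ≤ t → Tendsto (fun n : ℕ => φ^[n] t) atTop (𝓝 0) := by
    intro t ht
    rcases eq_or_lt_of_le ht with h | h
    · have : ∀ n : ℕ, φ^[n] t = 0 := by
        intro n; rw [← h]; exact Function.iterate_fixed hφ0 n
      simp only [this]; exact tendsto_const_nhds
    · exact hφtend t h
  -- chain comparability along the orbit of x₀
  have hchain : ∀ m k : ℕ, OrdComparable (T^[m] x₀) (T^[m + k] x₀) := by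
    intro m k
    induction k with
    | zero => exact hrefl _
    | succ k ih =>
        refine htrans _ _ _ ih ?_
        have h := hcomp_iter (m + k) x₀ (T x₀) hx₀
        rw [← Function.iterate_succ_apply] at h
        exact h
  -- the orbit of x₀ is d-Cauchy
  have hstep : ∀ n : ℕ, d (T^[n] x₀) (T^[n + 1] x₀) ≤ φ^[n] (d x₀ (T x₀)) := by
    intro n
    have h := hiter n x₀ (T x₀) hx₀
    rwa [← Function.iterate_succ_apply] at h
  have hcauchy0 : IsDCauchy d (fun n => T^[n] x₀) := by
    intro ε hε
    have hδ : 0 < ε - φ ε := by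
      have := hφlt ε hε; linarith
    obtain ⟨N, hN⟩ := (Filter.eventually_atTop).1
      ((hφtend0 (d x₀ (T x₀)) (dnn _ _)).eventually
        (gt_mem_nhds hδ))
    have key : ∀ n, N ≤ n → ∀ k, d (T^[n] x₀) (T^[n + k] x₀) < ε := by
      intro n hn k
      induction k with
      | zero => rw [Nat.add_zero, hd.1]; exact hε
      | succ k ih =>
          have h1 : d (T^[n] x₀) (T^[n + 1] x₀) < ε - φ ε :=
            lt_of_le_of_lt (hstep n) (hN n hn)
          have h2 : d (T^[n + 1] x₀) (T^[n + (k + 1)] x₀) ≤ φ ε := by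
            have h3 : d (T (T^[n] x₀)) (T (T^[n + k] x₀)) ≤ φ (d (T^[n] x₀) (T^[n + k] x₀)) :=
              hcontr' _ _ (hchain n k)
            rw [← Function.iterate_succ_apply' T n x₀,
                ← Function.iterate_succ_apply' T (n + k) x₀] at h3
            have h4 : φ (d (T^[n] x₀) (T^[n + k] x₀)) ≤ φ ε :=
              hφmono _ _ (dnn _ _) (le_of_lt ih)
            have h5 : n + (k + 1) = (n + k) + 1 := by omega
            rw [h5]
            exact le_trans h3 h4
          calc d (T^[n] x₀) (T^[n + (k + 1)] x₀)
              ≤ d (T^[n] x₀) (T^[n + 1] x₀) + d (T^[n + 1] x₀) (T^[n + (k + 1)] x₀) :=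
                dtri _ _ _
            _ < (ε - φ ε) + φ ε := by linarith
            _ = ε := by ring
    refine ⟨N, fun m n hm hn => ?_⟩
    rcases le_total m n with h | h
    · obtain ⟨k, rfl⟩ : ∃ k, n = m + k := ⟨n - m, by omega⟩
      exact key m hm k
    · obtain ⟨k, rfl⟩ : ∃ k, m = n + k := ⟨m - n, by omega⟩
      rw [dsymm]
      exact key n hn k
  obtain ⟨z, hzconv⟩ := hcompl _ hcauchy0
  -- limit of an orbit is a fixed point
  have horbfix : ∀ (y a : X), C.conv (fun n => T^[n] y) a → T a = a := by
    intro y a hconv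
    have h1 : C.conv (fun n => T (T^[n] y)) (T a) :=
      hTcont _ a ⟨y, fun _ => rfl⟩ hconv
    have h2 : C.conv (fun n => T^[n + 1] y) a :=
      C.conv_subseq _ a hconv (fun n => n + 1) (fun _ _ h => Nat.add_lt_add_right h 1)
    have h3 : (fun n => T (T^[n] y)) = fun n => T^[n + 1] y := by
      funext n; rw [Function.iterate_succ_apply']
    rw [h3] at h1
    exact hsep _ _ _ h1 h2
  have hTz : T z = z := horbfix x₀ z hzconv
  -- uniqueness of fixed points
  have hfix_comp : ∀ a b : X, T a = a → T b = b → OrdComparable a b → a = b := by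
    intro a b ha hb h
    by_contra hne
    have hpos : 0 < d a b :=
      lt_of_le_of_ne (dnn a b) (fun h0 => hne (deq a b h0.symm))
    have hle : d a b ≤ φ (d a b) := by
      have := hcontr' a b h; rwa [ha, hb] at this
    exact absurd hle (not_le.mpr (hφlt _ hpos))
  have hfix : ∀ a b : X, T a = a → T b = b → a = b := by
    intro a b ha hb
    by_cases h : OrdComparable a b
    · exact hfix_comp a b ha hb h
    · obtain ⟨c, hac, hbc⟩ := hjoin a b h
      have ha' : ∀ n : ℕ, d a (T^[n] c) ≤ φ^[n] (d a c) := by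
        intro n
        have := hiter n a c hac
        rwa [Function.iterate_fixed ha n] at this
      have hb' : ∀ n : ℕ, d b (T^[n] c) ≤ φ^[n] (d b c) := by
        intro n
        have := hiter n b c hbc
        rwa [Function.iterate_fixed hb n] at this
      have hab : ∀ n : ℕ, d a b ≤ φ^[n] (d a c) + φ^[n] (d b c) := by
        intro n
        calc d a b ≤ d a (T^[n] c) + d (T^[n] c) b := dtri _ _ _
          _ ≤ φ^[n] (d a c) + φ^[n] (d b c) := by
              refine add_le_add (ha' n) ?_
              rw [dsymm]; exact hb' n
      have htend : Tendsto (fun n : ℕ => φ^[n] (d a c) + φ^[n] (d b c)) atTop (𝓝 0) := by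
        have := (hφtend0 _ (dnn a c)).add (hφtend0 _ (dnn b c))
        simpa using this
      have h0 : d a b ≤ 0 := ge_of_tendsto' htend hab
      exact deq a b (le_antisymm h0 (dnn a b))
  refine ⟨z, hTz, fun w hw => hfix w z hw hTz, fun x => ?_⟩
  -- d-convergence of every orbit to z
  have hdz : Tendsto (fun n : ℕ => d (T^[n] x) z) atTop (𝓝 0) := by
    by_cases h : OrdComparable x z
    · have hb : ∀ n : ℕ, d (T^[n] x) z ≤ φ^[n] (d x z) := by
        intro n
        have := hiter n x z h
        rwa [Function.iterate_fixed hTz n] at this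
      exact squeeze_zero (fun n => dnn _ _) hb (hφtend0 _ (dnn x z))
    · obtain ⟨c, hxc, hzc⟩ := hjoin x z h
      have hb : ∀ n : ℕ, d (T^[n] x) z ≤ φ^[n] (d x c) + φ^[n] (d c z) := by
        intro n
        calc d (T^[n] x) z ≤ d (T^[n] x) (T^[n] c) + d (T^[n] c) z := dtri _ _ _
          _ ≤ φ^[n] (d x c) + φ^[n] (d c z) := by
              refine add_le_add (hiter n x c hxc) ?_
              have := hiter n c z hzc.symm
              rwa [Function.iterate_fixed hTz n] at this
      have htend : Tendsto (fun n : ℕ => φ^[n] (d x c) + φ^[n] (d c z)) atTop (𝓝 0) := by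
        have := (hφtend0 _ (dnn x c)).add (hφtend0 _ (dnn c z))
        simpa using this
      exact squeeze_zero (fun n => dnn _ _) hb htend
  -- hence the orbit of x is d-Cauchy
  have hc : IsDCauchy d (fun n => T^[n] x) := by
    intro ε hε
    obtain ⟨N, hN⟩ := (Filter.eventually_atTop).1
      (hdz.eventually (gt_mem_nhds (half_pos hε)))
    refine ⟨N, fun m n hm hn => ?_⟩
    calc d (T^[m] x) (T^[n] x) ≤ d (T^[m] x) z + d z (T^[n] x) := dtri _ _ _
      _ < ε / 2 + ε / 2 := by
          have h1 := hN m hm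
          have h2 := hN n hn
          rw [dsymm z (T^[n] x)]
          exact add_lt_add h1 h2
      _ = ε := by ring
  obtain ⟨a, hconv⟩ := hcompl _ hc
  have hTa : T a = a := horbfix x a hconv
  rwa [hfix a z hTa hTz] at hconv
end

section
/- Matkowski's theorem: Let (X,d) be a complete metric space and T : X → X. Let f : ℝ₊⁵ → ℝ₊ be increasing in each variable and normal, meaning that g(t) := f(t,t,t,2t,2t) satisfies g(0) = 0, g(t) < t for all t > 0, t − g(t) → ∞ as t → ∞, and gⁿ(t) → 0 as n → ∞ for every t > 0. Assume that for each x ∈ X there exists n(x) ∈ ℕ, n(x) ≥ 1, such that for all y ∈ X: d(T^{n(x)}x, T^{n(x)}y) ≤ f(d(x,T^{n(x)}x), d(x,y), d(x,T^{n(x)}y), d(T^{n(x)}x,y), d(T^{n(x)}y,y)). Then T is a Picard operator (modulo d): Fix(T) is a singleton and for every x ∈ X the orbit (Tⁿx)ₙ d-converges to the unique fixed point. -/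
open Filter Topology

/-- Matkowski's fixed point theorem. -/
theorem matkowski {X : Type*} [MetricSpace X] [CompleteSpace X] [Nonempty X]
    (T : X → X) (f : ℝ → ℝ → ℝ → ℝ → ℝ → ℝ)
    (hmono : ∀ a₁ a₂ a₃ a₄ a₅ b₁ b₂ b₃ b₄ b₅ : ℝ,
      0 ≤ a₁ → 0 ≤ a₂ → 0 ≤ a₃ → 0 ≤ a₄ → 0 ≤ a₅ →
      a₁ ≤ b₁ → a₂ ≤ b₂ → a₃ ≤ b₃ → a₄ ≤ b₄ → a₅ ≤ b₅ →
      f a₁ a₂ a₃ a₄ a₅ ≤ f b₁ b₂ b₃ b₄ b₅)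
    (hg0 : f 0 0 0 0 0 = 0)
    (hglt : ∀ t : ℝ, 0 < t → f t t t (2 * t) (2 * t) < t)
    (hgdiv : Tendsto (fun t : ℝ => t - f t t t (2 * t) (2 * t)) atTop atTop)
    (hgiter : ∀ t : ℝ, 0 < t →
      Tendsto (fun k : ℕ => (fun s : ℝ => f s s s (2 * s) (2 * s))^[k] t) atTop (𝓝 0))
    (hcontr : ∀ x : X, ∃ n : ℕ, 1 ≤ n ∧ ∀ y : X,
      dist (T^[n] x) (T^[n] y) ≤
        f (dist x (T^[n] x)) (dist x y) (dist x (T^[n] y))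
          (dist (T^[n] x) y) (dist (T^[n] y) y)) :
    ∃ z : X, T z = z ∧ (∀ w : X, T w = w → w = z) ∧
      ∀ x : X, Tendsto (fun n : ℕ => T^[n] x) atTop (𝓝 z) := by
  classical
  set g : ℝ → ℝ := fun s : ℝ => f s s s (2 * s) (2 * s) with hgdef
  choose n hn1 hctr using hcontr
  -- basic facts about g
  have gmono : ∀ ⦃s t : ℝ⦄, 0 ≤ s → s ≤ t → g s ≤ g t := by
    intro s t hs hst
    simp only [hgdef]
    exact hmono s s s (2*s) (2*s) t t t (2*t) (2*t) hs hs hs (by linarith) (by linarith)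
      hst hst hst (by linarith) (by linarith)
  have g0 : g 0 = 0 := by simpa [hgdef] using hg0
  have gnn : ∀ t : ℝ, 0 ≤ t → 0 ≤ g t := by
    intro t ht
    have := gmono le_rfl ht
    rwa [g0] at this
  have glt : ∀ t : ℝ, 0 < t → g t < t := hglt
  have ginn : ∀ (i : ℕ) (t : ℝ), 0 ≤ t → 0 ≤ g^[i] t := by
    intro i
    induction i with
    | zero => intro t ht; simpa using ht
    | succ i ih =>
        intro t ht
        rw [Function.iterate_succ_apply]
        exact ih _ (gnn t ht)
  -- every orbit is bounded
  have bound : ∀ x : X, ∃ C : ℝ, 0 < C ∧ ∀ j : ℕ, dist x (T^[j] x) ≤ C := by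
    intro x
    set c : ℕ → ℝ := fun j => dist x (T^[j] x) with hc
    have hne : ∀ N : ℕ, (Finset.range (N+1)).Nonempty := fun N => ⟨0, by simp⟩
    set B : ℕ → ℝ := fun N => (Finset.range (N+1)).sup' (hne N) c with hB
    have hcB : ∀ {j N : ℕ}, j ≤ N → c j ≤ B N := by
      intro j N hj
      exact Finset.le_sup' c (Finset.mem_range.mpr (by omega))
    have hB0 : ∀ N, 0 ≤ B N := by
      intro N
      have h0 : c 0 = 0 := by simp [hc]
      have := hcB (Nat.zero_le N)
      rw [h0] at this; exact this
    have key : ∀ N : ℕ, B N - g (B N) ≤ B (n x) := by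
      intro N
      obtain ⟨j, hjmem, hjeq⟩ := Finset.exists_mem_eq_sup' (hne N) c
      have hjN : j ≤ N := by
        have := Finset.mem_range.mp hjmem; omega
      by_cases hj : j ≤ n x
      · have hBN : B N = c j := hjeq
        have h1 : B N ≤ B (n x) := by rw [hBN]; exact hcB hj
        have h2 := gnn (B N) (hB0 N)
        linarith
      · push_neg at hj
        set m := j - n x with hm
        have hmj : n x + m = j := by omega
        have hxN : n x ≤ N := by omega
        have hmN : m ≤ N := by omega
        have hiter : T^[n x] (T^[m] x) = T^[j] x := by
          rw [← Function.iterate_add_apply, hmj]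
        have h := hctr x (T^[m] x)
        rw [hiter] at h
        have h5 : dist (T^[n x] x) (T^[j] x) ≤ g (B N) := by
          refine le_trans h ?_
          simp only [hgdef]
          have b1 : dist x (T^[n x] x) ≤ B N := hcB hxN
          have b2 : dist x (T^[m] x) ≤ B N := hcB hmN
          have b3 : dist x (T^[j] x) ≤ B N := hcB hjN
          have b4 : dist (T^[n x] x) (T^[m] x) ≤ 2 * B N := by
            have := dist_triangle (T^[n x] x) x (T^[m] x)
            have h' : dist (T^[n x] x) x = dist x (T^[n x] x) := dist_comm _ _
            linarith
          have b5 : dist (T^[j] x) (T^[m] x) ≤ 2 * B N := by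
            have := dist_triangle (T^[j] x) x (T^[m] x)
            have h' : dist (T^[j] x) x = dist x (T^[j] x) := dist_comm _ _
            linarith
          exact hmono _ _ _ _ _ _ _ _ _ _ dist_nonneg dist_nonneg dist_nonneg
            dist_nonneg dist_nonneg b1 b2 b3 b4 b5
        have h6 : c j ≤ c (n x) + dist (T^[n x] x) (T^[j] x) := dist_triangle _ _ _
        have h7 : c (n x) ≤ B (n x) := hcB le_rfl
        have h8 : B N = c j := hjeq
        linarith
    obtain ⟨M, hM⟩ := eventually_atTop.mp (hgdiv.eventually_gt_atTop (B (n x)))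
    have hMg : ∀ t : ℝ, M ≤ t → B (n x) < t - g t := by
      intro t ht
      simpa [hgdef] using hM t ht
    have hfin : ∀ N : ℕ, B N ≤ max M (B (n x)) := by
      intro N
      by_cases h : M ≤ B N
      · exfalso
        have := hMg (B N) h
        have := key N
        linarith
      · push_neg at h
        exact le_max_of_le_left h.le
    refine ⟨max M (B (n x)) + 1, by have := hB0 (n x); have := le_max_right M (B (n x)); linarith, ?_⟩
    intro j
    have := hcB (le_refl j)
    have := hfin j
    linarith
  -- the contraction step for orbit bounds
  have step : ∀ (u : X) (t : ℝ), (∀ j : ℕ, dist u (T^[j] u) ≤ t) →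
      ∀ j : ℕ, dist (T^[n u] u) (T^[j] (T^[n u] u)) ≤ g t := by
    intro u t hbd j
    have hcomm : T^[j] (T^[n u] u) = T^[n u] (T^[j] u) := by
      rw [← Function.iterate_add_apply, ← Function.iterate_add_apply, Nat.add_comm]
    rw [hcomm]
    have h := hctr u (T^[j] u)
    refine le_trans h ?_
    simp only [hgdef]
    have b1 : dist u (T^[n u] u) ≤ t := hbd (n u)
    have b2 : dist u (T^[j] u) ≤ t := hbd j
    have b3 : dist u (T^[n u] (T^[j] u)) ≤ t := by
      have := hbd (n u + j)
      rwa [Function.iterate_add_apply] at this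
    have b4 : dist (T^[n u] u) (T^[j] u) ≤ 2 * t := by
      have := dist_triangle (T^[n u] u) u (T^[j] u)
      have h' : dist (T^[n u] u) u = dist u (T^[n u] u) := dist_comm _ _
      linarith
    have b5 : dist (T^[n u] (T^[j] u)) (T^[j] u) ≤ 2 * t := by
      have := dist_triangle (T^[n u] (T^[j] u)) u (T^[j] u)
      have h' : dist (T^[n u] (T^[j] u)) u = dist u (T^[n u] (T^[j] u)) := dist_comm _ _
      linarith
    exact hmono _ _ _ _ _ _ _ _ _ _ dist_nonneg dist_nonneg dist_nonneg
      dist_nonneg dist_nonneg b1 b2 b3 b4 b5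
  -- every orbit converges
  have cauchy : ∀ x : X, ∃ w : X, Tendsto (fun j : ℕ => T^[j] x) atTop (𝓝 w) := by
    intro x
    obtain ⟨C, hC0, hCb⟩ := bound x
    set z : ℕ → X := fun i => Nat.rec x (fun _ w => T^[n w] w) i with hz
    have hz0 : z 0 = x := rfl
    have hzs : ∀ i, z (i+1) = T^[n (z i)] (z i) := fun i => rfl
    have horb : ∀ i : ℕ, ∃ k : ℕ, z i = T^[k] x := by
      intro i
      induction i with
      | zero => exact ⟨0, rfl⟩
      | succ i ih =>
          obtain ⟨k, hk⟩ := ih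
          exact ⟨n (z i) + k, by rw [hzs, hk, ← Function.iterate_add_apply]⟩
    have hchain : ∀ (i j : ℕ), dist (z i) (T^[j] (z i)) ≤ g^[i] C := by
      intro i
      induction i with
      | zero => intro j; simpa [hz0] using hCb j
      | succ i ih =>
          intro j
          rw [Function.iterate_succ_apply', hzs]
          exact step (z i) (g^[i] C) ih j
    have hcs : CauchySeq (fun j : ℕ => T^[j] x) := by
      rw [Metric.cauchySeq_iff]
      intro ε hε
      obtain ⟨i, hi⟩ := ((hgiter C hC0).eventually (gt_mem_nhds (half_pos hε))).exists
      obtain ⟨k, hk⟩ := horb i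
      refine ⟨k, fun j1 hj1 j2 hj2 => ?_⟩
      have hzd : ∀ j : ℕ, k ≤ j → dist (z i) (T^[j] x) ≤ g^[i] C := by
        intro j hj
        have : T^[j] x = T^[j - k] (z i) := by
          rw [hk, ← Function.iterate_add_apply]
          congr 1; omega
        rw [this]
        exact hchain i (j - k)
      have h1 := hzd j1 hj1
      have h2 := hzd j2 hj2
      have := dist_triangle (T^[j1] x) (z i) (T^[j2] x)
      have h' : dist (T^[j1] x) (z i) = dist (z i) (T^[j1] x) := dist_comm _ _
      have hgi : g^[i] C < ε / 2 := hi
      linarith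
    exact cauchySeq_tendsto_of_complete hcs
  -- any orbit limit is a fixed point of T
  have fixlim : ∀ (x w : X), Tendsto (fun j : ℕ => T^[j] x) atTop (𝓝 w) → T w = w := by
    intro x w hw
    -- Step A : T^[n w] w = w
    have hA : T^[n w] w = w := by
      set c := dist w (T^[n w] w) with hcd
      have hc0 : 0 ≤ c := dist_nonneg
      rcases eq_or_lt_of_le hc0 with h0 | hpos
      · rw [hcd] at h0
        exact (dist_eq_zero.mp h0.symm).symm
      · exfalso
        have key : ∀ ε : ℝ, 0 < ε → c ≤ g c + ε := by
          intro ε hε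
          set ε' := min ε (c/2) with hε'
          have hε'0 : 0 < ε' := lt_min hε (by linarith)
          have hε'c : ε' ≤ c / 2 := min_le_right _ _
          have hε'ε : ε' ≤ ε := min_le_left _ _
          obtain ⟨J, hJ⟩ := eventually_atTop.mp
            (hw.eventually (Metric.ball_mem_nhds w hε'0))
          have hd1 : dist (T^[J] x) w < ε' := by
            have := hJ J le_rfl; simpa [Metric.mem_ball] using this
          have hd2 : dist (T^[n w + J] x) w < ε' := by
            have := hJ (n w + J) (by omega); simpa [Metric.mem_ball] using this
          have h := hctr w (T^[J] x)
          have hiter : T^[n w] (T^[J] x) = T^[n w + J] x :=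
            (Function.iterate_add_apply T (n w) J x).symm
          rw [hiter] at h
          have hle : dist (T^[n w] w) (T^[n w + J] x) ≤ g c := by
            refine le_trans h ?_
            simp only [hgdef]
            have b1 : dist w (T^[n w] w) ≤ c := le_of_eq hcd.symm
            have b2 : dist w (T^[J] x) ≤ c := by
              rw [dist_comm]; linarith
            have b3 : dist w (T^[n w + J] x) ≤ c := by
              rw [dist_comm]; linarith
            have b4 : dist (T^[n w] w) (T^[J] x) ≤ 2 * c := by
              have := dist_triangle (T^[n w] w) w (T^[J] x)
              have h' : dist (T^[n w] w) w = c := by rw [dist_comm, hcd]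
              have h'' : dist w (T^[J] x) ≤ c := b2
              linarith
            have b5 : dist (T^[n w + J] x) (T^[J] x) ≤ 2 * c := by
              have := dist_triangle (T^[n w + J] x) w (T^[J] x)
              have h2' : dist (T^[n w + J] x) w ≤ c := by linarith
              have h1' : dist w (T^[J] x) ≤ c := b2
              linarith
            exact hmono _ _ _ _ _ _ _ _ _ _ dist_nonneg dist_nonneg dist_nonneg
              dist_nonneg dist_nonneg b1 b2 b3 b4 b5
          have htri : c ≤ dist w (T^[n w + J] x) + dist (T^[n w + J] x) (T^[n w] w) :=
            dist_triangle _ _ _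
          have h9 : dist (T^[n w + J] x) (T^[n w] w) = dist (T^[n w] w) (T^[n w + J] x) :=
            dist_comm _ _
          have h10 : dist w (T^[n w + J] x) ≤ ε' := by
            rw [dist_comm]; exact hd2.le
          linarith
        have hgc : c ≤ g c := by
          by_contra hcon
          push_neg at hcon
          have := key ((c - g c)/2) (by linarith)
          linarith
        have := glt c hpos
        linarith
    -- Step B : T w = w
    obtain ⟨C, hC0, hCb⟩ := bound w
    have hb : ∀ (i j : ℕ), dist w (T^[j] w) ≤ g^[i] C := by
      intro i
      induction i with
      | zero => intro j; simpa using hCb j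
      | succ i ih =>
          intro j
          rw [Function.iterate_succ_apply']
          have := step w (g^[i] C) ih j
          rwa [hA] at this
      -- conclude
    have hlim := hgiter C hC0
    have hd : dist w (T^[1] w) ≤ 0 :=
      ge_of_tendsto hlim (Filter.Eventually.of_forall (fun i => hb i 1))
    have : dist w (T w) = 0 := le_antisymm (by simpa using hd) dist_nonneg
    rw [dist_eq_zero] at this
    exact this.symm
  -- uniqueness of fixed points
  have uniq : ∀ z w : X, T z = z → T w = w → w = z := by
    intro z w hz hw
    have hz' : ∀ k : ℕ, T^[k] z = z := fun k => Function.iterate_fixed hz k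
    have hw' : ∀ k : ℕ, T^[k] w = w := fun k => Function.iterate_fixed hw k
    have h := hctr z w
    rw [hz' (n z), hw' (n z)] at h
    set d := dist z w with hd
    have hd0 : 0 ≤ d := dist_nonneg
    have hdzz : dist z z = 0 := dist_self z
    have hdww : dist w w = 0 := dist_self w
    rw [hdzz, hdww] at h
    have h2 : f 0 d d d 0 ≤ g d := by
      simp only [hgdef]
      exact hmono 0 d d d 0 d d d (2*d) (2*d) le_rfl hd0 hd0 hd0 le_rfl
        hd0 le_rfl le_rfl (by linarith) (by linarith)
    have hdg : d ≤ g d := le_trans h h2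
    rcases eq_or_lt_of_le hd0 with h0 | hpos
    · rw [← dist_eq_zero, dist_comm, ← hd, ← h0]
    · exfalso; have := glt d hpos; linarith
  -- assemble
  obtain ⟨z, hz⟩ := cauchy (Classical.arbitrary X)
  have hzfix : T z = z := fixlim _ z hz
  refine ⟨z, hzfix, fun w hw => uniq z w hzfix hw, fun x => ?_⟩
  obtain ⟨w, hw⟩ := cauchy x
  have hwz : w = z := uniq z w hzfix (fixlim x w hw)
  rwa [hwz] at hw
end

section
/- Let (X,d) be a metric space with a quasi-order ≤, and let T : X → X be ≤-increasing with Y := {x ∈ X : x ≤ Tx} nonempty. Assume: for each x ∈ Y there exist n(x) ∈ ℕ, n(x) ≥ 1, and a function f(x) : ℝ₊^{2n(x)+1} → ℝ₊ increasing in each variable, such that for all y ∈ Y with x ≤ y: d(T^{n(x)}x, T^{n(x)}y) ≤ f(x)(d(x,Tx), …, d(x,T^{n(x)}x); d(x,y), d(x,Ty), …, d(x,T^{n(x)}y)). Assume further the family ((n(x), f(x)) : x ∈ Y) is iterative T-normal. Then: (i) for each x ∈ Y the sequence (Tᵐx)ₘ is increasing (Tⁱx ≤ Tʲx for i ≤ j)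 and d-Cauchy; (ii) for all x,y ∈ Y with x ≤ y, d(Tᵐx, Tᵐy) → 0 as m → ∞. -/
open Filter Topology

/-- The iterate sequence `x₀, x₁ = T^{n(x₀)}x₀, x₂ = T^{n(x₁)}x₁, …`. -/
def iterSeq {X : Type*} (T : X → X) (n : X → ℕ) (x0 : X) : ℕ → X
  | 0 => x0
  | k + 1 => T^[n (iterSeq T n x0 k)] (iterSeq T n x0 k)

/-- `g(x)(t) = f(x)(t,…,t;t,…,t)` (all `2n(x)+1` arguments equal to `t`). -/
def gFun {X : Type*} (n : X → ℕ)
    (f : (x : X) → (Fin (n x) → ℝ) → (Fin (n x + 1) → ℝ) → ℝ)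
    (x : X) (t : ℝ) : ℝ :=
  f x (fun _ => t) (fun _ => t)

/-- The composition `g(x_k) ∘ … ∘ g(x₀)` applied to `t`, where
`x_{i+1} = T^{n(x_i)} x_i`. -/
def compG {X : Type*} (T : X → X) (n : X → ℕ)
    (f : (x : X) → (Fin (n x) → ℝ) → (Fin (n x + 1) → ℝ) → ℝ)
    (x0 : X) (t : ℝ) : ℕ → ℝ
  | 0 => gFun n f x0 t
  | k + 1 => gFun n f (iterSeq T n x0 (k + 1)) (compG T n f x0 t k)

/-- The family `((n(x), f(x)) : x ∈ Y)` is iterative `T`-normal. -/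
def IterTNormal {X : Type*} (T : X → X) (Y : Set X) (n : X → ℕ)
    (f : (x : X) → (Fin (n x) → ℝ) → (Fin (n x + 1) → ℝ) → ℝ) : Prop :=
  ∀ x0 ∈ Y,
    gFun n f x0 0 = 0 ∧ (∀ t : ℝ, 0 < t → gFun n f x0 t < t) ∧
    Tendsto (fun t : ℝ => t - gFun n f x0 t) atTop atTop ∧
    ∀ t : ℝ, 0 < t → Tendsto (fun k : ℕ => compG T n f x0 t k) atTop (𝓝 0)

/-- `f(x)` is increasing in each variable (on nonnegative arguments). -/
def MonoEach {X : Type*} (n : X → ℕ)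
    (f : (x : X) → (Fin (n x) → ℝ) → (Fin (n x + 1) → ℝ) → ℝ) (x : X) : Prop :=
  ∀ (a a' : Fin (n x) → ℝ) (b b' : Fin (n x + 1) → ℝ),
    (∀ i, 0 ≤ a i) → (∀ j, 0 ≤ b j) →
    (∀ i, a i ≤ a' i) → (∀ j, b j ≤ b' j) → f x a b ≤ f x a' b'

section Aux

variable {X : Type*} [MetricSpace X] [Preorder X]

lemma aux_iter_mono (T : X → X) (hmono : ∀ x y : X, x ≤ y → T x ≤ T y) :
    ∀ (m : ℕ) (x y : X), x ≤ y → T^[m] x ≤ T^[m] y := by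
  intro m
  induction m with
  | zero => intro x y h; simpa using h
  | succ m ih =>
      intro x y h
      simp only [Function.iterate_succ_apply]
      exact ih _ _ (hmono _ _ h)

lemma aux_orbit_mono (T : X → X) (hmono : ∀ x y : X, x ≤ y → T x ≤ T y)
    {x : X} (hx : x ≤ T x) : ∀ i j : ℕ, i ≤ j → T^[i] x ≤ T^[j] x := by
  have hstep : ∀ m : ℕ, T^[m] x ≤ T^[m + 1] x := by
    intro m
    rw [Function.iterate_succ_apply]
    exact aux_iter_mono T hmono m x (T x) hx
  intro i j hij
  induction j, hij using Nat.le_induction with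
  | base => exact le_rfl
  | succ j hj ih => exact ih.trans (hstep j)

lemma aux_iterate_memY (T : X → X) (hmono : ∀ x y : X, x ≤ y → T x ≤ T y)
    {x : X} (hx : x ≤ T x) (m : ℕ) : T^[m] x ≤ T (T^[m] x) := by
  have h := aux_orbit_mono T hmono hx m (m + 1) (Nat.le_succ m)
  rwa [Function.iterate_succ_apply'] at h

/-- partial sums of iteration lengths -/
def NkSeq {X : Type*} (T : X → X) (n : X → ℕ) (x0 : X) : ℕ → ℕ
  | 0 => 0
  | k + 1 => n (iterSeq T n x0 k) + NkSeq T n x0 k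

lemma aux_iterSeq_eq (T : X → X) (n : X → ℕ) (x : X) :
    ∀ k, iterSeq T n x k = T^[NkSeq T n x k] x := by
  intro k
  induction k with
  | zero => rfl
  | succ k ih =>
      show T^[n (iterSeq T n x k)] (iterSeq T n x k) = T^[NkSeq T n x (k + 1)] x
      conv_rhs => rw [NkSeq, Function.iterate_add_apply, ← ih]

lemma aux_iterSeq_memY (T : X → X) (hmono : ∀ x y : X, x ≤ y → T x ≤ T y)
    (n : X → ℕ) {x : X} (hx : x ≤ T x) (k : ℕ) :
    iterSeq T n x k ≤ T (iterSeq T n x k) := by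
  rw [aux_iterSeq_eq]
  exact aux_iterate_memY T hmono hx _

/-- `uSeq k = g(x_{k-1}) ∘ … ∘ g(x₀) (t)`, with `uSeq 0 = t`. -/
def uSeq {X : Type*} (T : X → X) (n : X → ℕ)
    (f : (x : X) → (Fin (n x) → ℝ) → (Fin (n x + 1) → ℝ) → ℝ)
    (x0 : X) (t : ℝ) : ℕ → ℝ
  | 0 => t
  | k + 1 => gFun n f (iterSeq T n x0 k) (uSeq T n f x0 t k)

lemma aux_uSeq_succ (T : X → X) (n : X → ℕ)
    (f : (x : X) → (Fin (n x) → ℝ) → (Fin (n x + 1) → ℝ) → ℝ)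
    (x0 : X) (t : ℝ) : ∀ k, uSeq T n f x0 t (k + 1) = compG T n f x0 t k := by
  intro k
  induction k with
  | zero => rfl
  | succ k ih =>
      show gFun n f (iterSeq T n x0 (k + 1)) (uSeq T n f x0 t (k + 1)) = _
      rw [ih]; rfl

/-- Boundedness of orbits. -/
lemma aux_orbit_bounded (T : X → X) (hmono : ∀ x y : X, x ≤ y → T x ≤ T y)
    (n : X → ℕ)
    (f : (x : X) → (Fin (n x) → ℝ) → (Fin (n x + 1) → ℝ) → ℝ)
    {x : X} (hx : x ≤ T x)
    (hmx : MonoEach n f x)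
    (hcx : ∀ y : X, y ≤ T y → x ≤ y →
      dist (T^[n x] x) (T^[n x] y) ≤
        f x (fun i => dist x (T^[(i : ℕ) + 1] x)) (fun j => dist x (T^[(j : ℕ)] y)))
    (htend : Filter.Tendsto (fun t : ℝ => t - gFun n f x t) Filter.atTop Filter.atTop) :
    ∃ B : ℝ, 0 ≤ B ∧ ∀ m, dist x (T^[m] x) ≤ B := by
  set R : ℝ := ∑ j ∈ Finset.range (n x + 1), dist x (T^[j] x) with hR
  have hRle : ∀ j ≤ n x, dist x (T^[j] x) ≤ R := by
    intro j hj
    exact Finset.single_le_sum (f := fun j => dist x (T^[j] x))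
      (fun i _ => dist_nonneg) (Finset.mem_range.mpr (by omega))
  have hR0 : 0 ≤ R := Finset.sum_nonneg fun i _ => dist_nonneg
  obtain ⟨B0, hB0⟩ := Filter.eventually_atTop.mp (htend.eventually_ge_atTop (R + 1))
  refine ⟨max B0 R, le_trans hR0 (le_max_right _ _), ?_⟩
  intro m
  induction m using Nat.strong_induction_on with
  | _ m ih =>
    by_cases hm : m ≤ n x
    · exact (hRle m hm).trans (le_max_right _ _)
    · push_neg at hm
      by_contra hlt
      push_neg at hlt
      set d : ℝ := dist x (T^[m] x) with hd
      set m' : ℕ := m - n x with hm'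
      have hmm : m = n x + m' := by omega
      set y : X := T^[m'] x with hy
      have hyY : y ≤ T y := aux_iterate_memY T hmono hx m'
      have hxy : x ≤ y := by
        have := aux_orbit_mono T hmono hx 0 m' (Nat.zero_le _)
        simpa using this
      have hc := hcx y hyY hxy
      have hkey : T^[n x] y = T^[m] x := by
        rw [hy, ← Function.iterate_add_apply, ← hmm]
      have hfd : f x (fun i => dist x (T^[(i : ℕ) + 1] x))
          (fun j => dist x (T^[(j : ℕ)] y)) ≤ gFun n f x d := by
        refine hmx _ _ _ _ (fun i => dist_nonneg) (fun j => dist_nonneg) ?_ ?_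
        · intro i
          have h1 : dist x (T^[(i : ℕ) + 1] x) ≤ R := hRle _ (by omega)
          have h2 : R ≤ max B0 R := le_max_right _ _
          linarith
        · intro j
          have hjy : T^[(j : ℕ)] y = T^[(j : ℕ) + m'] x := by
            rw [hy, ← Function.iterate_add_apply]
          by_cases hjn : (j : ℕ) = n x
          · rw [hjy, hjn, ← hmm]
          · have hjlt : (j : ℕ) + m' < m := by
              have := j.isLt; omega
            have := ih ((j : ℕ) + m') hjlt
            rw [hjy]
            linarith
      have htri : d ≤ R + gFun n f x d := by
        calc d ≤ dist x (T^[n x] x) + dist (T^[n x] x) (T^[m] x) := dist_triangle _ _ _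
        _ ≤ R + gFun n f x d := by
            have h1 := hRle (n x) le_rfl
            have h2 : dist (T^[n x] x) (T^[m] x) ≤ gFun n f x d := by
              rw [← hkey]; exact hc.trans hfd
            linarith
      have hdB0 : B0 ≤ d := le_trans (le_max_left _ _) hlt.le
      have := hB0 d hdB0
      linarith

end Aux
section Joint

variable {X : Type*} [MetricSpace X] [Preorder X]

/-- The main joint induction. -/
lemma aux_joint (T : X → X) (hmono : ∀ x y : X, x ≤ y → T x ≤ T y)
    (n : X → ℕ)
    (f : (x : X) → (Fin (n x) → ℝ) → (Fin (n x + 1) → ℝ) → ℝ)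
    (hcontr : ∀ x : X, x ≤ T x → MonoEach n f x ∧
      ∀ y : X, y ≤ T y → x ≤ y →
        dist (T^[n x] x) (T^[n x] y) ≤
          f x (fun i => dist x (T^[(i : ℕ) + 1] x)) (fun j => dist x (T^[(j : ℕ)] y)))
    {x y : X} (hx : x ≤ T x) (hy : y ≤ T y) (hxy : x ≤ y) (t : ℝ)
    (htx : ∀ j, dist x (T^[j] x) ≤ t) (hty : ∀ j, dist x (T^[j] y) ≤ t) :
    ∀ k, (∀ j, dist (iterSeq T n x k) (T^[j] (iterSeq T n x k)) ≤ uSeq T n f x t k) ∧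
      (∀ j, dist (iterSeq T n x k) (T^[j] (T^[NkSeq T n x k] y)) ≤ uSeq T n f x t k) := by
  intro k
  induction k with
  | zero =>
      constructor
      · intro j; exact htx j
      · intro j
        show dist x (T^[j] (T^[0] y)) ≤ t
        simpa using hty j
  | succ k ih =>
      set xk := iterSeq T n x k with hxk
      have hxkY : xk ≤ T xk := aux_iterSeq_memY T hmono n hx k
      have hiter1 : iterSeq T n x (k + 1) = T^[n xk] xk := rfl
      have hu1 : uSeq T n f x t (k + 1) = gFun n f xk (uSeq T n f x t k) := rfl
      constructor
      · intro j
        rw [hiter1, hu1]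
        set y' := T^[j] xk with hy'
        have hy'Y : y' ≤ T y' := aux_iterate_memY T hmono hxkY j
        have hle : xk ≤ y' := by
          have := aux_orbit_mono T hmono hxkY 0 j (Nat.zero_le _)
          simpa using this
        have hc := (hcontr xk hxkY).2 y' hy'Y hle
        have hkey : T^[n xk] y' = T^[j] (T^[n xk] xk) := by
          rw [hy', ← Function.iterate_add_apply, ← Function.iterate_add_apply, add_comm]
        rw [← hkey]
        refine hc.trans ?_
        refine (hcontr xk hxkY).1 _ (fun _ => uSeq T n f x t k) _
          (fun _ => uSeq T n f x t k)
          (fun i => dist_nonneg) (fun j => dist_nonneg) ?_ ?_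
        · intro i; exact ih.1 _
        · intro l
          have : T^[(l : ℕ)] y' = T^[(l : ℕ) + j] xk := by
            rw [hy', ← Function.iterate_add_apply]
          rw [this]
          exact ih.1 _
      · intro j
        rw [hiter1, hu1]
        have hNk : NkSeq T n x (k + 1) = n xk + NkSeq T n x k := rfl
        set N := NkSeq T n x k with hN
        set y' := T^[j] (T^[N] y) with hy'
        have hy'' : y' = T^[j + N] y := by
          rw [hy', ← Function.iterate_add_apply]
        have hy'Y : y' ≤ T y' := by
          rw [hy'']; exact aux_iterate_memY T hmono hy _
        have hle : xk ≤ y' := by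
          have h1 : x ≤ T^[j] y := by
            have := aux_orbit_mono T hmono hy 0 j (Nat.zero_le _)
            simp only [Function.iterate_zero_apply] at this
            exact hxy.trans this
          have h2 : T^[N] x ≤ T^[N] (T^[j] y) := aux_iter_mono T hmono N _ _ h1
          have h3 : T^[N] (T^[j] y) = y' := by
            rw [hy'', ← Function.iterate_add_apply, add_comm]
          rw [hxk, aux_iterSeq_eq, ← hN, ← h3]
          exact h2
        have hc := (hcontr xk hxkY).2 y' hy'Y hle
        have hkey : T^[n xk] y' = T^[j] (T^[NkSeq T n x (k + 1)] y) := by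
          rw [hy'', ← Function.iterate_add_apply, hNk, ← Function.iterate_add_apply]
          congr 1
          omega
        rw [← hkey]
        refine hc.trans ?_
        refine (hcontr xk hxkY).1 _ (fun _ => uSeq T n f x t k) _
          (fun _ => uSeq T n f x t k)
          (fun i => dist_nonneg) (fun j => dist_nonneg) ?_ ?_
        · intro i; exact ih.1 _
        · intro l
          have : T^[(l : ℕ)] y' = T^[(l : ℕ) + j] (T^[N] y) := by
            rw [hy', ← Function.iterate_add_apply, ← Function.iterate_add_apply, add_assoc]
          rw [this]
          exact ih.2 _

lemma aux_NkSeq_ge (T : X → X) (n : X → ℕ) (x : X)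
    (hn : ∀ k, 1 ≤ n (iterSeq T n x k)) : ∀ k, k ≤ NkSeq T n x k := by
  intro k
  induction k with
  | zero => exact Nat.zero_le _
  | succ k ih =>
      have := hn k
      show k + 1 ≤ n (iterSeq T n x k) + NkSeq T n x k
      omega

end Joint
/-- Proposition 2: increasing Cauchy orbits, and asymptotic equality of comparable
orbits. -/
theorem increasing_cauchy_orbits {X : Type*} [MetricSpace X] [Preorder X]
    (T : X → X) (hmono : ∀ x y : X, x ≤ y → T x ≤ T y)
    (Y : Set X) (hY : Y = {x : X | x ≤ T x}) (hYne : Y.Nonempty)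
    (n : X → ℕ)
    (f : (x : X) → (Fin (n x) → ℝ) → (Fin (n x + 1) → ℝ) → ℝ)
    (hcontr : ∀ x ∈ Y, 1 ≤ n x ∧ MonoEach n f x ∧
      ∀ y ∈ Y, x ≤ y →
        dist (T^[n x] x) (T^[n x] y) ≤
          f x (fun i => dist x (T^[(i : ℕ) + 1] x)) (fun j => dist x (T^[(j : ℕ)] y)))
    (hnormal : IterTNormal T Y n f) :
    (∀ x ∈ Y, (∀ i j : ℕ, i ≤ j → T^[i] x ≤ T^[j] x) ∧
        CauchySeq (fun m : ℕ => T^[m] x)) ∧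
      ∀ x ∈ Y, ∀ y ∈ Y, x ≤ y →
        Tendsto (fun m : ℕ => dist (T^[m] x) (T^[m] y)) atTop (𝓝 0) := by
  subst hY
  have hcontr' : ∀ z : X, z ≤ T z → MonoEach n f z ∧
      ∀ y : X, y ≤ T y → z ≤ y →
        dist (T^[n z] z) (T^[n z] y) ≤
          f z (fun i => dist z (T^[(i : ℕ) + 1] z)) (fun j => dist z (T^[(j : ℕ)] y)) :=
    fun z hz => ⟨(hcontr z hz).2.1, fun y hyY hzy => (hcontr z hz).2.2 y hyY hzy⟩
  have hbdd : ∀ z : X, z ≤ T z → ∃ B : ℝ, 0 ≤ B ∧ ∀ m, dist z (T^[m] z) ≤ B := by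
    intro z hz
    exact aux_orbit_bounded T hmono n f hz (hcontr' z hz).1
      (hcontr' z hz).2 (hnormal z hz).2.2.1
  have hsmall : ∀ z : X, z ≤ T z → ∀ t : ℝ, 0 < t → ∀ ε : ℝ, 0 < ε →
      ∃ K, uSeq T n f z t (K + 1) < ε := by
    intro z hz t ht ε hε
    have htd := (hnormal z hz).2.2.2 t ht
    obtain ⟨K, hK⟩ := Metric.tendsto_atTop.mp htd ε hε
    refine ⟨K, ?_⟩
    rw [aux_uSeq_succ]
    have h := hK K le_rfl
    rw [Real.dist_eq, sub_zero] at h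
    exact lt_of_le_of_lt (le_abs_self _) h
  constructor
  · intro x hx
    replace hx : x ≤ T x := hx
    refine ⟨fun i j hij => aux_orbit_mono T hmono hx i j hij, ?_⟩
    obtain ⟨Bx, hBx0, hBx⟩ := hbdd x hx
    set t : ℝ := Bx + 1 with htdef
    have ht : 0 < t := by linarith
    have htx : ∀ j, dist x (T^[j] x) ≤ t := fun j => (hBx j).trans (by linarith)
    have hjoint := aux_joint T hmono n f hcontr' hx hx le_rfl t htx htx
    refine Metric.cauchySeq_iff'.mpr ?_
    intro ε hε
    obtain ⟨K, hK⟩ := hsmall x hx t ht ε hε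
    set N := NkSeq T n x (K + 1) with hN
    refine ⟨N, ?_⟩
    intro m hm
    have heq : T^[m] x = T^[m - N] (T^[N] x) := by
      rw [← Function.iterate_add_apply]
      congr 1
      omega
    have hiter : iterSeq T n x (K + 1) = T^[N] x := aux_iterSeq_eq T n x (K + 1)
    calc dist (T^[m] x) (T^[N] x)
        = dist (iterSeq T n x (K + 1)) (T^[m - N] (iterSeq T n x (K + 1))) := by
          rw [hiter, heq, dist_comm]
      _ ≤ uSeq T n f x t (K + 1) := (hjoint (K + 1)).1 (m - N)
      _ < ε := hK
  · intro x hx y hy hxy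
    replace hx : x ≤ T x := hx
    replace hy : y ≤ T y := hy
    obtain ⟨Bx, hBx0, hBx⟩ := hbdd x hx
    obtain ⟨By, hBy0, hBy⟩ := hbdd y hy
    set t : ℝ := Bx + dist x y + By + 1 with htdef
    have hd0 : (0 : ℝ) ≤ dist x y := dist_nonneg
    have ht : 0 < t := by linarith
    have htx : ∀ j, dist x (T^[j] x) ≤ t := fun j => (hBx j).trans (by linarith)
    have hty : ∀ j, dist x (T^[j] y) ≤ t := by
      intro j
      calc dist x (T^[j] y) ≤ dist x y + dist y (T^[j] y) := dist_triangle _ _ _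
        _ ≤ t := by have := hBy j; linarith
    have hjoint := aux_joint T hmono n f hcontr' hx hy hxy t htx hty
    refine Metric.tendsto_atTop.mpr ?_
    intro ε hε
    obtain ⟨K, hK⟩ := hsmall x hx t ht (ε / 2) (by linarith)
    set N := NkSeq T n x (K + 1) with hN
    refine ⟨N, ?_⟩
    intro m hm
    have heqx : T^[m] x = T^[m - N] (T^[N] x) := by
      rw [← Function.iterate_add_apply]; congr 1; omega
    have heqy : T^[m] y = T^[m - N] (T^[N] y) := by
      rw [← Function.iterate_add_apply]; congr 1; omega
    have hiter : iterSeq T n x (K + 1) = T^[N] x := aux_iterSeq_eq T n x (K + 1)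
    have h1 : dist (T^[m] x) (iterSeq T n x (K + 1)) ≤ uSeq T n f x t (K + 1) := by
      rw [hiter, heqx, dist_comm, ← hiter]
      exact (hjoint (K + 1)).1 (m - N)
    have h2 : dist (iterSeq T n x (K + 1)) (T^[m] y) ≤ uSeq T n f x t (K + 1) := by
      rw [heqy]
      exact (hjoint (K + 1)).2 (m - N)
    have h3 : dist (T^[m] x) (T^[m] y) < ε := by
      calc dist (T^[m] x) (T^[m] y)
          ≤ dist (T^[m] x) (iterSeq T n x (K + 1)) +
              dist (iterSeq T n x (K + 1)) (T^[m] y) := dist_triangle _ _ _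
        _ < ε := by linarith
    rw [Real.dist_eq, sub_zero, abs_of_nonneg dist_nonneg]
    exact h3
end

section
/- Let (X,d) be a metric space with a quasi-order ≤, and let T : X → X be ≤-increasing with Y := {x ∈ X : x ≤ Tx} nonempty. Assume: for each x ∈ Y there exist n(x) ∈ ℕ, n(x) ≥ 1, and a function f(x) : ℝ₊^{2n(x)+1} → ℝ₊ increasing in each variable, such that for all y ∈ Y with x ≤ y: d(T^{n(x)}x, T^{n(x)}y) ≤ f(x)(d(x,Tx), …, d(x,T^{n(x)}x); d(x,y), d(x,Ty), …, d(x,T^{n(x)}y)); and the family ((n(x), f(x)) : x ∈ Y) is iterative T-normal. In addition assume (X,d,≤) is quasi-order complete, ≤ is self-closed, and T is continuous at the left. Then: (iii) Fix(T) = {x : x = Tx} is nonempty; (iv) for every x ∈ Y, (Tⁿx)ₙ d-converges to an element of Fix(T); (v) if x,y ∈ Y are comparable (x ≤ y or y ≤ x), then (Tⁿx)ₙ and (Tⁿy)ₙ have the same limit in Fix(T). -/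
open Filter Topology

/-- Sum of exponents along the iterate sequence. -/
def expSum {X : Type*} (T : X → X) (n : X → ℕ) (x0 : X) : ℕ → ℕ
  | 0 => 0
  | k + 1 => expSum T n x0 k + n (iterSeq T n x0 k)

theorem iterSeq_eq {X : Type*} (T : X → X) (n : X → ℕ) (x0 : X) (k : ℕ) :
    iterSeq T n x0 k = T^[expSum T n x0 k] x0 := by
  induction k with
  | zero => rfl
  | succ k ih =>
    show T^[n (iterSeq T n x0 k)] (iterSeq T n x0 k) = _
    rw [show expSum T n x0 (k + 1) = expSum T n x0 k + n (iterSeq T n x0 k) from rfl,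
      Nat.add_comm, Function.iterate_add_apply, ← ih]

/-- Theorem 6: fixed points via quasi-order completeness, self-closedness and left
continuity. -/
theorem fixed_points_left_continuous {X : Type*} [MetricSpace X] [Preorder X]
    (T : X → X) (hmono : ∀ x y : X, x ≤ y → T x ≤ T y)
    (Y : Set X) (hY : Y = {x : X | x ≤ T x}) (hYne : Y.Nonempty)
    (n : X → ℕ)
    (f : (x : X) → (Fin (n x) → ℝ) → (Fin (n x + 1) → ℝ) → ℝ)
    (hcontr : ∀ x ∈ Y, 1 ≤ n x ∧ MonoEach n f x ∧
      ∀ y ∈ Y, x ≤ y →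
        dist (T^[n x] x) (T^[n x] y) ≤
          f x (fun i => dist x (T^[(i : ℕ) + 1] x)) (fun j => dist x (T^[(j : ℕ)] y)))
    (hnormal : IterTNormal T Y n f)
    (hqoc : ∀ x : ℕ → X, (∀ i j : ℕ, i ≤ j → x i ≤ x j) → CauchySeq x →
      ∃ a : X, Tendsto x atTop (𝓝 a))
    (hself : ∀ (c : X) (y : ℕ → X) (b : X), (∀ i j : ℕ, i ≤ j → y i ≤ y j) →
      Tendsto y atTop (𝓝 b) → (∀ m, c ≤ y m) → c ≤ b)
    (hleft : ∀ (y : ℕ → X) (b : X), (∀ i j : ℕ, i ≤ j → y i ≤ y j) →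
      Tendsto y atTop (𝓝 b) → (∀ m, y m ≤ b) →
      Tendsto (fun m => T (y m)) atTop (𝓝 (T b))) :
    (∃ z : X, T z = z) ∧
      (∀ x ∈ Y, ∃ z : X, T z = z ∧ Tendsto (fun m : ℕ => T^[m] x) atTop (𝓝 z)) ∧
      ∀ x ∈ Y, ∀ y ∈ Y, (x ≤ y ∨ y ≤ x) →
        ∃ z : X, T z = z ∧ Tendsto (fun m : ℕ => T^[m] x) atTop (𝓝 z) ∧
          Tendsto (fun m : ℕ => T^[m] y) atTop (𝓝 z) := by
  subst hY
  set Y : Set X := {x : X | x ≤ T x} with hYdef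
  have hmem : ∀ x : X, x ∈ Y ↔ x ≤ T x := fun x => Iff.rfl
  -- monotonicity of iterates
  have hiter_mono : ∀ (i : ℕ) (a b : X), a ≤ b → T^[i] a ≤ T^[i] b := by
    intro i
    induction i with
    | zero => intro a b h; simpa using h
    | succ i ih =>
      intro a b h
      rw [Function.iterate_succ_apply, Function.iterate_succ_apply]
      exact ih _ _ (hmono _ _ h)
  have horb_le : ∀ x ∈ Y, ∀ i j : ℕ, i ≤ j → T^[i] x ≤ T^[j] x := by
    intro x hx i j hij
    induction j, hij using Nat.le_induction with
    | base => exact le_refl _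
    | succ j hj ih =>
      refine le_trans ih ?_
      rw [Function.iterate_succ_apply]
      exact hiter_mono j _ _ hx
  have horbY : ∀ x ∈ Y, ∀ m : ℕ, T^[m] x ∈ Y := by
    intro x hx m
    rw [hmem]
    have h : T^[m] x ≤ T^[m] (T x) := hiter_mono m _ _ hx
    rwa [← Function.iterate_succ_apply, Function.iterate_succ_apply'] at h
  -- facts about g
  have hgmono : ∀ x ∈ Y, ∀ s t : ℝ, 0 ≤ s → s ≤ t → gFun n f x s ≤ gFun n f x t := by
    intro x hx s t hs hst
    exact (hcontr x hx).2.1 _ _ _ _ (fun _ => hs) (fun _ => hs) (fun _ => hst) (fun _ => hst)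
  have hgnn : ∀ x ∈ Y, ∀ t : ℝ, 0 ≤ t → 0 ≤ gFun n f x t := by
    intro x hx t ht
    have := hgmono x hx 0 t le_rfl ht
    rwa [(hnormal x hx).1] at this
  -- boundedness of orbits
  have hbdd : ∀ x ∈ Y, ∃ M : ℝ, ∀ m : ℕ, dist x (T^[m] x) ≤ M := by
    intro x hx
    obtain ⟨hn1, hmonf, hctr⟩ := hcontr x hx
    set b : ℕ → ℝ := fun m => dist x (T^[m] x) with hb
    have hbnn : ∀ m, 0 ≤ b m := fun m => dist_nonneg
    set C : ℝ := (Finset.range (n x + 1)).sup' (by simp) b with hC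
    have hbC : ∀ i ≤ n x, b i ≤ C :=
      fun i hi => Finset.le_sup' b (Finset.mem_range.mpr (Nat.lt_succ_of_le hi))
    obtain ⟨t₁, ht₁⟩ := (tendsto_atTop.mp (hnormal x hx).2.2.1 (C + 1)).exists_forall_of_atTop
    refine ⟨max t₁ C, fun m => ?_⟩
    set c : ℝ := (Finset.range (m + 1)).sup' (by simp) b with hc
    have hcnn : 0 ≤ c := le_trans (hbnn 0) (Finset.le_sup' b (by simp))
    have hlec : ∀ i ≤ m, b i ≤ c :=
      fun i hi => Finset.le_sup' b (Finset.mem_range.mpr (Nat.lt_succ_of_le hi))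
    have hkey : c ≤ C + gFun n f x c := by
      refine Finset.sup'_le _ _ fun i hi => ?_
      rw [Finset.mem_range, Nat.lt_succ_iff] at hi
      by_cases hin : i ≤ n x
      · exact le_trans (hbC i hin) (le_add_of_nonneg_right (hgnn x hx c hcnn))
      · push_neg at hin
        set j : ℕ := i - n x with hj
        have hij : i = n x + j := by omega
        have hyY : T^[j] x ∈ Y := horbY x hx j
        have h1 : b i ≤ b (n x) + dist (T^[n x] x) (T^[n x] (T^[j] x)) := by
          have heq : T^[i] x = T^[n x] (T^[j] x) := by rw [hij, Function.iterate_add_apply]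
          show dist x (T^[i] x) ≤ dist x (T^[n x] x) + _
          rw [heq]
          exact dist_triangle _ _ _
        have h2 : dist (T^[n x] x) (T^[n x] (T^[j] x)) ≤ gFun n f x c := by
          refine le_trans (hctr _ hyY (horb_le x hx 0 j (Nat.zero_le j))) ?_
          refine hmonf _ _ _ _ (fun _ => dist_nonneg) (fun _ => dist_nonneg)
            (fun i' => ?_) (fun j' => ?_)
          · exact hlec _ (by omega)
          · rw [← Function.iterate_add_apply]
            exact hlec _ (by have := j'.isLt; omega)
        calc b i ≤ b (n x) + dist (T^[n x] x) (T^[n x] (T^[j] x)) := h1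
          _ ≤ C + gFun n f x c := add_le_add (hbC _ le_rfl) h2
    have : c ≤ t₁ ⊔ C := by
      by_contra hcon
      push_neg at hcon
      have h1 : t₁ ≤ c := le_of_lt (lt_of_le_of_lt (le_max_left _ _) hcon)
      have := ht₁ c h1
      have : c - gFun n f x c ≤ C := by linarith [hgnn x hx c hcnn]
      linarith [ht₁ c h1]
    exact le_trans (hlec m le_rfl) this
  -- the orbit diameter function
  set A : X → ℝ := fun x => ⨆ m : ℕ, dist x (T^[m] x) with hA
  have hAbdd : ∀ x ∈ Y, BddAbove (Set.range fun m : ℕ => dist x (T^[m] x)) := by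
    intro x hx
    obtain ⟨M, hM⟩ := hbdd x hx
    exact ⟨M, by rintro r ⟨m, rfl⟩; exact hM m⟩
  have hAle : ∀ x ∈ Y, ∀ m : ℕ, dist x (T^[m] x) ≤ A x :=
    fun x hx m => le_ciSup (hAbdd x hx) m
  have hAnn : ∀ x ∈ Y, 0 ≤ A x := by
    intro x hx
    have := hAle x hx 0
    simpa using this
  have hAsup : ∀ x : X, ∀ K : ℝ, (∀ m : ℕ, dist x (T^[m] x) ≤ K) → A x ≤ K :=
    fun x K h => ciSup_le h
  -- the key contraction estimate
  have key : ∀ x ∈ Y, ∀ w ∈ Y, x ≤ w → ∀ M : ℝ,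
      (∀ i : ℕ, dist x (T^[i] x) ≤ M) → (∀ j : ℕ, j ≤ n x → dist x (T^[j] w) ≤ M) →
      dist (T^[n x] x) (T^[n x] w) ≤ gFun n f x M := by
    intro x hx w hw hxw M h1 h2
    obtain ⟨hn1, hmonf, hctr⟩ := hcontr x hx
    refine le_trans (hctr w hw hxw) ?_
    exact hmonf _ _ _ _ (fun _ => dist_nonneg) (fun _ => dist_nonneg)
      (fun i => h1 _) (fun j => h2 _ (Nat.lt_succ_iff.mp j.isLt))
  -- iterSeq basic facts
  have hseqY : ∀ x ∈ Y, ∀ k : ℕ, iterSeq T n x k ∈ Y := by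
    intro x hx k
    rw [iterSeq_eq]
    exact horbY x hx _
  have hexp_ge : ∀ x ∈ Y, ∀ k : ℕ, k ≤ expSum T n x k := by
    intro x hx k
    induction k with
    | zero => exact Nat.zero_le _
    | succ k ih =>
      have := (hcontr _ (hseqY x hx k)).1
      show k + 1 ≤ expSum T n x k + n (iterSeq T n x k)
      omega
  -- A step inequality
  have hAstep : ∀ x ∈ Y, A (T^[n x] x) ≤ gFun n f x (A x) := by
    intro x hx
    refine hAsup _ _ fun m => ?_
    have hcomm : T^[m] (T^[n x] x) = T^[n x] (T^[m] x) := by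
      rw [← Function.iterate_add_apply, ← Function.iterate_add_apply, Nat.add_comm]
    rw [hcomm]
    refine key x hx (T^[m] x) (horbY x hx m) (horb_le x hx 0 m (Nat.zero_le m)) (A x)
      (hAle x hx) fun j hj => ?_
    rw [← Function.iterate_add_apply]
    exact hAle x hx _
  -- comparison with compG
  have hcomp_bound : ∀ x ∈ Y, ∀ (u : ℕ → ℝ) (t : ℝ), (∀ k, 0 ≤ u k) → u 0 ≤ t →
      (∀ k, u (k + 1) ≤ gFun n f (iterSeq T n x k) (u k)) →
      ∀ k, u (k + 1) ≤ compG T n f x t k := by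
    intro x hx u t hnn h0 hstep k
    induction k with
    | zero => exact le_trans (hstep 0) (hgmono x hx (u 0) t (hnn 0) h0)
    | succ k ih =>
      refine le_trans (hstep (k + 1)) ?_
      exact hgmono _ (hseqY x hx (k + 1)) _ _ (hnn (k + 1)) ih
  -- a general convergence device
  have hconv : ∀ x ∈ Y, ∀ u : ℕ → ℝ, (∀ k, 0 ≤ u k) →
      (∀ k, u (k + 1) ≤ gFun n f (iterSeq T n x k) (u k)) →
      0 < u 0 → Tendsto u atTop (𝓝 0) := by
    intro x hx u hnn hstep h0
    have hc := (hnormal x hx).2.2.2 (u 0) h0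
    have hsq : Tendsto (fun k => u (k + 1)) atTop (𝓝 0) := by
      refine squeeze_zero (fun k => hnn (k + 1)) (fun k => ?_) hc
      exact hcomp_bound x hx u (u 0) hnn le_rfl hstep k
    exact (tendsto_add_atTop_iff_nat 1).mp hsq
  -- Main lemma: every orbit from Y converges to a fixed point
  have main : ∀ x ∈ Y, ∃ z : X, T z = z ∧ Tendsto (fun m : ℕ => T^[m] x) atTop (𝓝 z) ∧
      ∀ m : ℕ, T^[m] x ≤ z := by
    intro x hx
    -- A along the iterate sequence tends to 0
    have hA0 : Tendsto (fun k => A (iterSeq T n x k)) atTop (𝓝 0) := by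
      by_cases hA00 : A x = 0
      · have hfix : T x = x := by
          have h1 : dist x (T^[1] x) ≤ A x := hAle x hx 1
          have : dist x (T x) = 0 := by
            have := dist_nonneg (x := x) (y := T x)
            simp only [Function.iterate_one] at h1
            linarith [hA00 ▸ h1]
          exact (dist_eq_zero.mp this).symm
        have hconst : ∀ k, iterSeq T n x k = x := by
          intro k
          induction k with
          | zero => rfl
          | succ k ih =>
            show T^[n (iterSeq T n x k)] (iterSeq T n x k) = x
            rw [ih, Function.iterate_fixed hfix]
        simp only [hconst, hA00]
        exact tendsto_const_nhds
      · have hApos : 0 < A x := lt_of_le_of_ne (hAnn x hx) (Ne.symm hA00)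
        refine hconv x hx (fun k => A (iterSeq T n x k)) (fun k => hAnn _ (hseqY x hx k))
          (fun k => ?_) (by exact hApos)
        show A (T^[n (iterSeq T n x k)] (iterSeq T n x k)) ≤ _
        exact hAstep _ (hseqY x hx k)
    -- the orbit is Cauchy
    have hcauchy : CauchySeq (fun m : ℕ => T^[m] x) := by
      refine Metric.cauchySeq_iff'.mpr fun ε hε => ?_
      obtain ⟨k, hk⟩ := (Metric.tendsto_atTop.mp hA0 ε hε) |>.imp (fun k h => h) |> fun h => h
      have hk' := hk k le_rfl
      rw [Real.dist_eq, sub_zero, abs_of_nonneg (hAnn _ (hseqY x hx k))] at hk'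
      refine ⟨expSum T n x k, fun m hm => ?_⟩
      have heq : T^[m] x = T^[m - expSum T n x k] (iterSeq T n x k) := by
        rw [iterSeq_eq, ← Function.iterate_add_apply]
        congr 1
        omega
      rw [heq, iterSeq_eq, ← iterSeq_eq, dist_comm]
      exact lt_of_le_of_lt (hAle _ (hseqY x hx k) _) hk'
    obtain ⟨z, hz⟩ := hqoc _ (horb_le x hx) hcauchy
    have hshift : ∀ m : ℕ, Tendsto (fun j : ℕ => T^[m + j] x) atTop (𝓝 z) := by
      intro m
      have := (tendsto_add_atTop_iff_nat m).mpr hz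
      refine this.congr fun j => ?_
      rw [Nat.add_comm]
    have hub : ∀ m : ℕ, T^[m] x ≤ z := by
      intro m
      refine hself (T^[m] x) (fun j => T^[m + j] x) z
        (fun i j hij => horb_le x hx _ _ (by omega)) (hshift m)
        (fun j => horb_le x hx m (m + j) (by omega))
    have hTz : T z = z := by
      have h1 : Tendsto (fun m : ℕ => T (T^[m] x)) atTop (𝓝 (T z)) :=
        hleft _ z (horb_le x hx) hz hub
      have h2 : Tendsto (fun m : ℕ => T (T^[m] x)) atTop (𝓝 z) := by
        have := (tendsto_add_atTop_iff_nat 1).mpr hz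
        refine this.congr fun m => ?_
        rw [Function.iterate_succ_apply']
      exact tendsto_nhds_unique h1 h2
    exact ⟨z, hTz, hz, hub⟩
  -- Attraction lemma: if z is a fixed point dominating the orbit of x, the orbit converges to z
  have attract : ∀ x ∈ Y, ∀ z : X, T z = z → (∀ m : ℕ, T^[m] x ≤ z) →
      Tendsto (fun m : ℕ => T^[m] x) atTop (𝓝 z) := by
    intro x hx z hTz hub
    have hzY : z ∈ Y := by rw [hmem, hTz]
    have hzfix : ∀ j : ℕ, T^[j] z = z := fun j => Function.iterate_fixed hTz j
    set u : ℕ → ℝ := fun k => max (A (iterSeq T n x k)) (dist (iterSeq T n x k) z) with hu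
    have hunn : ∀ k, 0 ≤ u k := fun k => le_trans dist_nonneg (le_max_right _ _)
    have hseq_le_z : ∀ k, iterSeq T n x k ≤ z := by
      intro k
      rw [iterSeq_eq]
      exact hub _
    have hstep : ∀ k, u (k + 1) ≤ gFun n f (iterSeq T n x k) (u k) := by
      intro k
      set w : X := iterSeq T n x k with hw
      have hwY : w ∈ Y := hseqY x hx k
      have hstep1 : A (iterSeq T n x (k + 1)) ≤ gFun n f w (u k) := by
        refine le_trans (hAstep w hwY) (hgmono w hwY _ _ (hAnn w hwY) (le_max_left _ _))
      have hstep2 : dist (iterSeq T n x (k + 1)) z ≤ gFun n f w (u k) := by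
        have heq : iterSeq T n x (k + 1) = T^[n w] w := rfl
        rw [heq, ← show T^[n w] z = z from hzfix (n w)]
        refine key w hwY z hzY (hseq_le_z k) (u k)
          (fun i => le_trans (hAle w hwY i) (le_max_left _ _)) fun j hj => ?_
        rw [hzfix j]
        exact le_max_right _ _
      exact max_le hstep1 hstep2
    have hu0 : Tendsto u atTop (𝓝 0) := by
      by_cases h0 : u 0 = 0
      · have hdz : dist x z = 0 := by
          have : dist (iterSeq T n x 0) z ≤ u 0 := le_max_right _ _
          have hd := dist_nonneg (x := iterSeq T n x 0) (y := z)
          have : dist (iterSeq T n x 0) z = 0 := le_antisymm (h0 ▸ this) hd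
          exact this
        have hA00 : A x = 0 := by
          have : A (iterSeq T n x 0) ≤ u 0 := le_max_left _ _
          have := le_antisymm (h0 ▸ this) (by exact hAnn x hx)
          exact this
        have hfix : T x = x := by
          have h1 : dist x (T^[1] x) ≤ A x := hAle x hx 1
          have : dist x (T x) = 0 := by
            have := dist_nonneg (x := x) (y := T x)
            simp only [Function.iterate_one] at h1
            linarith [hA00 ▸ h1]
          exact (dist_eq_zero.mp this).symm
        have hxz : x = z := dist_eq_zero.mp hdz
        have hconst : ∀ k, iterSeq T n x k = x := by
          intro k
          induction k with
          | zero => rfl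
          | succ k ih =>
            show T^[n (iterSeq T n x k)] (iterSeq T n x k) = x
            rw [ih, Function.iterate_fixed hfix]
        have : u = fun _ => 0 := by
          funext k
          simp [hu, hconst, hA00, hdz]
        rw [this]
        exact tendsto_const_nhds
      · exact hconv x hx u hunn hstep (lt_of_le_of_ne (hunn 0) (Ne.symm h0))
    refine Metric.tendsto_atTop.mpr fun ε hε => ?_
    obtain ⟨k, hk⟩ := Metric.tendsto_atTop.mp hu0 (ε / 2) (by linarith)
    have hk' := hk k le_rfl
    rw [Real.dist_eq, sub_zero, abs_of_nonneg (hunn k)] at hk'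
    refine ⟨expSum T n x k, fun m hm => ?_⟩
    have heq : T^[m] x = T^[m - expSum T n x k] (iterSeq T n x k) := by
      rw [iterSeq_eq, ← Function.iterate_add_apply]
      congr 1
      omega
    calc dist (T^[m] x) z
        ≤ dist (T^[m] x) (iterSeq T n x k) + dist (iterSeq T n x k) z := dist_triangle _ _ _
      _ ≤ A (iterSeq T n x k) + dist (iterSeq T n x k) z := by
          rw [heq, dist_comm]
          exact add_le_add (hAle _ (hseqY x hx k) _) le_rfl
      _ ≤ u k + u k := add_le_add (le_max_left _ _) (le_max_right _ _)
      _ < ε := by linarith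
  -- Assemble the three conclusions
  obtain ⟨x₀, hx₀⟩ := hYne
  obtain ⟨z₀, hz₀, _, _⟩ := main x₀ hx₀
  refine ⟨⟨z₀, hz₀⟩, fun x hx => ?_, fun x hx y hy hcmp => ?_⟩
  · obtain ⟨z, hz, hconv', _⟩ := main x hx
    exact ⟨z, hz, hconv'⟩
  · rcases hcmp with hxy | hyx
    · obtain ⟨z, hz, hconvy, huby⟩ := main y hy
      have hubx : ∀ m : ℕ, T^[m] x ≤ z :=
        fun m => le_trans (hiter_mono m x y hxy) (huby m)
      exact ⟨z, hz, attract x hx z hz hubx, hconvy⟩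
    · obtain ⟨z, hz, hconvx, hubx⟩ := main x hx
      have huby : ∀ m : ℕ, T^[m] y ≤ z :=
        fun m => le_trans (hiter_mono m y x hyx) (hubx m)
      exact ⟨z, hz, hconvx, attract y hy z hz huby⟩
end

section
/- Let (X,d) be a metric space with a partial order ≤ (an antisymmetric quasi-order), and let T : X → X be ≤-increasing with Y := {x ∈ X : x ≤ Tx} nonempty. Assume: for each x ∈ Y there exist n(x) ∈ ℕ, n(x) ≥ 1, and a function f(x) : ℝ₊^{2n(x)+1} → ℝ₊ increasing in each variable, such that for all y ∈ Y with x ≤ y: d(T^{n(x)}x, T^{n(x)}y) ≤ f(x)(d(x,Tx), …, d(x,T^{n(x)}x); d(x,y), d(x,Ty), …, d(x,T^{n(x)}y)); and the family ((n(x), f(x)) : x ∈ Y) is iterative T-normal. In addition assume (X,d,≤) is quasi-order complete and ≤ is interval closed. Then: (iii) Fix(T) is nonempty; (iv) for every x ∈ Y, (Tⁿx)ₙ d-converges to an element of Fix(T); (v) if x,y ∈ Y are comparable, (Tⁿx)ₙ and (Tⁿy)ₙ have the same limit in Fix(T); and (vi) for each x ∈ Y, the limit z = limₙ Tⁿx ∈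 Fix(T) satisfies x ≤ z, and z ≤ y with y ∈ Y implies z = y. -/
open Filter Topology

/-- Cumulative exponents of the iterate sequence. -/
def Nexp {X : Type*} (T : X → X) (n : X → ℕ) (x0 : X) : ℕ → ℕ
  | 0 => 0
  | k + 1 => Nexp T n x0 k + n (iterSeq T n x0 k)

/-- The comparison sequence `r 0 = r0`, `r (k+1) = g(x_k)(r k)`. -/
def rseq {X : Type*} (T : X → X) (n : X → ℕ)
    (f : (x : X) → (Fin (n x) → ℝ) → (Fin (n x + 1) → ℝ) → ℝ)
    (x0 : X) (r0 : ℝ) : ℕ → ℝ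
  | 0 => r0
  | k + 1 => gFun n f (iterSeq T n x0 k) (rseq T n f x0 r0 k)

section Aux
set_option linter.unusedSectionVars false
variable {X : Type*} [MetricSpace X] [PartialOrder X] {T : X → X}

lemma myOrbitMono (hmono : ∀ x y : X, x ≤ y → T x ≤ T y) {x : X} (hx : x ≤ T x) :
    Monotone fun m => T^[m] x := by
  apply monotone_nat_of_le_succ
  intro m
  induction m with
  | zero => simpa using hx
  | succ m ih =>
    rw [Function.iterate_succ_apply', Function.iterate_succ_apply']
    exact hmono _ _ ih

lemma myOrbitY (hmono : ∀ x y : X, x ≤ y → T x ≤ T y) {x : X} (hx : x ≤ T x) (m : ℕ) :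
    T^[m] x ≤ T (T^[m] x) := by
  have := myOrbitMono hmono hx (Nat.le_succ m)
  simpa [Function.iterate_succ_apply'] using this

lemma myIterLe (hmono : ∀ x y : X, x ≤ y → T x ≤ T y) {x y : X} (h : x ≤ y) (m : ℕ) :
    T^[m] x ≤ T^[m] y := by
  induction m with
  | zero => simpa using h
  | succ m ih =>
    rw [Function.iterate_succ_apply', Function.iterate_succ_apply']
    exact hmono _ _ ih

lemma myOrbitBdd {n : X → ℕ}
    {f : (x : X) → (Fin (n x) → ℝ) → (Fin (n x + 1) → ℝ) → ℝ}
    (hmono : ∀ x y : X, x ≤ y → T x ≤ T y) {x : X} (hx : x ≤ T x)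
    (hmonof : MonoEach n f x)
    (hc : ∀ y : X, y ≤ T y → x ≤ y → dist (T^[n x] x) (T^[n x] y) ≤
      f x (fun i => dist x (T^[(i : ℕ) + 1] x)) (fun j => dist x (T^[(j : ℕ)] y)))
    (htend : Tendsto (fun t : ℝ => t - gFun n f x t) atTop atTop) :
    ∃ ρ : ℝ, 0 ≤ ρ ∧ ∀ m, dist x (T^[m] x) ≤ ρ := by
  set C := dist x (T^[n x] x) with hC
  obtain ⟨B, hB⟩ : ∃ B : ℝ, ∀ t ≥ B, C + 1 ≤ t - gFun n f x t :=
    eventually_atTop.mp (htend.eventually_ge_atTop (C + 1))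
  set K : ℕ → ℝ := fun m =>
    (Finset.range (m + 1)).sup' Finset.nonempty_range_add_one (fun k => dist x (T^[k] x)) with hK
  have hle : ∀ m k : ℕ, k ≤ m → dist x (T^[k] x) ≤ K m := by
    intro m k hkm
    exact Finset.le_sup' (fun k => dist x (T^[k] x)) (Finset.mem_range.mpr (Nat.lt_succ_of_le hkm))
  have hK0 : ∀ m, 0 ≤ K m := by
    intro m
    have := hle m 0 (Nat.zero_le m)
    simpa using this
  have horbY : ∀ m : ℕ, T^[m] x ≤ T (T^[m] x) := fun m => myOrbitY hmono hx m
  have key : ∀ m, K m ≤ max (K (n x)) (max B 0) := by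
    intro m
    by_contra hcon
    push_neg at hcon
    have h1 : K (n x) < K m := lt_of_le_of_lt (le_max_left _ _) hcon
    have h2 : B ≤ K m := le_of_lt (lt_of_le_of_lt (le_max_of_le_right (le_max_left _ _)) hcon)
    have hstep : K m ≤ max (K (n x)) (C + gFun n f x (K m)) := by
      apply Finset.sup'_le
      intro k hk
      rcases le_or_gt k (n x) with hkn | hkn
      · exact le_trans (hle (n x) k hkn) (le_max_left _ _)
      · refine le_trans ?_ (le_max_right _ _)
        have hkm : k ≤ m := Nat.lt_succ_iff.mp (Finset.mem_range.mp hk)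
        have hiter : T^[k] x = T^[n x] (T^[k - n x] x) := by
          rw [← Function.iterate_add_apply, Nat.add_sub_cancel' (le_of_lt hkn)]
        have htri : dist x (T^[k] x) ≤ C + dist (T^[n x] x) (T^[k] x) :=
          dist_triangle x (T^[n x] x) (T^[k] x)
        have hy : x ≤ T^[k - n x] x := by
          have := myOrbitMono hmono hx (Nat.zero_le (k - n x))
          simpa using this
        have hcy := hc (T^[k - n x] x) (horbY _) hy
        rw [← hiter] at hcy
        have hbound : f x (fun i => dist x (T^[(i : ℕ) + 1] x))
            (fun j => dist x (T^[(j : ℕ)] (T^[k - n x] x))) ≤ gFun n f x (K m) := by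
          apply hmonof
          · intro i; exact dist_nonneg
          · intro j; exact dist_nonneg
          · intro i
            exact hle m ((i : ℕ) + 1) (le_trans (Nat.succ_le_of_lt (lt_trans i.2 hkn)) hkm)
          · intro j
            rw [← Function.iterate_add_apply]
            apply hle m ((j : ℕ) + (k - n x))
            have : (j : ℕ) ≤ n x := Nat.lt_succ_iff.mp j.2
            omega
        linarith [le_trans hcy hbound]
    have h3 : K m ≤ C + gFun n f x (K m) :=
      (le_max_iff.mp hstep).resolve_left (not_le.mpr h1)
    have h4 := hB (K m) h2
    linarith
  refine ⟨max (K (n x)) (max B 0), le_trans (hK0 (n x)) (le_max_left _ _), fun m => ?_⟩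
  exact le_trans (hle m m le_rfl) (key m)

lemma pairLimit {n : X → ℕ}
    {f : (x : X) → (Fin (n x) → ℝ) → (Fin (n x + 1) → ℝ) → ℝ}
    (hmono : ∀ x y : X, x ≤ y → T x ≤ T y)
    (hcontr : ∀ x ∈ {x : X | x ≤ T x}, 1 ≤ n x ∧ MonoEach n f x ∧
      ∀ y ∈ {x : X | x ≤ T x}, x ≤ y →
        dist (T^[n x] x) (T^[n x] y) ≤
          f x (fun i => dist x (T^[(i : ℕ) + 1] x)) (fun j => dist x (T^[(j : ℕ)] y)))
    (hnormal : IterTNormal T {x : X | x ≤ T x} n f)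
    (hqoc : ∀ x : ℕ → X, (∀ i j : ℕ, i ≤ j → x i ≤ x j) → CauchySeq x →
      ∃ a : X, Tendsto x atTop (𝓝 a))
    {x w : X} (hx : x ≤ T x) (hw : w ≤ T w) (hxw : x ≤ w) :
    ∃ z : X, Tendsto (fun m : ℕ => T^[m] x) atTop (𝓝 z) ∧
      Tendsto (fun m : ℕ => T^[m] w) atTop (𝓝 z) := by
  have hit : ∀ k, iterSeq T n x k = T^[Nexp T n x k] x := by
    intro k
    induction k with
    | zero => rfl
    | succ k ih =>
      have h1 : iterSeq T n x (k + 1) = T^[n (iterSeq T n x k)] (T^[Nexp T n x k] x) := by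
        rw [← ih]; rfl
      rw [h1, ← Function.iterate_add_apply]
      have hN : Nexp T n x (k + 1) = n (iterSeq T n x k) + Nexp T n x k := by
        show Nexp T n x k + n (iterSeq T n x k) = _
        omega
      rw [hN]
  have hitY : ∀ k, iterSeq T n x k ≤ T (iterSeq T n x k) := by
    intro k
    rw [hit k]
    exact myOrbitY hmono hx _
  have hn1 : ∀ k, 1 ≤ n (iterSeq T n x k) := fun k => (hcontr _ (hitY k)).1
  obtain ⟨ρx, hρx0, hρx⟩ :=
    myOrbitBdd hmono hx (hcontr x hx).2.1 (fun y hy hxy => (hcontr x hx).2.2 y hy hxy)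
      (hnormal x hx).2.2.1
  obtain ⟨ρw, hρw0, hρw⟩ :=
    myOrbitBdd hmono hw (hcontr w hw).2.1 (fun y hy hxy => (hcontr w hw).2.2 y hy hxy)
      (hnormal w hw).2.2.1
  set r0 : ℝ := ρx + dist x w + ρw + 1 with hr0def
  have hr0pos : 0 < r0 := by
    have := dist_nonneg (x := x) (y := w)
    rw [hr0def]; linarith
  set r : ℕ → ℝ := rseq T n f x r0 with hrdef
  have hrcomp : ∀ k, r (k + 1) = compG T n f x r0 k := by
    intro k
    induction k with
    | zero => rfl
    | succ k ih =>
      show gFun n f (iterSeq T n x (k + 1)) (r (k + 1)) = _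
      rw [ih]
      rfl
  have hrlim : Tendsto r atTop (𝓝 0) := by
    have h1 := (hnormal x hx).2.2.2 r0 hr0pos
    have h2 : Tendsto (fun k : ℕ => r (k + 1)) atTop (𝓝 0) := by
      have he : (fun k : ℕ => r (k + 1)) = fun k => compG T n f x r0 k := funext hrcomp
      rw [he]; exact h1
    exact (tendsto_add_atTop_iff_nat 1).mp h2
  -- the main inductive claim
  have claim : ∀ k, (∀ m, dist (iterSeq T n x k) (T^[m] (iterSeq T n x k)) ≤ r k) ∧
      (∀ j, Nexp T n x k ≤ j → dist (iterSeq T n x k) (T^[j] w) ≤ r k) := by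
    intro k
    induction k with
    | zero =>
      constructor
      · intro m
        show dist x (T^[m] x) ≤ r0
        have h1 := hρx m
        have h2 := dist_nonneg (x := x) (y := w)
        rw [hr0def]; linarith
      · intro j _
        show dist x (T^[j] w) ≤ r0
        have h1 := dist_triangle x w (T^[j] w)
        have h2 := hρw j
        rw [hr0def]; linarith
    | succ k ih =>
      obtain ⟨ih1, ih2⟩ := ih
      have hrk0 : 0 ≤ r k := by
        have := ih1 0
        simpa using this
      set xk := iterSeq T n x k with hxkdef
      have hmemk : xk ≤ T xk := hitY k
      have hmf := (hcontr xk hmemk).2.1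
      have hcc := (hcontr xk hmemk).2.2
      have key : ∀ y : X, y ≤ T y → xk ≤ y →
          (∀ j : ℕ, j ≤ n xk → dist xk (T^[j] y) ≤ r k) →
          dist (T^[n xk] xk) (T^[n xk] y) ≤ r (k + 1) := by
        intro y hy hxy hb
        have h1 := hcc y hy hxy
        have h2 : f xk (fun i => dist xk (T^[(i : ℕ) + 1] xk))
            (fun j => dist xk (T^[(j : ℕ)] y)) ≤ f xk (fun _ => r k) (fun _ => r k) := by
          apply hmf
          · intro i; exact dist_nonneg
          · intro j; exact dist_nonneg
          · intro i; exact ih1 _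
          · intro j; exact hb _ (Nat.lt_succ_iff.mp j.2)
        have h3 : r (k + 1) = gFun n f xk (r k) := rfl
        rw [h3]
        exact le_trans h1 h2
      constructor
      · intro m
        have hform : T^[m] (iterSeq T n x (k + 1)) = T^[n xk] (T^[m] xk) := by
          show T^[m] (T^[n xk] xk) = _
          rw [← Function.iterate_add_apply, ← Function.iterate_add_apply, Nat.add_comm]
        have hstart : iterSeq T n x (k + 1) = T^[n xk] xk := rfl
        rw [hform, hstart]
        apply key
        · exact myOrbitY hmono hmemk m
        · have := myOrbitMono hmono hmemk (Nat.zero_le m)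
          simpa using this
        · intro j hj
          rw [← Function.iterate_add_apply]
          exact ih1 _
      · intro j hj
        have hNdef : Nexp T n x (k + 1) = Nexp T n x k + n xk := rfl
        have hnk_le : n xk ≤ j := by omega
        have hiterj : T^[j] w = T^[n xk] (T^[j - n xk] w) := by
          rw [← Function.iterate_add_apply, Nat.add_sub_cancel' hnk_le]
        have hstart : iterSeq T n x (k + 1) = T^[n xk] xk := rfl
        rw [hiterj, hstart]
        apply key
        · exact myOrbitY hmono hw _
        · calc xk = T^[Nexp T n x k] x := hit k
            _ ≤ T^[Nexp T n x k] w := myIterLe hmono hxw _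
            _ ≤ T^[j - n xk] w := myOrbitMono hmono hw (by omega)
        · intro j' hj'
          rw [← Function.iterate_add_apply]
          apply ih2
          omega
  have hdk : ∀ k p, Nexp T n x k ≤ p → dist (iterSeq T n x k) (T^[p] x) ≤ r k := by
    intro k p hp
    have h1 : T^[p] x = T^[p - Nexp T n x k] (iterSeq T n x k) := by
      rw [hit k, ← Function.iterate_add_apply, Nat.sub_add_cancel hp]
    rw [h1]
    exact (claim k).1 _
  have hdw : ∀ k p, Nexp T n x k ≤ p → dist (iterSeq T n x k) (T^[p] w) ≤ r k :=
    fun k p hp => (claim k).2 p hp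
  have hcx : CauchySeq (fun m : ℕ => T^[m] x) := by
    rw [Metric.cauchySeq_iff]
    intro ε hε
    obtain ⟨k, hk⟩ := (hrlim.eventually_lt_const (by linarith : (0 : ℝ) < ε / 2)).exists
    refine ⟨Nexp T n x k, fun p hp q hq => ?_⟩
    have h1 := hdk k p hp
    have h2 := hdk k q hq
    have h3 := dist_triangle_left (T^[p] x) (T^[q] x) (iterSeq T n x k)
    linarith
  have hcw : CauchySeq (fun m : ℕ => T^[m] w) := by
    rw [Metric.cauchySeq_iff]
    intro ε hε
    obtain ⟨k, hk⟩ := (hrlim.eventually_lt_const (by linarith : (0 : ℝ) < ε / 2)).exists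
    refine ⟨Nexp T n x k, fun p hp q hq => ?_⟩
    have h1 := hdw k p hp
    have h2 := hdw k q hq
    have h3 := dist_triangle_left (T^[p] w) (T^[q] w) (iterSeq T n x k)
    linarith
  obtain ⟨zx, hzx⟩ := hqoc _ (fun i j hij => myOrbitMono hmono hx hij) hcx
  obtain ⟨zw, hzw⟩ := hqoc _ (fun i j hij => myOrbitMono hmono hw hij) hcw
  have hzd : ∀ k, dist zx zw ≤ 2 * r k := by
    intro k
    have h1 : dist (iterSeq T n x k) zx ≤ r k := by
      apply le_of_tendsto (tendsto_const_nhds.dist hzx)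
      exact eventually_atTop.mpr ⟨Nexp T n x k, fun p hp => hdk k p hp⟩
    have h2 : dist (iterSeq T n x k) zw ≤ r k := by
      apply le_of_tendsto (tendsto_const_nhds.dist hzw)
      exact eventually_atTop.mpr ⟨Nexp T n x k, fun p hp => hdw k p hp⟩
    have h3 := dist_triangle_left zx zw (iterSeq T n x k)
    linarith
  have hl2 : Tendsto (fun k : ℕ => 2 * r k) atTop (𝓝 0) := by
    simpa using hrlim.const_mul 2
  have hd0 : dist zx zw ≤ 0 := ge_of_tendsto hl2 (Filter.Eventually.of_forall hzd)
  have heq : zx = zw := dist_le_zero.mp hd0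
  exact ⟨zx, hzx, heq ▸ hzw⟩

end Aux

/-- Theorem 7: fixed points via interval closedness (ordered case). -/
theorem fixed_points_interval_closed_order {X : Type*} [MetricSpace X] [PartialOrder X]
    (T : X → X) (hmono : ∀ x y : X, x ≤ y → T x ≤ T y)
    (Y : Set X) (hY : Y = {x : X | x ≤ T x}) (hYne : Y.Nonempty)
    (n : X → ℕ)
    (f : (x : X) → (Fin (n x) → ℝ) → (Fin (n x + 1) → ℝ) → ℝ)
    (hcontr : ∀ x ∈ Y, 1 ≤ n x ∧ MonoEach n f x ∧
      ∀ y ∈ Y, x ≤ y →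
        dist (T^[n x] x) (T^[n x] y) ≤
          f x (fun i => dist x (T^[(i : ℕ) + 1] x)) (fun j => dist x (T^[(j : ℕ)] y)))
    (hnormal : IterTNormal T Y n f)
    (hqoc : ∀ x : ℕ → X, (∀ i j : ℕ, i ≤ j → x i ≤ x j) → CauchySeq x →
      ∃ a : X, Tendsto x atTop (𝓝 a))
    (hself : ∀ (c : X) (y : ℕ → X) (b : X), (∀ i j : ℕ, i ≤ j → y i ≤ y j) →
      Tendsto y atTop (𝓝 b) → (∀ m, c ≤ y m) → c ≤ b)
    (hanti : ∀ (c : X) (y : ℕ → X) (b : X), (∀ i j : ℕ, i ≤ j → y i ≤ y j) →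
      Tendsto y atTop (𝓝 b) → (∀ m, y m ≤ c) → b ≤ c) :
    (∃ z : X, T z = z) ∧
      (∀ x ∈ Y, ∃ z : X, T z = z ∧ Tendsto (fun m : ℕ => T^[m] x) atTop (𝓝 z)) ∧
      (∀ x ∈ Y, ∀ y ∈ Y, (x ≤ y ∨ y ≤ x) →
        ∃ z : X, T z = z ∧ Tendsto (fun m : ℕ => T^[m] x) atTop (𝓝 z) ∧
          Tendsto (fun m : ℕ => T^[m] y) atTop (𝓝 z)) ∧
      ∀ x ∈ Y, ∃ z : X, T z = z ∧ Tendsto (fun m : ℕ => T^[m] x) atTop (𝓝 z) ∧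
        x ≤ z ∧ ∀ y ∈ Y, z ≤ y → z = y := by
  subst hY
  have core : ∀ x ∈ {x : X | x ≤ T x}, ∃ z : X, T z = z ∧
      Tendsto (fun m : ℕ => T^[m] x) atTop (𝓝 z) ∧ ∀ m : ℕ, T^[m] x ≤ z := by
    intro x hx
    have hx' : x ≤ T x := hx
    obtain ⟨z, hz1, -⟩ := pairLimit hmono hcontr hnormal hqoc hx' hx' le_rfl
    have horb_le : ∀ j : ℕ, T^[j] x ≤ z := by
      intro j
      apply hself (T^[j] x) (fun m => T^[m + j] x) z
      · intro i i' hii'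
        exact myOrbitMono hmono hx' (Nat.add_le_add_right hii' j)
      · exact (tendsto_add_atTop_iff_nat j).mpr hz1
      · intro m
        exact myOrbitMono hmono hx' (Nat.le_add_left j m)
    have hzY : z ≤ T z := by
      apply hanti (T z) (fun m => T^[m + 1] x) z
      · intro i i' hii'
        exact myOrbitMono hmono hx' (Nat.add_le_add_right hii' 1)
      · exact (tendsto_add_atTop_iff_nat 1).mpr hz1
      · intro m
        have := hmono _ _ (horb_le m)
        rw [Function.iterate_succ_apply']
        exact this
    have hxz : x ≤ z := by simpa using horb_le 0
    obtain ⟨z', hz1', hz2'⟩ := pairLimit hmono hcontr hnormal hqoc hx' hzY hxz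
    have hzz : z' = z := tendsto_nhds_unique hz1' hz1
    rw [hzz] at hz2'
    have hTz_le : T z ≤ z := by
      apply hself (T z) (fun m => T^[m + 1] z) z
      · intro i i' hii'
        exact myOrbitMono hmono hzY (Nat.add_le_add_right hii' 1)
      · exact (tendsto_add_atTop_iff_nat 1).mpr hz2'
      · intro m
        have := myOrbitMono hmono hzY (show 1 ≤ m + 1 by omega)
        simpa using this
    exact ⟨z, le_antisymm hTz_le hzY, hz1, horb_le⟩
  refine ⟨?_, ?_, ?_, ?_⟩
  · obtain ⟨x0, hx0⟩ := hYne
    obtain ⟨z, hz, -, -⟩ := core x0 hx0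
    exact ⟨z, hz⟩
  · intro x hx
    obtain ⟨z, h1, h2, -⟩ := core x hx
    exact ⟨z, h1, h2⟩
  · intro x hx y hy hcomp
    rcases hcomp with hxy | hyx
    · obtain ⟨z, hzfix, hzx, -⟩ := core x hx
      obtain ⟨z', h1, h2⟩ := pairLimit hmono hcontr hnormal hqoc hx hy hxy
      have he : z' = z := tendsto_nhds_unique h1 hzx
      exact ⟨z, hzfix, hzx, he ▸ h2⟩
    · obtain ⟨z, hzfix, hzy, -⟩ := core y hy
      obtain ⟨z', h1, h2⟩ := pairLimit hmono hcontr hnormal hqoc hy hx hyx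
      have he : z' = z := tendsto_nhds_unique h1 hzy
      exact ⟨z, hzfix, he ▸ h2, hzy⟩
  · intro x hx
    obtain ⟨z, hzfix, hzx, horb⟩ := core x hx
    refine ⟨z, hzfix, hzx, by simpa using horb 0, ?_⟩
    intro y hy hzy
    have hzY : z ≤ T z := le_of_eq hzfix.symm
    obtain ⟨u, h1, h2⟩ := pairLimit hmono hcontr hnormal hqoc hzY hy hzy
    have hconst : (fun m : ℕ => T^[m] z) = fun _ => z :=
      funext fun m => Function.iterate_fixed hzfix m
    have huz : u = z := tendsto_nhds_unique h1 (by rw [hconst]; exact tendsto_const_nhds)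
    rw [huz] at h2
    have hyz : y ≤ z := by
      apply hself y (fun m => T^[m] y) z
      · intro i j hij
        exact myOrbitMono hmono hy hij
      · exact h2
      · intro m
        have := myOrbitMono hmono hy (Nat.zero_le m)
        simpa using this
    exact le_antisymm hzy hyz
end

section
/- Let (X,d) be a metric space with a quasi-order ≤, and let T : X → X be ≤-increasing with Y := {x ∈ X : x ≤ Tx} nonempty. Assume there exists a normal increasing function f : ℝ₊ → ℝ₊ (f(0) = 0, f(t) < t for t > 0, t − f(t) → ∞ as t → ∞, and fⁿ(t) → 0 for every t > 0) such that for each x ∈ Y there exists n(x) ∈ ℕ, n(x) ≥ 1, with d(T^{n(x)}x, T^{n(x)}y) ≤ f(d(x,y)) for all y ∈ Y with x ≤ y. In addition assume (X,d,≤) is quasi-order complete, ≤ is self-closed, and T is continuous at the left. Then: (iii) Fix(T) is nonempty; (iv) for every x ∈ Y, (Tⁿx)ₙ d-converges to an element of Fix(T); (v) if x,y ∈ Y are comparable, then (Tⁿx)ₙ and (Tⁿy)ₙ have the same limit in Fix(T). -/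
open Filter Topology

private lemma iter_nonneg' (f : ℝ → ℝ) (hfpos : ∀ t : ℝ, 0 ≤ t → 0 ≤ f t) :
    ∀ (k : ℕ) (t : ℝ), 0 ≤ t → 0 ≤ f^[k] t := by
  intro k
  induction k with
  | zero => simpa using fun t ht => ht
  | succ k ih =>
    intro t ht
    rw [Function.iterate_succ_apply']
    exact hfpos _ (ih t ht)

private lemma iter_mono' (f : ℝ → ℝ) (hfpos : ∀ t : ℝ, 0 ≤ t → 0 ≤ f t)
    (hfmono : ∀ s t : ℝ, 0 ≤ s → s ≤ t → f s ≤ f t) :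
    ∀ (k : ℕ) (s t : ℝ), 0 ≤ s → s ≤ t → f^[k] s ≤ f^[k] t := by
  intro k
  induction k with
  | zero => simpa using fun s t _ h => h
  | succ k ih =>
    intro s t hs hst
    rw [Function.iterate_succ_apply', Function.iterate_succ_apply']
    exact hfmono _ _ (iter_nonneg' f hfpos k s hs) (ih s t hs hst)

private def cumIdx {X : Type*} (T : X → X) (n : X → ℕ) (x : X) : ℕ → ℕ
  | 0 => 0
  | k + 1 => cumIdx T n x k + n (T^[cumIdx T n x k] x)

/-- Theorem 9: fixed points under the simple iterative contraction (e12) with a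
normal comparison function `f`. -/
theorem fixed_points_simple_contraction {X : Type*} [MetricSpace X] [Preorder X]
    (T : X → X) (hmono : ∀ x y : X, x ≤ y → T x ≤ T y)
    (Y : Set X) (hY : Y = {x : X | x ≤ T x}) (hYne : Y.Nonempty)
    (f : ℝ → ℝ)
    (hfpos : ∀ t : ℝ, 0 ≤ t → 0 ≤ f t)
    (hfmono : ∀ s t : ℝ, 0 ≤ s → s ≤ t → f s ≤ f t)
    (hf0 : f 0 = 0) (hflt : ∀ t : ℝ, 0 < t → f t < t)
    (hfdiv : Tendsto (fun t : ℝ => t - f t) atTop atTop)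
    (hfiter : ∀ t : ℝ, 0 < t → Tendsto (fun k : ℕ => f^[k] t) atTop (𝓝 0))
    (n : X → ℕ)
    (hcontr : ∀ x ∈ Y, 1 ≤ n x ∧
      ∀ y ∈ Y, x ≤ y → dist (T^[n x] x) (T^[n x] y) ≤ f (dist x y))
    (hqoc : ∀ x : ℕ → X, (∀ i j : ℕ, i ≤ j → x i ≤ x j) → CauchySeq x →
      ∃ a : X, Tendsto x atTop (𝓝 a))
    (hself : ∀ (c : X) (y : ℕ → X) (b : X), (∀ i j : ℕ, i ≤ j → y i ≤ y j) →
      Tendsto y atTop (𝓝 b) → (∀ m, c ≤ y m) → c ≤ b)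
    (hleft : ∀ (y : ℕ → X) (b : X), (∀ i j : ℕ, i ≤ j → y i ≤ y j) →
      Tendsto y atTop (𝓝 b) → (∀ m, y m ≤ b) →
      Tendsto (fun m => T (y m)) atTop (𝓝 (T b))) :
    (∃ z : X, T z = z) ∧
      (∀ x ∈ Y, ∃ z : X, T z = z ∧ Tendsto (fun m : ℕ => T^[m] x) atTop (𝓝 z)) ∧
      ∀ x ∈ Y, ∀ y ∈ Y, (x ≤ y ∨ y ≤ x) →
        ∃ z : X, T z = z ∧ Tendsto (fun m : ℕ => T^[m] x) atTop (𝓝 z) ∧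
          Tendsto (fun m : ℕ => T^[m] y) atTop (𝓝 z) := by
  -- membership criterion
  have hYmem : ∀ x : X, x ∈ Y ↔ x ≤ T x := by
    intro x; rw [hY]; rfl
  -- orbits stay in Y
  have horbY : ∀ x ∈ Y, ∀ k : ℕ, T^[k] x ∈ Y := by
    intro x hx k
    induction k with
    | zero => simpa using hx
    | succ k ih =>
      rw [hYmem] at ih ⊢
      rw [Function.iterate_succ_apply']
      exact hmono _ _ ih
  -- iterating is monotone in the point
  have hTle : ∀ x y : X, x ≤ y → ∀ k : ℕ, T^[k] x ≤ T^[k] y := by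
    intro x y hxy k
    induction k with
    | zero => simpa using hxy
    | succ k ih =>
      rw [Function.iterate_succ_apply', Function.iterate_succ_apply']
      exact hmono _ _ ih
  -- orbits are increasing
  have horbmono : ∀ x ∈ Y, ∀ i j : ℕ, i ≤ j → T^[i] x ≤ T^[j] x := by
    intro x hx i j hij
    have step : ∀ k : ℕ, T^[k] x ≤ T^[k+1] x := by
      intro k
      have h := (hYmem _).1 (horbY x hx k)
      rw [Function.iterate_succ_apply']
      exact h
    induction j, hij using Nat.le_induction with
    | base => exact le_refl _
    | succ j hij ih => exact le_trans ih (step j)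
  have hxle : ∀ x ∈ Y, ∀ j : ℕ, x ≤ T^[j] x := by
    intro x hx j
    simpa using horbmono x hx 0 j (Nat.zero_le _)
  -- the cumulative index sequence and its contraction property
  have hNall : ∀ x ∈ Y, ∃ N : ℕ → ℕ, (∀ k, k ≤ N k) ∧
      ∀ k : ℕ, ∀ y ∈ Y, x ≤ y →
        dist (T^[N k] x) (T^[N k] y) ≤ f^[k] (dist x y) := by
    intro x hx
    refine ⟨cumIdx T n x, ?_, ?_⟩
    · intro k
      induction k with
      | zero => exact Nat.zero_le _
      | succ k ih =>
        have h1 : 1 ≤ n (T^[cumIdx T n x k] x) := (hcontr _ (horbY x hx _)).1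
        show k + 1 ≤ cumIdx T n x k + n (T^[cumIdx T n x k] x)
        omega
    · intro k
      induction k with
      | zero => intro y hy hxy; simp [cumIdx]
      | succ k ih =>
        intro y hy hxy
        set Nk := cumIdx T n x k with hNk
        have hrec : cumIdx T n x (k + 1) = Nk + n (T^[Nk] x) := rfl
        rw [hrec]
        have hxk : T^[Nk] x ∈ Y := horbY x hx Nk
        have hyk : T^[Nk] y ∈ Y := horbY y hy Nk
        have hle : T^[Nk] x ≤ T^[Nk] y := hTle x y hxy Nk
        have key := (hcontr _ hxk).2 _ hyk hle
        have e1 : T^[Nk + n (T^[Nk] x)] x = T^[n (T^[Nk] x)] (T^[Nk] x) := by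
          rw [Nat.add_comm, Function.iterate_add_apply]
        have e2 : T^[Nk + n (T^[Nk] x)] y = T^[n (T^[Nk] x)] (T^[Nk] y) := by
          rw [Nat.add_comm, Function.iterate_add_apply]
        rw [e1, e2, Function.iterate_succ_apply']
        exact le_trans key (hfmono _ _ dist_nonneg (ih y hy hxy))
  -- the main per-point convergence result
  have key : ∀ x ∈ Y, ∃ z : X, T z = z ∧
      Tendsto (fun m : ℕ => T^[m] x) atTop (𝓝 z) := by
    intro x hx
    obtain ⟨N, hNge, hNc⟩ := hNall x hx
    set m := n x with hm
    have hm1 : 1 ≤ m := (hcontr x hx).1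
    set c₀ : ℝ := dist x (T^[m] x) with hc₀
    -- bound from divergence of t - f t
    obtain ⟨R₀, hR₀⟩ := eventually_atTop.1 (hfdiv.eventually (eventually_ge_atTop (c₀ + 1)))
    set R : ℝ := max R₀ 0 with hR
    have hne : (Finset.range m).Nonempty := Finset.nonempty_range_iff.2 (by omega)
    set c₁ : ℝ := (Finset.range m).sup' hne (fun j => dist x (T^[j] x)) with hc₁
    have hc₁le : ∀ j < m, dist x (T^[j] x) ≤ c₁ := by
      intro j hj
      exact Finset.le_sup' (fun j => dist x (T^[j] x)) (Finset.mem_range.2 hj)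
    set K : ℝ := max R c₁ with hK
    set M : ℝ := max K (c₀ + f K) with hMdef
    -- boundedness of the orbit
    have hb : ∀ j : ℕ, dist x (T^[j] x) ≤ M := by
      intro j
      induction j using Nat.strong_induction_on with
      | _ j ih =>
        by_cases hjm : j < m
        · exact le_trans (hc₁le j hjm) (le_trans (le_max_right R c₁) (le_max_left _ _))
        · push_neg at hjm
          set j' := j - m with hj'
          have hjj : j = m + j' := by omega
          have hsplit : T^[j] x = T^[m] (T^[j'] x) := by
            rw [hjj, Function.iterate_add_apply]
          have hcontr1 : dist (T^[m] x) (T^[m] (T^[j'] x)) ≤ f (dist x (T^[j'] x)) :=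
            (hcontr x hx).2 _ (horbY x hx j') (hxle x hx j')
          have htri : dist x (T^[j] x) ≤ c₀ + f (dist x (T^[j'] x)) := by
            rw [hsplit]
            calc dist x (T^[m] (T^[j'] x))
                ≤ dist x (T^[m] x) + dist (T^[m] x) (T^[m] (T^[j'] x)) := dist_triangle _ _ _
              _ ≤ c₀ + f (dist x (T^[j'] x)) := by
                  rw [hc₀]; exact add_le_add_right hcontr1 _
          have hj'M : dist x (T^[j'] x) ≤ M := ih j' (by omega)
          by_cases hcase : dist x (T^[j'] x) ≤ K
          · have : f (dist x (T^[j'] x)) ≤ f K := hfmono _ _ dist_nonneg hcase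
            calc dist x (T^[j] x) ≤ c₀ + f (dist x (T^[j'] x)) := htri
              _ ≤ c₀ + f K := by linarith
              _ ≤ M := le_max_right _ _
          · push_neg at hcase
            have hRle : R₀ ≤ dist x (T^[j'] x) := by
              have : R ≤ K := le_max_left _ _
              have : R₀ ≤ R := le_max_left _ _
              linarith [le_max_left R c₁]
            have hdiv := hR₀ _ hRle
            -- c₀ + 1 ≤ t - f t
            have : f (dist x (T^[j'] x)) ≤ dist x (T^[j'] x) - c₀ - 1 := by linarith
            calc dist x (T^[j] x) ≤ c₀ + f (dist x (T^[j'] x)) := htri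
              _ ≤ dist x (T^[j'] x) - 1 := by linarith
              _ ≤ M := by linarith
    have hM0 : 0 ≤ M := by
      have := hb 0
      simpa using this
    set D : ℝ := max M 1 with hD
    have hDpos : (0 : ℝ) < D := lt_of_lt_of_le one_pos (le_max_right _ _)
    have hbD : ∀ j : ℕ, dist x (T^[j] x) ≤ D := fun j => le_trans (hb j) (le_max_left _ _)
    -- Cauchy
    have hcauchy : CauchySeq (fun m : ℕ => T^[m] x) := by
      rw [Metric.cauchySeq_iff]
      intro ε hε
      obtain ⟨k, hk⟩ := ((hfiter D hDpos).eventually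
        (gt_mem_nhds (by positivity : (0:ℝ) < ε / 2))).exists
      refine ⟨N k, ?_⟩
      have est : ∀ p, N k ≤ p → dist (T^[N k] x) (T^[p] x) < ε / 2 := by
        intro p hp
        set j := p - N k with hj
        have hpj : p = N k + j := by omega
        have hsplit : T^[p] x = T^[N k] (T^[j] x) := by
          rw [hpj, Function.iterate_add_apply]
        rw [hsplit]
        calc dist (T^[N k] x) (T^[N k] (T^[j] x))
            ≤ f^[k] (dist x (T^[j] x)) := hNc k _ (horbY x hx j) (hxle x hx j)
          _ ≤ f^[k] D := iter_mono' f hfpos hfmono k _ _ dist_nonneg (hbD j)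
          _ < ε / 2 := hk
      intro p hp q hq
      calc dist (T^[p] x) (T^[q] x)
          ≤ dist (T^[p] x) (T^[N k] x) + dist (T^[N k] x) (T^[q] x) := dist_triangle _ _ _
        _ < ε / 2 + ε / 2 := by
            rw [dist_comm (T^[p] x)]
            exact add_lt_add (est p hp) (est q hq)
        _ = ε := by ring
    obtain ⟨z, hz⟩ := hqoc _ (horbmono x hx) hcauchy
    -- each orbit point is ≤ z
    have hzge : ∀ j : ℕ, T^[j] x ≤ z := by
      intro j
      refine hself (T^[j] x) (fun i => T^[i + j] x) z ?_ ?_ ?_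
      · intro i i' hii'
        exact horbmono x hx _ _ (by omega)
      · have : Tendsto (fun i : ℕ => i + j) atTop atTop := tendsto_add_atTop_nat j
        exact hz.comp this
      · intro i
        exact horbmono x hx j (i + j) (by omega)
    -- fixed point
    have hTz : Tendsto (fun i : ℕ => T (T^[i] x)) atTop (𝓝 (T z)) :=
      hleft _ z (horbmono x hx) hz hzge
    have hTz' : Tendsto (fun i : ℕ => T^[i + 1] x) atTop (𝓝 z) :=
      hz.comp (tendsto_add_atTop_nat 1)
    have hTz'' : Tendsto (fun i : ℕ => T (T^[i] x)) atTop (𝓝 z) := by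
      refine hTz'.congr ?_
      intro i
      rw [Function.iterate_succ_apply']
    have hfix : T z = z := tendsto_nhds_unique hTz hTz''
    exact ⟨z, hfix, hz⟩
  -- symmetric pairwise result
  have sym : ∀ x ∈ Y, ∀ y ∈ Y, x ≤ y →
      ∀ zx zy : X, Tendsto (fun m : ℕ => T^[m] x) atTop (𝓝 zx) →
        Tendsto (fun m : ℕ => T^[m] y) atTop (𝓝 zy) → zx = zy := by
    intro x hx y hy hxy zx zy hzx hzy
    obtain ⟨N, hNge, hNc⟩ := hNall x hx
    have hNtop : Tendsto N atTop atTop := tendsto_atTop_mono hNge tendsto_id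
    have h1 : Tendsto (fun k : ℕ => dist (T^[N k] x) (T^[N k] y)) atTop
        (𝓝 (dist zx zy)) := (hzx.comp hNtop).dist (hzy.comp hNtop)
    by_cases hd : dist x y = 0
    · have hxy' : x = y := by rwa [dist_eq_zero] at hd
      subst hxy'
      exact tendsto_nhds_unique hzx hzy
    · have hdpos : 0 < dist x y := lt_of_le_of_ne dist_nonneg (Ne.symm hd)
      have h2 : Tendsto (fun k : ℕ => dist (T^[N k] x) (T^[N k] y)) atTop (𝓝 0) := by
        refine squeeze_zero (fun k => dist_nonneg) (fun k => hNc k y hy hxy) ?_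
        exact hfiter _ hdpos
      have : dist zx zy = 0 := tendsto_nhds_unique h1 h2
      rwa [dist_eq_zero] at this
  refine ⟨?_, key, ?_⟩
  · obtain ⟨x₀, hx₀⟩ := hYne
    obtain ⟨z, hz, _⟩ := key x₀ hx₀
    exact ⟨z, hz⟩
  · intro x hx y hy hcomp
    obtain ⟨zx, hzxfix, hzx⟩ := key x hx
    obtain ⟨zy, hzyfix, hzy⟩ := key y hy
    have heq : zx = zy := by
      rcases hcomp with h | h
      · exact sym x hx y hy h zx zy hzx hzy
      · exact (sym y hy x hx h zy zx hzy hzx).symm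
    exact ⟨zx, hzxfix, hzx, heq ▸ hzy⟩
end
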